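/- arXiv:1809.03073 — 10 statements merged into one kernel-verified Lean document; each statement's English description precedes it below -/
import Mathlib

section
/- Fix labels y_1,...,y_n ∈ {1,...,K} with class counts n_k = #{i : y_i = k} ≥ 1 for every k, and let X_1,...,X_n be independent random vectors in ℝ^d where X_i has density f*_{y_i}. Let Λ = ((λ_b),(f_b)) be a mixing measure with λ_b f_b(x) > 0 for all x and b. For b,k ∈ {1,...,K} let μ_{b,k} = E[log(λ_b f_b(X)) ] for X with density f*_k, assume the centered log-moment-generating function β_{b,k}(s) = log E[exp(s(log(λ_b f_b(X)) − μ_{b,k}))] (X having density f*_k) is finite for all s ∈ ℝ, and set β*_{b,k}(t) = sup_{s∈ℝ}(st − β_{b,k}(s)). Define M(π) = (1/n) Σ_{i=1}^n μ_{π(y_i), y_i} for each permutation π of {1,...,K}, and the gap Δ = M(id) − max_{π ≠ id} M(π). If Δ > 0, then the probability that the identity permutation is the unique maximizer over permutations π of the log-likelihood ℓ_n(π) = (1/n) Σ_{i=1}^n log(λ_{π(y_i)} f_{π(y_i)}(X_i)) is at least 1 − 2K² exp( −(min_k n_k) · inf_{b,k} min( β*_{b,k}(Δ/3), β*_{b,k}(−Δ/3)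 ) ). -/
open MeasureTheory ProbabilityTheory

/-!
For a class `k` and a candidate label `b`, the centred log-likelihoods
`log (λ_b f_b (X_i)) - μ_{b,k}` of the `n_k` samples with `y_i = k` are independent with
log-moment generating function `β_{b,k}`, so by the Chernoff–Cramér bound their sum exceeds
`n_k Δ / 3` in absolute value with probability at most
`2 exp (-n_k min (β*_{b,k}(Δ/3), β*_{b,k}(-Δ/3)))`. Off the union of these `K²` events, the
empirical log-likelihood of every `π` lies within `Δ / 3` of `M(π)`, and
`M(π) ≤ M(id) - Δ` for `π ≠ id`, so the identity wins.
-/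

section Legendre

open Real

/-- As a real `⨆` this is `0` wherever `s ↦ s * t - Λ s` is unbounded above; the tail bounds
below go through `le_exp_neg_mul_legendreTransform`, which derives boundedness itself. -/
noncomputable def legendreTransform (Λ : ℝ → ℝ) (t : ℝ) : ℝ := ⨆ s : ℝ, (s * t - Λ s)

lemma legendreTransform_nonneg {Λ : ℝ → ℝ} (h0 : Λ 0 ≤ 0) (t : ℝ) :
    0 ≤ legendreTransform Λ t :=
  Real.iSup_nonneg' ⟨0, by simpa using h0⟩

lemma legendreTransform_comp_neg (Λ : ℝ → ℝ) (t : ℝ) :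
    legendreTransform (fun s => Λ (-s)) t = legendreTransform Λ (-t) := by
  rw [legendreTransform, ← (Equiv.neg ℝ).iSup_comp]
  simp [legendreTransform]

lemma le_exp_neg_mul_legendreTransform {p m : ℝ} (hp : 0 ≤ p) (hm : 0 < m) {Λ : ℝ → ℝ}
    {t : ℝ} (h : ∀ s, p ≤ exp (-(m * (s * t - Λ s)))) :
    p ≤ exp (-(m * legendreTransform Λ t)) := by
  rcases hp.eq_or_lt with rfl | hp
  · positivity
  have hbdd : ∀ s, s * t - Λ s ≤ -log p / m := fun s => by
    rw [le_div_iff₀ hm]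
    linarith [(log_le_iff_le_exp hp).2 (h s)]
  have hsup := (le_div_iff₀ hm).1 (ciSup_le hbdd)
  rw [← exp_log hp, legendreTransform]
  gcongr
  linarith

end Legendre

section Chernoff

open Real Finset

variable {Ω : Type*} [MeasurableSpace Ω] {μ : Measure Ω} [IsProbabilityMeasure μ]
  {S : Ω → ℝ} {m t : ℝ} {Λ : ℝ → ℝ}

lemma one_le_mgf_of_integral_eq_zero (hS : Integrable S μ) (hS0 : μ[S] = 0) {s : ℝ}
    (hexp : Integrable (fun ω => exp (s * S ω)) μ) : 1 ≤ mgf S μ s :=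
  calc 1 = ∫ ω, (1 + s * S ω) ∂μ := by
        rw [integral_add (integrable_const 1) (hS.const_mul s), integral_const_mul, hS0]
        simp
    _ ≤ mgf S μ s := integral_mono ((integrable_const 1).add (hS.const_mul s)) hexp
        fun ω => by linarith [add_one_le_exp (s * S ω)]

theorem measureReal_ge_le_exp_neg_mul_legendreTransform (hS : Integrable S μ) (hS0 : μ[S] = 0)
    (hm : 0 < m) (hmgf : ∀ s, mgf S μ s = exp (m * Λ s)) (ht : 0 ≤ t) :
    μ.real {ω | m * t ≤ S ω} ≤ exp (-(m * legendreTransform Λ t)) := by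
  refine le_exp_neg_mul_legendreTransform measureReal_nonneg hm fun s => ?_
  have hexp : Integrable (fun ω => exp (s * S ω)) μ := mgf_pos_iff.1 (hmgf s ▸ exp_pos _)
  rcases le_or_gt 0 s with hs | hs
  · calc μ.real {ω | m * t ≤ S ω} ≤ exp (-s * (m * t)) * mgf S μ s :=
          measure_ge_le_exp_mul_mgf _ hs hexp
      _ = exp (-(m * (s * t - Λ s))) := by rw [hmgf, ← exp_add]; ring_nf
  · -- for `s < 0` the bound exceeds one, because `m Λ s = log mgf S s ≥ 0` by centring
    have hΛ : 0 ≤ m * Λ s := one_le_exp_iff.1 (hmgf s ▸ one_le_mgf_of_integral_eq_zero hS hS0 hexp)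
    have hst : m * (s * t) ≤ 0 :=
      mul_nonpos_of_nonneg_of_nonpos hm.le (mul_nonpos_of_nonpos_of_nonneg hs.le ht)
    exact measureReal_le_one.trans (one_le_exp (by linarith))

theorem measureReal_le_le_exp_neg_mul_legendreTransform (hS : Integrable S μ) (hS0 : μ[S] = 0)
    (hm : 0 < m) (hmgf : ∀ s, mgf S μ s = exp (m * Λ s)) (ht : t ≤ 0) :
    μ.real {ω | S ω ≤ m * t} ≤ exp (-(m * legendreTransform Λ t)) := by
  have h := measureReal_ge_le_exp_neg_mul_legendreTransform (S := -S) (Λ := fun s => Λ (-s))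
    hS.neg (by simp [integral_neg, hS0]) hm (fun s => by rw [mgf_neg, hmgf]) (neg_nonneg.2 ht)
  rw [legendreTransform_comp_neg, neg_neg] at h
  have hset : {ω | S ω ≤ m * t} = {ω | m * -t ≤ (-S) ω} := by
    ext ω
    simp only [Set.mem_ofPred_eq, Pi.neg_apply]
    constructor <;> intro <;> linarith
  rwa [hset]

theorem measureReal_le_abs_le_two_mul_exp (hS : Integrable S μ) (hS0 : μ[S] = 0)
    (hm : 0 < m) (hmgf : ∀ s, mgf S μ s = exp (m * Λ s)) (ht : 0 ≤ t) :
    μ.real {ω | m * t ≤ |S ω|}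
      ≤ 2 * exp (-(m * min (legendreTransform Λ t) (legendreTransform Λ (-t)))) := by
  have hsub : {ω | m * t ≤ |S ω|} ⊆ {ω | m * t ≤ S ω} ∪ {ω | S ω ≤ m * -t} := fun ω hω => by
    rcases le_abs'.1 (Set.mem_ofPred.1 hω) with h | h
    · exact Or.inr (show S ω ≤ m * -t by linarith)
    · exact Or.inl h
  calc μ.real {ω | m * t ≤ |S ω|}
      ≤ μ.real {ω | m * t ≤ S ω} + μ.real {ω | S ω ≤ m * -t} :=
        (measureReal_mono hsub).trans (measureReal_union_le _ _)
    _ ≤ exp (-(m * legendreTransform Λ t)) + exp (-(m * legendreTransform Λ (-t))) :=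
        add_le_add (measureReal_ge_le_exp_neg_mul_legendreTransform hS hS0 hm hmgf ht)
          (measureReal_le_le_exp_neg_mul_legendreTransform hS hS0 hm hmgf (neg_nonpos.2 ht))
    _ ≤ _ := by
        rw [two_mul]
        gcongr
        exacts [min_le_left _ _, min_le_right _ _]

theorem iIndepFun.measureReal_card_mul_le_abs_sum_le {ι : Type*} {Z : ι → Ω → ℝ}
    (hindep : iIndepFun Z μ) (hmeas : ∀ i, Measurable (Z i)) {T : Finset ι} (hT : T.Nonempty)
    (hint : ∀ i ∈ T, Integrable (Z i) μ) (hmean : ∀ i ∈ T, μ[Z i] = 0)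
    (hmgf : ∀ i ∈ T, ∀ s, mgf (Z i) μ s = exp (Λ s)) (ht : 0 ≤ t) :
    μ.real {ω | #T * t ≤ |∑ i ∈ T, Z i ω|}
      ≤ 2 * exp (-(#T * min (legendreTransform Λ t) (legendreTransform Λ (-t)))) := by
  have h := measureReal_le_abs_le_two_mul_exp (S := ∑ i ∈ T, Z i) (integrable_finsetSum' T hint)
    (by simp only [Finset.sum_apply]; rw [integral_finsetSum T hint]; exact sum_eq_zero hmean)
    (Nat.cast_pos.2 (card_pos.2 hT)) (fun s => by
      rw [hindep.mgf_sum hmeas, prod_congr rfl fun i hi => hmgf i hi s, prod_const,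
        ← exp_nat_mul]) ht
  simpa only [Finset.sum_apply] using h

end Chernoff

section Density

variable {Ω E : Type*} [MeasurableSpace Ω] [MeasurableSpace E] {P : Measure Ω} {ν : Measure E}
  {X : Ω → E} {ρ φ : E → ℝ}

lemma integrable_comp_of_map_eq_withDensity (hX : Measurable X) (hρ : Measurable ρ)
    (hρ0 : ∀ x, 0 ≤ ρ x) (hlaw : P.map X = ν.withDensity fun x => ENNReal.ofReal (ρ x))
    (hφ : Measurable φ) (hint : Integrable (fun x => φ x * ρ x) ν) :
    Integrable (fun ω => φ (X ω)) P := by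
  have h : Integrable φ (P.map X) := by
    rw [hlaw, integrable_withDensity_iff hρ.ennreal_ofReal
      (ae_of_all _ fun _ => ENNReal.ofReal_lt_top)]
    simpa only [ENNReal.toReal_ofReal (hρ0 _)] using hint
  exact (integrable_map_measure hφ.aestronglyMeasurable hX.aemeasurable).1 h

lemma integral_comp_of_map_eq_withDensity (hX : Measurable X) (hρ : Measurable ρ)
    (hρ0 : ∀ x, 0 ≤ ρ x) (hlaw : P.map X = ν.withDensity fun x => ENNReal.ofReal (ρ x))
    (hφ : Measurable φ) :
    ∫ ω, φ (X ω) ∂P = ∫ x, φ x * ρ x ∂ν := by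
  rw [← integral_map hX.aemeasurable hφ.aestronglyMeasurable, hlaw,
    integral_withDensity_eq_integral_toReal_smul hρ.ennreal_ofReal
      (ae_of_all _ fun _ => ENNReal.ofReal_lt_top)]
  simp only [ENNReal.toReal_ofReal (hρ0 _), smul_eq_mul, mul_comm]

lemma mgf_comp_of_map_eq_withDensity [IsProbabilityMeasure P] (hX : Measurable X)
    (hρ : Measurable ρ) (hρ0 : ∀ x, 0 ≤ ρ x)
    (hlaw : P.map X = ν.withDensity fun x => ENNReal.ofReal (ρ x)) (hφ : Measurable φ) {s : ℝ}
    (hint : Integrable (fun x => Real.exp (s * φ x) * ρ x) ν) :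
    mgf (fun ω => φ (X ω)) P s = Real.exp (Real.log (∫ x, Real.exp (s * φ x) * ρ x ∂ν)) := by
  have hmgf : mgf (fun ω => φ (X ω)) P s = ∫ x, Real.exp (s * φ x) * ρ x ∂ν :=
    integral_comp_of_map_eq_withDensity (φ := fun x => Real.exp (s * φ x)) hX hρ hρ0 hlaw
      (by fun_prop)
  have hpos := mgf_pos (integrable_comp_of_map_eq_withDensity (φ := fun x => Real.exp (s * φ x))
    hX hρ hρ0 hlaw (by fun_prop) hint)
  rw [hmgf] at hpos ⊢
  exact (Real.exp_log hpos).symm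

lemma integrable_and_integral_comp_sub_eq_zero_of_map_eq_withDensity [IsProbabilityMeasure P]
    (hX : Measurable X) (hρ : Measurable ρ) (hρ0 : ∀ x, 0 ≤ ρ x)
    (hlaw : P.map X = ν.withDensity fun x => ENNReal.ofReal (ρ x)) (hφ : Measurable φ)
    (hint : Integrable (fun x => φ x * ρ x) ν) :
    Integrable (fun ω => φ (X ω) - ∫ x, φ x * ρ x ∂ν) P ∧
      P[fun ω => φ (X ω) - ∫ x, φ x * ρ x ∂ν] = 0 := by
  have hφX := integrable_comp_of_map_eq_withDensity hX hρ hρ0 hlaw hφ hint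
  refine ⟨hφX.sub (integrable_const _), ?_⟩
  rw [integral_sub hφX (integrable_const _), integral_comp_of_map_eq_withDensity hX hρ hρ0 hlaw hφ]
  simp

end Density

section Fibers

open Finset

variable {ι κ : Type*} [Fintype ι] [Fintype κ] [DecidableEq κ] [Nonempty κ]

lemma abs_sum_comp_lt_of_abs_sum_fiber_lt (y : ι → κ) (D : κ → κ → ι → ℝ) {ε : ℝ}
    (h : ∀ b k, |∑ i ∈ univ.filter (fun i => y i = k), D b k i|
      < #(univ.filter fun i => y i = k) * ε) (σ : κ → κ) :
    |∑ i, D (σ (y i)) (y i) i| < Fintype.card ι * ε := by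
  have hfib : ∑ i, D (σ (y i)) (y i) i
      = ∑ k, ∑ i ∈ univ.filter (fun i => y i = k), D (σ k) k i := by
    rw [← sum_fiberwise univ y]
    refine sum_congr rfl fun k _ => sum_congr rfl fun i hi => ?_
    rw [(mem_filter.1 hi).2]
  calc |∑ i, D (σ (y i)) (y i) i|
      ≤ ∑ k, |∑ i ∈ univ.filter (fun i => y i = k), D (σ k) k i| :=
        hfib ▸ abs_sum_le_sum_abs _ _
    _ < ∑ k, (#(univ.filter fun i => y i = k) : ℝ) * ε :=
        sum_lt_sum_of_nonempty univ_nonempty fun k _ => h (σ k) k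
    _ = Fintype.card ι * ε := by
        rw [← sum_mul, ← Nat.cast_sum, ← card_eq_sum_card_fiberwise fun _ _ => mem_univ _,
          card_univ]

lemma mean_lt_mean_of_abs_sum_fiber_lt [Nonempty ι] (y : ι → κ) (L : κ → ι → ℝ)
    (μ : κ → κ → ℝ) {Δ : ℝ}
    (h : ∀ b k, |∑ i ∈ univ.filter (fun i => y i = k), (L b i - μ b k)|
      < #(univ.filter fun i => y i = k) * (Δ / 3))
    {σ : κ → κ} (hgap : 1 / (Fintype.card ι : ℝ) * ∑ i, μ (σ (y i)) (y i)
      ≤ 1 / (Fintype.card ι : ℝ) * ∑ i, μ (y i) (y i) - Δ) :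
    1 / (Fintype.card ι : ℝ) * ∑ i, L (σ (y i)) i < 1 / (Fintype.card ι : ℝ) * ∑ i, L (y i) i := by
  have hn : (0 : ℝ) < Fintype.card ι := Nat.cast_pos.2 Fintype.card_pos
  have hσ := abs_sum_comp_lt_of_abs_sum_fiber_lt y (fun b k i => L b i - μ b k) h σ
  have hid := abs_sum_comp_lt_of_abs_sum_fiber_lt y (fun b k i => L b i - μ b k) h id
  simp only [id, sum_sub_distrib] at hσ hid
  have hgap' := mul_le_mul_of_nonneg_left hgap hn.le
  rw [mul_sub, ← mul_assoc, ← mul_assoc, mul_one_div_cancel hn.ne', one_mul, one_mul] at hgap'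
  exact mul_lt_mul_of_pos_left (by linarith [abs_lt.1 hσ, abs_lt.1 hid]) (by positivity)

end Fibers

lemma ciInf_mul_ciInf_le {ι ι' : Type*} [Finite ι] [Finite ι'] {a : ι → ℝ} {c : ι' → ℝ}
    (ha : ∀ i, 0 ≤ a i) (hc : ∀ j, 0 ≤ c j) (i : ι) (j : ι') :
    (⨅ i, a i) * (⨅ j, c j) ≤ a i * c j :=
  mul_le_mul (ciInf_le (Set.finite_range _).bddBelow i) (ciInf_le (Set.finite_range _).bddBelow j)
    (Real.iInf_nonneg hc) (ha i)

lemma le_sub_of_eq_sub_iSup_ne {α : Type*} [Finite α] {F : α → ℝ} {a : α} {Δ : ℝ}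
    (hΔ : Δ = F a - ⨆ b : {b // b ≠ a}, F b) {b : α} (hb : b ≠ a) : F b ≤ F a - Δ := by
  rw [hΔ]
  linarith [le_ciSup (Set.finite_range fun c : {b // b ≠ a} => F c).bddAbove ⟨b, hb⟩]

lemma one_sub_sum_measureReal_le {Ω ι : Type*} [MeasurableSpace Ω] {μ : Measure Ω}
    [IsProbabilityMeasure μ] [Fintype ι] {A : ι → Set Ω} {G : Set Ω}
    (hG : ∀ ω, (∀ i, ω ∉ A i) → ω ∈ G) :
    1 - ∑ i, μ.real (A i) ≤ μ.real G := by
  have hcover : Set.univ ⊆ G ∪ ⋃ i, A i := fun ω _ => by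
    by_contra hω
    simp only [Set.mem_union, Set.mem_iUnion, not_or, not_exists] at hω
    exact hω.1 (hG ω hω.2)
  have := (measureReal_mono hcover).trans ((measureReal_union_le (μ := μ) _ _).trans
    (add_le_add_right (measureReal_iUnion_fintype_le A) _))
  rw [probReal_univ] at this
  linarith

theorem mle_permutation_recovery_general
    {Ω : Type*} [MeasurableSpace Ω] (P : Measure Ω) [IsProbabilityMeasure P]
    (d K n : ℕ) (hK : 2 ≤ K)
    -- fixed labels with all class counts at least one
    (y : Fin n → Fin K)
    (hcount : ∀ k : Fin K, 1 ≤ (Finset.univ.filter (fun i => y i = k)).card)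
    -- true class-conditional densities on ℝ^d
    (fstar : Fin K → (Fin d → ℝ) → ℝ)
    (hfstar_meas : ∀ k, Measurable (fstar k))
    (hfstar_nonneg : ∀ k x, 0 ≤ fstar k x)
    (hfstar_int : ∀ k, ∫ x, fstar k x = 1)
    -- independent samples, X i has density fstar (y i)
    (X : Fin n → Ω → (Fin d → ℝ))
    (hX_meas : ∀ i, Measurable (X i))
    (hX_indep : iIndepFun X P)
    (hX_law : ∀ i, Measure.map (X i) P
      = volume.withDensity (fun x => ENNReal.ofReal (fstar (y i) x)))
    -- the mixing measure Λ = ((lam b), (f b))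
    (lam : Fin K → ℝ) (f : Fin K → (Fin d → ℝ) → ℝ)
    (hf_meas : ∀ b, Measurable (f b))
    -- per-class expectations μ_{b,k} = E_{X ~ fstar k}[log(lam b * f b X)]
    (μmat : Fin K → Fin K → ℝ)
    (hμ_int : ∀ b k, Integrable (fun x => Real.log (lam b * f b x) * fstar k x))
    (hμ : ∀ b k, μmat b k = ∫ x, Real.log (lam b * f b x) * fstar k x)
    -- centered log moment generating functions, assumed finite for all s
    (β : Fin K → Fin K → ℝ → ℝ)
    (hβ_fin : ∀ b k s, Integrable
      (fun x => Real.exp (s * (Real.log (lam b * f b x) - μmat b k)) * fstar k x))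
    (hβ : ∀ b k s, β b k s
      = Real.log (∫ x, Real.exp (s * (Real.log (lam b * f b x) - μmat b k)) * fstar k x))
    -- Fenchel–Legendre duals
    (βstar : Fin K → Fin K → ℝ → ℝ)
    (hβstar : ∀ b k t, βstar b k t = ⨆ s : ℝ, (s * t - β b k s))
    -- expected log-likelihoods and the gap Δ
    (M : Equiv.Perm (Fin K) → ℝ)
    (hM : ∀ π, M π = (1 / (n : ℝ)) * ∑ i, μmat (π (y i)) (y i))
    (Δ : ℝ)
    (hΔ : Δ = M 1 - ⨆ π : {π : Equiv.Perm (Fin K) // π ≠ 1}, M π.1)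
    (hΔpos : 0 < Δ) :
    1 - 2 * (K : ℝ) ^ 2 *
        Real.exp (-((⨅ k : Fin K, ((Finset.univ.filter (fun i => y i = k)).card : ℝ)) *
          ⨅ bk : Fin K × Fin K, min (βstar bk.1 bk.2 (Δ / 3)) (βstar bk.1 bk.2 (-(Δ / 3)))))
      ≤ (P {ω | ∀ π : Equiv.Perm (Fin K), π ≠ 1 →
          (1 / (n : ℝ)) * ∑ i, Real.log (lam (π (y i)) * f (π (y i)) (X i ω))
            < (1 / (n : ℝ)) * ∑ i, Real.log (lam (y i) * f (y i) (X i ω))}).toReal := by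
  have : Nonempty (Fin K) := ⟨⟨0, by omega⟩⟩
  have : Nonempty (Fin n) := ⟨(Finset.card_pos.1 (hcount ⟨0, by omega⟩)).choose⟩
  set T : Fin K → Finset (Fin n) := fun k => Finset.univ.filter fun i => y i = k
  set E := (⨅ k, ((T k).card : ℝ)) *
    ⨅ bk : Fin K × Fin K, min (βstar bk.1 bk.2 (Δ / 3)) (βstar bk.1 bk.2 (-(Δ / 3)))
  set Z : Fin K → Fin K → Fin n → Ω → ℝ := fun b k i ω => Real.log (lam b * f b (X i ω)) - μmat b k
  have hL : ∀ b k, legendreTransform (β b k) = βstar b k := fun b k =>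
    funext fun t => (hβstar b k t).symm
  have hβstar_nonneg : ∀ b k t, 0 ≤ βstar b k t := fun b k t =>
    hL b k ▸ legendreTransform_nonneg (by simp [hβ, hfstar_int]) t
  have hsample : ∀ b k, ∀ i ∈ T k, Integrable (Z b k i) P ∧ P[Z b k i] = 0 ∧
      ∀ s, mgf (Z b k i) P s = Real.exp (β b k s) := by
    intro b k i hi
    obtain rfl : y i = k := (Finset.mem_filter.1 hi).2
    have hcent := integrable_and_integral_comp_sub_eq_zero_of_map_eq_withDensity (hX_meas i)
      (hfstar_meas _) (hfstar_nonneg _) (hX_law i) (by fun_prop) (hμ_int b _)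
    simp only [← hμ] at hcent
    exact ⟨hcent.1, hcent.2, fun s => (hβ b _ s).symm ▸ mgf_comp_of_map_eq_withDensity
      (hX_meas i) (hfstar_meas _) (hfstar_nonneg _) (hX_law i) (by fun_prop) (hβ_fin b _ s)⟩
  set bad : Fin K × Fin K → Set Ω :=
    fun bk => {ω | (T bk.2).card * (Δ / 3) ≤ |∑ i ∈ T bk.2, Z bk.1 bk.2 i ω|}
  have hbad : ∀ bk, P.real (bad bk) ≤ 2 * Real.exp (-E) := by
    rintro ⟨b, k⟩
    have hchern := iIndepFun.measureReal_card_mul_le_abs_sum_le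
      (hX_indep.comp (fun _ x => Real.log (lam b * f b x) - μmat b k) fun _ => by fun_prop)
      (fun i => by fun_prop) (Finset.card_pos.1 (hcount k)) (fun i hi => (hsample b k i hi).1)
      (fun i hi => (hsample b k i hi).2.1) (fun i hi => (hsample b k i hi).2.2)
      (by positivity : 0 ≤ Δ / 3)
    have hE : E ≤ (T k).card * min (βstar b k (Δ / 3)) (βstar b k (-(Δ / 3))) :=
      ciInf_mul_ciInf_le (fun _ => Nat.cast_nonneg _)
        (fun _ => le_min (hβstar_nonneg _ _ _) (hβstar_nonneg _ _ _)) k (b, k)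
    rw [hL] at hchern
    exact hchern.trans (by gcongr)
  refine le_trans ?_ (one_sub_sum_measureReal_le (A := bad) fun ω hω π hπ => ?_)
  · calc _ = 1 - ∑ _bk : Fin K × Fin K, 2 * Real.exp (-E) := by
          simp only [Finset.sum_const, Finset.card_univ, Fintype.card_prod, Fintype.card_fin,
            nsmul_eq_mul, Nat.cast_mul]
          ring
      _ ≤ _ := sub_le_sub_left (Finset.sum_le_sum fun bk _ => hbad bk) 1
  · simpa using mean_lt_mean_of_abs_sum_fiber_lt y (fun b i => Real.log (lam b * f b (X i ω)))
      μmat (fun b k => not_le.1 (hω (b, k))) (by simpa [hM] using le_sub_of_eq_sub_iSup_ne hΔ hπ)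

/-- **Theorem 1 (MLE recovery of the permutation), conditional on labels.**
Fixed labels `y i ∈ Fin K` with every class count `n_k ≥ 1`; independent samples
`X i` where `X i` has density `fstar (y i)` on `ℝ^d`.  Given a mixing measure
`(lam, f)` with `lam b * f b x > 0` everywhere, with per-class means `μmat b k`,
centered log-mgf `β b k` (assumed finite) and its Fenchel–Legendre dual `βstar b k`,
if the population log-likelihood gap `Δ` between the identity permutation and the
best other permutation is positive, then the identity is the unique maximizer of the
empirical log-likelihood with probability at least
`1 - 2K² exp(-(min_k n_k) · inf_{b,k} min(β*_{b,k}(Δ/3), β*_{b,k}(-Δ/3)))`. -/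
theorem mle_permutation_recovery
    {Ω : Type*} [MeasurableSpace Ω] (P : Measure Ω) [IsProbabilityMeasure P]
    (d K n : ℕ) (hK : 2 ≤ K)
    -- fixed labels with all class counts at least one
    (y : Fin n → Fin K)
    (hcount : ∀ k : Fin K, 1 ≤ (Finset.univ.filter (fun i => y i = k)).card)
    -- true class-conditional densities on ℝ^d
    (fstar : Fin K → (Fin d → ℝ) → ℝ)
    (hfstar_meas : ∀ k, Measurable (fstar k))
    (hfstar_nonneg : ∀ k x, 0 ≤ fstar k x)
    (hfstar_int : ∀ k, ∫ x, fstar k x = 1)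
    -- independent samples, X i has density fstar (y i)
    (X : Fin n → Ω → (Fin d → ℝ))
    (hX_meas : ∀ i, Measurable (X i))
    (hX_indep : iIndepFun X P)
    (hX_law : ∀ i, Measure.map (X i) P
      = volume.withDensity (fun x => ENNReal.ofReal (fstar (y i) x)))
    -- the mixing measure Λ = ((lam b), (f b))
    (lam : Fin K → ℝ) (f : Fin K → (Fin d → ℝ) → ℝ)
    (hlam_pos : ∀ b, 0 < lam b) (hlam_sum : ∑ b, lam b = 1)
    (hf_meas : ∀ b, Measurable (f b))
    (hf_nonneg : ∀ b x, 0 ≤ f b x) (hf_int : ∀ b, ∫ x, f b x = 1)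
    (hpos : ∀ b x, 0 < lam b * f b x)
    -- per-class expectations μ_{b,k} = E_{X ~ fstar k}[log(lam b * f b X)]
    (μmat : Fin K → Fin K → ℝ)
    (hμ_int : ∀ b k, Integrable (fun x => Real.log (lam b * f b x) * fstar k x))
    (hμ : ∀ b k, μmat b k = ∫ x, Real.log (lam b * f b x) * fstar k x)
    -- centered log moment generating functions, assumed finite for all s
    (β : Fin K → Fin K → ℝ → ℝ)
    (hβ_fin : ∀ b k s, Integrable
      (fun x => Real.exp (s * (Real.log (lam b * f b x) - μmat b k)) * fstar k x))
    (hβ : ∀ b k s, β b k s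
      = Real.log (∫ x, Real.exp (s * (Real.log (lam b * f b x) - μmat b k)) * fstar k x))
    -- Fenchel–Legendre duals
    (βstar : Fin K → Fin K → ℝ → ℝ)
    (hβstar : ∀ b k t, βstar b k t = ⨆ s : ℝ, (s * t - β b k s))
    -- expected log-likelihoods and the gap Δ
    (M : Equiv.Perm (Fin K) → ℝ)
    (hM : ∀ π, M π = (1 / (n : ℝ)) * ∑ i, μmat (π (y i)) (y i))
    (Δ : ℝ)
    (hΔ : Δ = M 1 - ⨆ π : {π : Equiv.Perm (Fin K) // π ≠ 1}, M π.1)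
    (hΔpos : 0 < Δ) :
    1 - 2 * (K : ℝ) ^ 2 *
        Real.exp (-((⨅ k : Fin K, ((Finset.univ.filter (fun i => y i = k)).card : ℝ)) *
          ⨅ bk : Fin K × Fin K, min (βstar bk.1 bk.2 (Δ / 3)) (βstar bk.1 bk.2 (-(Δ / 3)))))
      ≤ (P {ω | ∀ π : Equiv.Perm (Fin K), π ≠ 1 →
          (1 / (n : ℝ)) * ∑ i, Real.log (lam (π (y i)) * f (π (y i)) (X i ω))
            < (1 / (n : ℝ)) * ∑ i, Real.log (lam (y i) * f (y i) (X i ω))}).toReal :=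
  mle_permutation_recovery_general P d K n hK y hcount fstar hfstar_meas hfstar_nonneg hfstar_int X
    hX_meas hX_indep hX_law lam f hf_meas μmat hμ_int hμ β hβ_fin hβ βstar hβstar M hM Δ hΔ hΔpos
end

section
/- Let (X_1,Y_1),...,(X_n,Y_n) be i.i.d. copies of (X,Y) from the true model. Let Λ = ((λ_b),(f_b)) be a mixing measure with P(X ∈ D_b(Λ)) > 0 for every b, and define the majority-vote gap Δ = min_b [ P(Y=b | X ∈ D_b(Λ)) − max_{j≠b} P(Y=j | X ∈ D_b(Λ)) ]. Let m_b = #{i : X_i ∈ D_b(Λ)}. If Δ > 0, then conditionally on the region-membership indicators (1{X_i ∈ D_b(Λ)})_{1≤i≤n, 1≤b≤K}, on the event that m_b ≥ 1 for every b, the conditional probability that for every b the label b is the unique majority label among {Y_i : X_i ∈ D_b(Λ)} (that is, the majority-vote estimator π̂_MV equals the identity) is at least 1 − 2K² exp( −2Δ² (min_b m_b) / 9 ). -/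
/-
Conditionally on the region-membership pattern, the labels `Y i` stay independent (the pairs
`(X i, Y i)` are), and a sample lying in the region `D b` has label law `P(Y = · | X ∈ D b)`,
the same for every sample. In region `b`, the event that a label `j ≠ b` gets at least as many
votes as `b` says that a sum of independent increments `1{Y i = j} - 1{Y i = b}`, each of mean
at most `-Δ`, is nonnegative; a Chernoff bound makes it cost at most `exp(-Δ² m_b / 4)`, and a
union bound over the pairs `(b, j)` finishes.
-/

open MeasureTheory ProbabilityTheory

namespace MajorityVote

open Finset Function Real

lemma sum_biUnion_le_sum_sum {α β : Type*} [DecidableEq α] {f : α → ℝ} (hf : ∀ a, 0 ≤ f a)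
    (t : Finset β) (u : β → Finset α) :
    ∑ a ∈ t.biUnion u, f a ≤ ∑ b ∈ t, ∑ a ∈ u b, f a := by
  rw [← sup_eq_biUnion]
  refine apply_sup_le_sum (f := fun s => ∑ a ∈ s, f a) sum_empty (fun {s s'} => ?_) t
  have := sum_union_inter (s₁ := s) (s₂ := s') (f := f)
  rw [sup_eq_union]
  linarith [sum_nonneg fun a (_ : a ∈ s ∩ s') => hf a]

section Counting

variable {ι κ : Type*} [Fintype ι] [Fintype κ]

lemma sum_prod_le_prod_sum_mul_exp [DecidableEq ι] {w : ι → κ → ℝ} (hw : ∀ i k, 0 ≤ w i k)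
    {g : ι → κ → ℝ} {s : Finset (ι → κ)} (hs : ∀ y ∈ s, 0 ≤ ∑ i, g i (y i)) {t : ℝ} (ht : 0 ≤ t) :
    ∑ y ∈ s, ∏ i, w i (y i) ≤ ∏ i, ∑ k, w i k * exp (t * g i k) := by
  have hp : ∀ y : ι → κ, 0 ≤ ∏ i, w i (y i) := fun y => prod_nonneg fun i _ => hw i (y i)
  calc ∑ y ∈ s, ∏ i, w i (y i)
      ≤ ∑ y ∈ s, (∏ i, w i (y i)) * exp (t * ∑ i, g i (y i)) :=
        sum_le_sum fun y hy => le_mul_of_one_le_right (hp y) (one_le_exp (mul_nonneg ht (hs y hy)))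
    _ ≤ ∑ y : ι → κ, (∏ i, w i (y i)) * exp (t * ∑ i, g i (y i)) :=
        sum_le_univ_sum_of_nonneg fun y => mul_nonneg (hp y) (exp_pos _).le
    _ = ∏ i, ∑ k, w i k * exp (t * g i k) := by
        rw [Fintype.prod_sum]
        refine sum_congr rfl fun y _ => ?_
        rw [mul_sum, exp_sum, prod_mul_distrib]

lemma sum_prod_eq_one [DecidableEq ι] {w : ι → κ → ℝ} (hw1 : ∀ i, ∑ k, w i k = 1) :
    ∑ y : ι → κ, ∏ i, w i (y i) = 1 := by
  simp only [← Fintype.prod_sum, hw1, prod_const_one]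

variable [DecidableEq κ]

def labelCount (A : ι → κ → Bool) (y : ι → κ) (b j : κ) : ℕ :=
  #{i | A i b = true ∧ y i = j}

def majorityCorrect [DecidableEq ι] (A : ι → κ → Bool) : Finset (ι → κ) :=
  {y | ∀ b j, j ≠ b → labelCount A y b j < labelCount A y b b}

lemma sum_mul_exp_indicator_sub_indicator_le {q : κ → ℝ} (hq0 : ∀ k, 0 ≤ q k)
    (hq1 : ∑ k, q k = 1) {b j : κ} (hjb : j ≠ b) {Δ : ℝ} (hΔ : 0 ≤ Δ) (hgap : Δ ≤ q b - q j) :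
    ∑ k, q k * exp (Δ / 2 * ((if k = j then 1 else 0) - (if k = b then 1 else 0)))
      ≤ exp (-Δ ^ 2 / 4) := by
  -- `exp (±t) ≤ 1 ± t + t²` bounds the sum by `1 - tΔ + t²`, which `t = Δ / 2` minimises
  set t := Δ / 2 with ht_def
  have hqjb : q j + q b ≤ 1 := by
    rw [← hq1, ← sum_pair hjb]
    exact sum_le_univ_sum_of_nonneg hq0
  have ht : |t| ≤ 1 := by
    rw [abs_of_nonneg (by positivity)]
    linarith [hq0 j]
  have hexp : exp t ≤ 1 + t + t ^ 2 := by
    linarith [(abs_le.mp (abs_exp_sub_one_sub_id_le ht)).2]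
  have hexp_neg : exp (-t) ≤ 1 - t + t ^ 2 := by
    have := (abs_le.mp (abs_exp_sub_one_sub_id_le (x := -t) (by rwa [abs_neg]))).2
    linarith [neg_sq t]
  have hsplit : ∀ k, q k * exp (t * ((if k = j then 1 else 0) - (if k = b then 1 else 0)))
      = q k + (if k = j then q j * (exp t - 1) else 0)
        + (if k = b then q b * (exp (-t) - 1) else 0) := by
    intro k
    by_cases hkj : k = j
    · subst hkj
      simp only [if_pos, if_neg hjb]
      ring_nf
    by_cases hkb : k = b
    · subst hkb
      simp only [if_pos, if_neg hkj]
      ring_nf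
    simp [hkj, hkb]
  calc ∑ k, q k * exp (t * ((if k = j then 1 else 0) - (if k = b then 1 else 0)))
      = 1 + q j * (exp t - 1) + q b * (exp (-t) - 1) := by
        simp only [hsplit, sum_add_distrib, hq1, sum_ite_eq', mem_univ, if_true]
    _ ≤ 1 + q j * (t + t ^ 2) + q b * (-t + t ^ 2) := by
        gcongr <;> [exact hq0 j; linarith; exact hq0 b; linarith]
    _ = 1 - t * (q b - q j) + t ^ 2 * (q j + q b) := by ring
    _ ≤ 1 - Δ ^ 2 / 4 := by nlinarith [sq_nonneg t]
    _ ≤ exp (-Δ ^ 2 / 4) := by linarith [add_one_le_exp (-Δ ^ 2 / 4)]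

lemma sum_prod_filter_labelCount_le_le [DecidableEq ι] (A : ι → κ → Bool) {w : ι → κ → ℝ}
    (hw0 : ∀ i k, 0 ≤ w i k) (hw1 : ∀ i, ∑ k, w i k = 1) {b j : κ} (hjb : j ≠ b) {Δ : ℝ}
    (hΔ : 0 ≤ Δ) (hgap : ∀ i, A i b = true → Δ ≤ w i b - w i j) :
    ∑ y ∈ {y | labelCount A y b b ≤ labelCount A y b j}, ∏ i, w i (y i)
      ≤ exp (-Δ ^ 2 / 4) ^ #{i | A i b = true} := by
  set g : ι → κ → ℝ := fun i k =>
    if A i b = true then (if k = j then 1 else 0) - (if k = b then 1 else 0) else 0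
  have hg : ∀ y : ι → κ, ∑ i, g i (y i) = labelCount A y b j - labelCount A y b b := by
    intro y
    have : ∀ i, g i (y i) = (if A i b = true ∧ y i = j then 1 else 0)
        - (if A i b = true ∧ y i = b then 1 else 0) := by
      intro i
      by_cases hA : A i b = true <;> simp [g, hA]
    simp only [this, sum_sub_distrib, sum_boole, labelCount]
  have hfactor : ∀ i, A i b ≠ true → ∑ k, w i k * exp (Δ / 2 * g i k) = 1 := by
    intro i hA
    simp [g, hA, hw1 i]
  calc ∑ y ∈ {y | labelCount A y b b ≤ labelCount A y b j}, ∏ i, w i (y i)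
      ≤ ∏ i, ∑ k, w i k * exp (Δ / 2 * g i k) := by
        refine sum_prod_le_prod_sum_mul_exp hw0 (fun y hy => ?_) (by positivity)
        rw [hg, sub_nonneg]
        exact_mod_cast (mem_filter.mp hy).2
    _ = ∏ i ∈ {i | A i b = true}, ∑ k, w i k * exp (Δ / 2 * g i k) :=
        (prod_filter_of_ne fun i _ h => not_not.mp (mt (hfactor i) h)).symm
    _ ≤ ∏ i ∈ {i | A i b = true}, exp (-Δ ^ 2 / 4) := by
        refine prod_le_prod (fun i _ => sum_nonneg fun k _ => ?_) fun i hi => ?_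
        · exact mul_nonneg (hw0 i k) (exp_pos _).le
        · have hA : A i b = true := (mem_filter.mp hi).2
          simpa only [g, hA, if_true] using sum_mul_exp_indicator_sub_indicator_le (hw0 i)
            (hw1 i) hjb hΔ (hgap i hA)
    _ = exp (-Δ ^ 2 / 4) ^ #{i | A i b = true} := prod_const _

lemma sum_prod_compl_majorityCorrect_le [DecidableEq ι] (A : ι → κ → Bool) {w : ι → κ → ℝ}
    (hw0 : ∀ i k, 0 ≤ w i k) (hw1 : ∀ i, ∑ k, w i k = 1) {Δ : ℝ} (hΔ : 0 ≤ Δ)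
    (hgap : ∀ i b j, A i b = true → j ≠ b → Δ ≤ w i b - w i j) {M : ℝ}
    (hM : ∀ b, M ≤ #{i | A i b = true}) :
    ∑ y ∈ (majorityCorrect A)ᶜ, ∏ i, w i (y i) ≤ Fintype.card κ ^ 2 * exp (-Δ ^ 2 * M / 4) := by
  have hp : ∀ y : ι → κ, 0 ≤ ∏ i, w i (y i) := fun y => prod_nonneg fun i _ => hw0 i (y i)
  set bad : κ × κ → Finset (ι → κ) := fun bj =>
    {y | labelCount A y bj.1 bj.1 ≤ labelCount A y bj.1 bj.2}
  have hcover : (majorityCorrect A)ᶜ ⊆ ({bj | bj.2 ≠ bj.1} : Finset (κ × κ)).biUnion bad := by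
    intro y hy
    simp only [majorityCorrect, mem_compl, mem_filter, mem_univ, true_and, not_forall,
      not_lt] at hy
    obtain ⟨b, j, hjb, hle⟩ := hy
    exact mem_biUnion.mpr ⟨(b, j), by simpa using hjb, by simpa [bad] using hle⟩
  calc ∑ y ∈ (majorityCorrect A)ᶜ, ∏ i, w i (y i)
      ≤ ∑ bj ∈ {bj | bj.2 ≠ bj.1}, ∑ y ∈ bad bj, ∏ i, w i (y i) :=
        (sum_le_sum_of_subset_of_nonneg hcover fun y _ _ => hp y).trans
          (sum_biUnion_le_sum_sum hp _ _)
    _ ≤ ∑ bj ∈ ({bj | bj.2 ≠ bj.1} : Finset (κ × κ)), exp (-Δ ^ 2 * M / 4) := by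
        refine sum_le_sum fun bj hbj => ?_
        have hjb : bj.2 ≠ bj.1 := (mem_filter.mp hbj).2
        refine (sum_prod_filter_labelCount_le_le A hw0 hw1 hjb hΔ
          fun i hA => hgap i _ _ hA hjb).trans ?_
        rw [← exp_nat_mul]
        exact exp_le_exp.mpr (by nlinarith [hM bj.1, sq_nonneg Δ])
    _ ≤ ∑ _bj : κ × κ, exp (-Δ ^ 2 * M / 4) :=
        sum_le_univ_sum_of_nonneg fun _ => (exp_pos _).le
    _ = Fintype.card κ ^ 2 * exp (-Δ ^ 2 * M / 4) := by simp [sq]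

theorem one_sub_card_sq_mul_exp_le_sum_prod_majorityCorrect [DecidableEq ι] (A : ι → κ → Bool)
    {w : ι → κ → ℝ} (hw0 : ∀ i k, 0 ≤ w i k) (hw1 : ∀ i, ∑ k, w i k = 1) {Δ : ℝ} (hΔ : 0 ≤ Δ)
    (hgap : ∀ i b j, A i b = true → j ≠ b → Δ ≤ w i b - w i j) {M : ℝ}
    (hM : ∀ b, M ≤ #{i | A i b = true}) :
    1 - Fintype.card κ ^ 2 * exp (-Δ ^ 2 * M / 4) ≤ ∑ y ∈ majorityCorrect A, ∏ i, w i (y i) := by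
  have hsplit := sum_add_sum_compl (majorityCorrect A) fun y => ∏ i, w i (y i)
  rw [sum_prod_eq_one hw1] at hsplit
  linarith [sum_prod_compl_majorityCorrect_le A hw0 hw1 hΔ hgap hM]

end Counting

def decisionRegion {α κ : Type*} (lam : κ → ℝ) (f : κ → α → ℝ) (b : κ) : Set α :=
  {x | ∀ j, j ≠ b → lam j * f j x < lam b * f b x}

section DecisionRegion

variable {α κ : Type*} {lam : κ → ℝ} {f : κ → α → ℝ}

lemma measurableSet_decisionRegion [MeasurableSpace α] [Countable κ]
    (hf : ∀ b, Measurable (f b)) (b : κ) : MeasurableSet (decisionRegion lam f b) := by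
  simp only [decisionRegion, Set.ofPred_forall]
  exact .iInter fun j => .iInter fun _ => measurableSet_lt (by fun_prop) (by fun_prop)

lemma pairwise_disjoint_decisionRegion : Pairwise (Disjoint on (decisionRegion lam f)) :=
  fun b b' h => Set.disjoint_left.mpr fun _ hx hx' => (hx b' h.symm).not_gt (hx' b h)

end DecisionRegion

def membershipFiber {α κ : Type*} (D : κ → Set α) (a : κ → Bool) : Set α :=
  {x | ∀ b, x ∈ D b ↔ a b = true}

section MembershipFiber

variable {α κ : Type*} {D : κ → Set α} {a : κ → Bool}

lemma measurableSet_membershipFiber [MeasurableSpace α] [Countable κ]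
    (hD : ∀ b, MeasurableSet (D b)) (a : κ → Bool) : MeasurableSet (membershipFiber D a) := by
  simp only [membershipFiber, Set.ofPred_forall]
  exact .iInter fun b => (hD b).iff (by simp)

lemma membershipFiber_eq_of_nonempty (hD : Pairwise (Disjoint on D)) {b : κ} (hb : a b = true)
    (hne : (membershipFiber D a).Nonempty) : membershipFiber D a = D b := by
  obtain ⟨x₀, hx₀⟩ := hne
  have hunique : ∀ b', a b' = true → b' = b := fun b' hb' => by
    by_contra hne
    exact Set.disjoint_left.mp (hD hne) ((hx₀ b').mpr hb') ((hx₀ b).mpr hb)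
  ext x
  refine ⟨fun hx => (hx b).mpr hb, fun hx b' => ?_⟩
  rcases eq_or_ne b' b with rfl | hne
  · exact iff_of_true hx hb
  · exact iff_of_false (Set.disjoint_left.mp (hD hne.symm) hx) (mt (hunique b') hne)

end MembershipFiber

lemma le_sub_of_eq_iInf_sub_iSup {κ : Type*} [Finite κ] {q : κ → κ → ℝ} {Δ : ℝ}
    (hΔ : Δ = ⨅ b, (q b b - ⨆ j : {j // j ≠ b}, q b j)) {b j : κ} (hjb : j ≠ b) :
    Δ ≤ q b b - q b j := by
  have h₁ : Δ ≤ q b b - ⨆ j : {j // j ≠ b}, q b j := hΔ ▸ ciInf_le (Finite.bddBelow_range _) b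
  have h₂ : q b j ≤ ⨆ j : {j // j ≠ b}, q b j :=
    le_ciSup (f := fun j : {j // j ≠ b} => q b j) (Finite.bddAbove_range _) ⟨j, hjb⟩
  linarith

section Conditioning

variable {Ω α κ : Type*} [MeasurableSpace Ω] [MeasurableSpace α] {P : Measure Ω}
  [IsFiniteMeasure P]

lemma cond_iInter_preimage_eq_prod {ι β : Type*} [Fintype ι] [MeasurableSpace β]
    {X : ι → Ω → α} {Y : ι → Ω → β} (hX : ∀ i, Measurable (X i))
    (hXY : iIndepFun (fun i ω => (X i ω, Y i ω)) P) {S : ι → Set α}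
    (hS : ∀ i, MeasurableSet (S i)) {T : ι → Set β} (hT : ∀ i, MeasurableSet (T i)) :
    P[⋂ i, Y i ⁻¹' T i | ⋂ i, X i ⁻¹' S i] = ∏ i, P[Y i ⁻¹' T i | X i ⁻¹' S i] := by
  have hprod : ∀ U : ι → Set β, (∀ i, MeasurableSet (U i)) →
      P (⋂ i, X i ⁻¹' S i ∩ Y i ⁻¹' U i) = ∏ i, P (X i ⁻¹' S i ∩ Y i ⁻¹' U i) := by
    intro U hU
    simp only [← Set.mk_preimage_prod]
    exact hXY.meas_iInter fun i => ⟨_, (hS i).prod (hU i), rfl⟩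
  have hmarg := hprod (fun _ => Set.univ) fun _ => .univ
  simp only [Set.preimage_univ, Set.inter_univ] at hmarg
  rw [cond_apply (.iInter fun i => hX i (hS i)), ← Set.iInter_inter_distrib, hprod T hT, hmarg,
    ENNReal.prod_inv_distrib fun i _ j _ _ => .inr (measure_ne_top P _), ← prod_mul_distrib]
  exact prod_congr rfl fun i _ => (cond_apply (hX i (hS i)) P _).symm

lemma sum_toReal_cond_preimage_singleton [Fintype κ] [MeasurableSpace κ]
    [MeasurableSingletonClass κ] {Y : Ω → κ} (hY : Measurable Y) {s : Set Ω} (hs : P s ≠ 0) :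
    ∑ k, (P[Y ⁻¹' {k} | s]).toReal = 1 := by
  have := cond_isProbabilityMeasure (μ := P) hs
  rw [← ENNReal.toReal_sum fun k _ => measure_ne_top _ _,
    sum_measure_preimage_singleton _ fun k _ => hY (.singleton k)]
  simp

lemma cond_preimage_eq_of_cond_map_eq [Fintype κ] [MeasurableSpace κ]
    [MeasurableSingletonClass κ] {X X' : Ω → α} {Y Y' : Ω → κ} (hX : Measurable X)
    (hX' : Measurable X') (hY : Measurable Y) (hY' : Measurable Y')
    (hY_eq : ∀ k, P (Y ⁻¹' {k}) = P (Y' ⁻¹' {k}))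
    (hX_eq : ∀ k, (P[|Y ⁻¹' {k}]).map X = (P[|Y' ⁻¹' {k}]).map X') {S : Set α}
    (hS : MeasurableSet S) (k : κ) :
    P[Y ⁻¹' {k} | X ⁻¹' S] = P[Y' ⁻¹' {k} | X' ⁻¹' S] := by
  have hjoint : ∀ l, P (Y ⁻¹' {l} ∩ X ⁻¹' S) = P (Y' ⁻¹' {l} ∩ X' ⁻¹' S) := by
    intro l
    rw [← cond_mul_eq_inter (hY (.singleton l)), ← cond_mul_eq_inter (hY' (.singleton l)),
      ← Measure.map_apply hX hS, ← Measure.map_apply hX' hS, hX_eq, hY_eq]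
  have hmarg : P (X ⁻¹' S) = P (X' ⁻¹' S) := by
    have hfiber := fun (Z : Ω → κ) (hZ : Measurable Z) (A : Set Ω) =>
      congrArg (fun μ : Measure Ω => μ A) (sum_meas_smul_cond_fiber hZ P)
    rw [← hfiber Y hY (X ⁻¹' S), ← hfiber Y' hY' (X' ⁻¹' S)]
    simp only [Measure.coe_finsetSum, Finset.sum_apply, Measure.smul_apply, smul_eq_mul]
    refine sum_congr rfl fun l _ => ?_
    rw [mul_comm, cond_mul_eq_inter (hY (.singleton l)), mul_comm,
      cond_mul_eq_inter (hY' (.singleton l)), hjoint]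
  rw [cond_apply (hX hS), cond_apply (hX' hS), hmarg, Set.inter_comm, hjoint, Set.inter_comm]

lemma cond_preimage_pi_toReal_eq_sum_prod {ι : Type*} [Fintype ι] [Fintype κ]
    [MeasurableSpace κ] [MeasurableSingletonClass κ] {X : ι → Ω → α} {Y : ι → Ω → κ}
    (hX : ∀ i, Measurable (X i)) (hY : ∀ i, Measurable (Y i))
    (hXY : iIndepFun (fun i ω => (X i ω, Y i ω)) P) {S : ι → Set α}
    (hS : ∀ i, MeasurableSet (S i)) (F : Finset (ι → κ)) :
    (P[(fun ω i => Y i ω) ⁻¹' F | ⋂ i, X i ⁻¹' S i]).toReal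
      = ∑ y ∈ F, ∏ i, (P[Y i ⁻¹' {y i} | X i ⁻¹' S i]).toReal := by
  have hY' : Measurable fun ω i => Y i ω := measurable_pi_lambda _ hY
  rw [← sum_measure_preimage_singleton F fun y _ => hY' (.singleton y),
    ENNReal.toReal_sum fun y _ => measure_ne_top _ _]
  refine sum_congr rfl fun y _ => ?_
  have hcyl : (fun ω i => Y i ω) ⁻¹' {y} = ⋂ i, Y i ⁻¹' {y i} := by
    ext ω
    simp [funext_iff]
  rw [hcyl, cond_iInter_preimage_eq_prod hX hXY hS fun i => .singleton (y i),
    ENNReal.toReal_prod]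

theorem one_sub_card_sq_mul_exp_le_cond_majorityCorrect {ι : Type*} [Fintype ι] [DecidableEq ι]
    [Fintype κ] [DecidableEq κ] [MeasurableSpace κ] [MeasurableSingletonClass κ]
    {X : ι → Ω → α} {Y : ι → Ω → κ} (hX : ∀ i, Measurable (X i)) (hY : ∀ i, Measurable (Y i))
    (hXY : iIndepFun (fun i ω => (X i ω, Y i ω)) P) {D : κ → Set α}
    (hD_meas : ∀ b, MeasurableSet (D b)) (hD_disj : Pairwise (Disjoint on D))
    (A : ι → κ → Bool) (hA : P {ω | ∀ i b, X i ω ∈ D b ↔ A i b = true} ≠ 0) {Δ : ℝ}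
    (hΔ : 0 ≤ Δ) (hgap : ∀ i b j, A i b = true → j ≠ b →
      Δ ≤ (P[Y i ⁻¹' {b} | X i ⁻¹' D b]).toReal - (P[Y i ⁻¹' {j} | X i ⁻¹' D b]).toReal)
    {M : ℝ} (hM : ∀ b, M ≤ #{i | A i b = true}) :
    1 - Fintype.card κ ^ 2 * exp (-Δ ^ 2 * M / 4)
      ≤ (P[{ω | ∀ b j, j ≠ b → labelCount A (fun i => Y i ω) b j
          < labelCount A (fun i => Y i ω) b b} |
            {ω | ∀ i b, X i ω ∈ D b ↔ A i b = true}]).toReal := by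
  have hE : {ω | ∀ i b, X i ω ∈ D b ↔ A i b = true} = ⋂ i, X i ⁻¹' membershipFiber D (A i) := by
    ext ω
    simp [membershipFiber]
  have hmajority : {ω | ∀ b j, j ≠ b → labelCount A (fun i => Y i ω) b j
      < labelCount A (fun i => Y i ω) b b} = (fun ω i => Y i ω) ⁻¹' ↑(majorityCorrect A) := by
    ext ω
    simp [majorityCorrect]
  have hS_pos : ∀ i, P (X i ⁻¹' membershipFiber D (A i)) ≠ 0 :=
    fun i h => hA (hE ▸ measure_mono_null (Set.iInter_subset _ i) h)
  rw [hE, hmajority, cond_preimage_pi_toReal_eq_sum_prod hX hY hXY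
    fun i => measurableSet_membershipFiber hD_meas (A i)]
  refine one_sub_card_sq_mul_exp_le_sum_prod_majorityCorrect A (fun _ _ => ENNReal.toReal_nonneg)
    (fun i => sum_toReal_cond_preimage_singleton (hY i) (hS_pos i)) hΔ
    (fun i b j hAb hjb => ?_) hM
  obtain ⟨ω, hω⟩ := nonempty_of_measure_ne_zero (hS_pos i)
  rw [membershipFiber_eq_of_nonempty hD_disj hAb ⟨X i ω, hω⟩]
  exact hgap i b j hAb hjb

end Conditioning

end MajorityVote

theorem majority_vote_recovery_general
    {Ω : Type*} [MeasurableSpace Ω] (P : Measure Ω) [IsProbabilityMeasure P]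
    (d K n : ℕ) (hn : 0 < n)
    -- true weights and class-conditional densities
    (lamstar : Fin K → ℝ) (fstar : Fin K → (Fin d → ℝ) → ℝ)
    -- i.i.d. labeled pairs from the true model
    (X : Fin n → Ω → (Fin d → ℝ)) (Y : Fin n → Ω → Fin K)
    (hX_meas : ∀ i, Measurable (X i)) (hY_meas : ∀ i, Measurable (Y i))
    (hindep : iIndepFun (fun i ω => (X i ω, Y i ω)) P)
    (hY_law : ∀ i k, P {ω | Y i ω = k} = ENNReal.ofReal (lamstar k))
    (hcond_law : ∀ i k, Measure.map (X i) (P[|{ω | Y i ω = k}])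
      = volume.withDensity (fun x => ENNReal.ofReal (fstar k x)))
    -- the mixing measure Λ, its decision regions, and their positive probability
    (lam : Fin K → ℝ) (f : Fin K → (Fin d → ℝ) → ℝ)
    (hf_meas : ∀ b, Measurable (f b))
    (D : Fin K → Set (Fin d → ℝ))
    (hD : ∀ b, D b = {x | ∀ j, j ≠ b → lam j * f j x < lam b * f b x})
    -- the majority-vote gap Δ > 0
    (Δ : ℝ)
    (hΔ : Δ = ⨅ b : Fin K,
      ((P[|{ω | X ⟨0, hn⟩ ω ∈ D b}] {ω | Y ⟨0, hn⟩ ω = b}).toReal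
        - ⨆ j : {j : Fin K // j ≠ b},
            (P[|{ω | X ⟨0, hn⟩ ω ∈ D b}] {ω | Y ⟨0, hn⟩ ω = j.1}).toReal))
    (hΔpos : 0 < Δ)
    -- a fixed region-membership pattern A with counts m b ≥ 1 and positive probability
    (A : Fin n → Fin K → Bool)
    (m : Fin K → ℕ)
    (hm : ∀ b, m b = (Finset.univ.filter (fun i => A i b = true)).card)
    (hA_pos : P {ω | ∀ i b, X i ω ∈ D b ↔ A i b = true} ≠ 0) :
    1 - 2 * (K : ℝ) ^ 2 * Real.exp (-2 * Δ ^ 2 * (⨅ b : Fin K, (m b : ℝ)) / 9)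
      ≤ ((P[|{ω | ∀ i b, X i ω ∈ D b ↔ A i b = true}])
          {ω | ∀ b j : Fin K, j ≠ b →
            (Finset.univ.filter (fun i => A i b = true ∧ Y i ω = j)).card
              < (Finset.univ.filter (fun i => A i b = true ∧ Y i ω = b)).card}).toReal := by
  have hD_eq : D = MajorityVote.decisionRegion lam f := funext hD
  have hD_meas : ∀ b, MeasurableSet (D b) :=
    hD_eq ▸ MajorityVote.measurableSet_decisionRegion hf_meas
  set i₀ : Fin n := ⟨0, hn⟩
  have hlaw : ∀ i b k, P[Y i ⁻¹' {k} | X i ⁻¹' D b] = P[Y i₀ ⁻¹' {k} | X i₀ ⁻¹' D b] :=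
    fun i b k => MajorityVote.cond_preimage_eq_of_cond_map_eq (hX_meas i) (hX_meas i₀)
      (hY_meas i) (hY_meas i₀) (fun k => (hY_law i k).trans (hY_law i₀ k).symm)
      (fun k => (hcond_law i k).trans (hcond_law i₀ k).symm) (hD_meas b) k
  have hgap : ∀ i b j, A i b = true → j ≠ b →
      Δ ≤ (P[Y i ⁻¹' {b} | X i ⁻¹' D b]).toReal - (P[Y i ⁻¹' {j} | X i ⁻¹' D b]).toReal := by
    intro i b j _ hjb
    rw [hlaw i b b, hlaw i b j]
    exact MajorityVote.le_sub_of_eq_iInf_sub_iSup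
      (q := fun b k => (P[Y i₀ ⁻¹' {k} | X i₀ ⁻¹' D b]).toReal) hΔ hjb
  set M : ℝ := ⨅ b : Fin K, (m b : ℝ)
  refine le_trans ?_ (MajorityVote.one_sub_card_sq_mul_exp_le_cond_majorityCorrect hX_meas hY_meas
    hindep hD_meas (hD_eq ▸ MajorityVote.pairwise_disjoint_decisionRegion) A hA_pos hΔpos.le hgap
    (M := M) fun b => hm b ▸ ciInf_le (Finite.bddBelow_range _) b)
  have hM : 0 ≤ M := Real.iInf_nonneg fun b => Nat.cast_nonneg _
  have hexp : Real.exp (-Δ ^ 2 * M / 4) ≤ Real.exp (-2 * Δ ^ 2 * M / 9) :=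
    Real.exp_le_exp.mpr (by nlinarith [mul_nonneg (sq_nonneg Δ) hM])
  rw [Fintype.card_fin]
  nlinarith [Real.exp_pos (-2 * Δ ^ 2 * M / 9), sq_nonneg (K : ℝ)]

/-- **Theorem 2 (majority-vote recovery of the permutation).**
I.i.d. labeled pairs `(X i, Y i)` from the true model; a mixing measure `(lam, f)`
whose decision regions `D b = {x | ∀ j ≠ b, lam j * f j x < lam b * f b x}` all have
positive probability; majority-vote gap
`Δ = min_b [P(Y = b | X ∈ D b) - max_{j ≠ b} P(Y = j | X ∈ D b)] > 0`.
Conditionally on the region-membership indicators being equal to a fixed pattern `A`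
(an event of positive probability) on which each region contains `m b ≥ 1` samples,
the conditional probability that every label `b` is the unique majority label in
region `b` is at least `1 - 2K² exp(-2Δ²(min_b m b)/9)`. -/
theorem majority_vote_recovery
    {Ω : Type*} [MeasurableSpace Ω] (P : Measure Ω) [IsProbabilityMeasure P]
    (d K n : ℕ) (hK : 2 ≤ K) (hn : 0 < n)
    -- true weights and class-conditional densities
    (lamstar : Fin K → ℝ) (fstar : Fin K → (Fin d → ℝ) → ℝ)
    (hlamstar_pos : ∀ k, 0 < lamstar k) (hlamstar_sum : ∑ k, lamstar k = 1)
    (hfstar_meas : ∀ k, Measurable (fstar k))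
    (hfstar_nonneg : ∀ k x, 0 ≤ fstar k x)
    (hfstar_int : ∀ k, ∫ x, fstar k x = 1)
    -- i.i.d. labeled pairs from the true model
    (X : Fin n → Ω → (Fin d → ℝ)) (Y : Fin n → Ω → Fin K)
    (hX_meas : ∀ i, Measurable (X i)) (hY_meas : ∀ i, Measurable (Y i))
    (hindep : iIndepFun (fun i ω => (X i ω, Y i ω)) P)
    (hY_law : ∀ i k, P {ω | Y i ω = k} = ENNReal.ofReal (lamstar k))
    (hcond_law : ∀ i k, Measure.map (X i) (P[|{ω | Y i ω = k}])
      = volume.withDensity (fun x => ENNReal.ofReal (fstar k x)))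
    -- the mixing measure Λ, its decision regions, and their positive probability
    (lam : Fin K → ℝ) (f : Fin K → (Fin d → ℝ) → ℝ)
    (hlam_pos : ∀ b, 0 < lam b) (hlam_sum : ∑ b, lam b = 1)
    (hf_meas : ∀ b, Measurable (f b))
    (hf_nonneg : ∀ b x, 0 ≤ f b x) (hf_int : ∀ b, ∫ x, f b x = 1)
    (D : Fin K → Set (Fin d → ℝ))
    (hD : ∀ b, D b = {x | ∀ j, j ≠ b → lam j * f j x < lam b * f b x})
    (hD_pos : ∀ b, 0 < P {ω | X ⟨0, hn⟩ ω ∈ D b})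
    -- the majority-vote gap Δ > 0
    (Δ : ℝ)
    (hΔ : Δ = ⨅ b : Fin K,
      ((P[|{ω | X ⟨0, hn⟩ ω ∈ D b}] {ω | Y ⟨0, hn⟩ ω = b}).toReal
        - ⨆ j : {j : Fin K // j ≠ b},
            (P[|{ω | X ⟨0, hn⟩ ω ∈ D b}] {ω | Y ⟨0, hn⟩ ω = j.1}).toReal))
    (hΔpos : 0 < Δ)
    -- a fixed region-membership pattern A with counts m b ≥ 1 and positive probability
    (A : Fin n → Fin K → Bool)
    (m : Fin K → ℕ)
    (hm : ∀ b, m b = (Finset.univ.filter (fun i => A i b = true)).card)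
    (hm_one : ∀ b, 1 ≤ m b)
    (hA_pos : P {ω | ∀ i b, X i ω ∈ D b ↔ A i b = true} ≠ 0) :
    1 - 2 * (K : ℝ) ^ 2 * Real.exp (-2 * Δ ^ 2 * (⨅ b : Fin K, (m b : ℝ)) / 9)
      ≤ ((P[|{ω | ∀ i b, X i ω ∈ D b ↔ A i b = true}])
          {ω | ∀ b j : Fin K, j ≠ b →
            (Finset.univ.filter (fun i => A i b = true ∧ Y i ω = j)).card
              < (Finset.univ.filter (fun i => A i b = true ∧ Y i ω = b)).card}).toReal :=
  majority_vote_recovery_general P d K n hn lamstar fstar X Y hX_meas hY_meas hindep hY_law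
    hcond_law lam f hf_meas D hD Δ hΔ hΔpos A m hm hA_pos
end

section
/- Let (X_1,Y_1),...,(X_n,Y_n) be i.i.d. copies of (X,Y) from the true model, and let Λ = ((λ_b),(f_b)) be a mixing measure with λ_b f_b(x) > 0 for all x and b. For each permutation π of {1,...,K} let L(π) = E[log(λ_{π(Y)} f_{π(Y)}(X))], assumed finite, and let Δ = L(id) − max_{π ≠ id} L(π). For each π, assume the centered log-moment-generating function ψ_π(s) = log E[exp( s( log(λ_{π(Y)} f_{π(Y)}(X)) − L(π) ) )] is finite for all s ∈ ℝ, set ψ*_π(t) = sup_{s∈ℝ}(st − ψ_π(s)), and let I = inf_π min( ψ*_π(Δ/3), ψ*_π(−Δ/3) ). If Δ > 0, I > 0, δ ∈ (0,1), and n ≥ ( K·log K + log(2/δ) ) / I, then the probability that the identity permutation is the unique maximizer over permutations π of the log-likelihood ℓ_n(π) = (1/n) Σ_{i=1}^n log(λ_{π(Y_i)} f_{π(Y_i)}(X_i)) is at least 1 − δ. In particular, Θ(K log K) labeled samples suffice to recover the true permutation with high probability. -/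
/-!
For a permutation `π` let `W π i = log (λ_{π(Yᵢ)} f_{π(Yᵢ)}(Xᵢ)) - L π`. The labeled pairs are
i.i.d. (the law of a pair is determined by the label law and the class-conditional laws), so the
`W π i` are i.i.d. centred variables with cumulant generating function `ψ π`, and the Chernoff
bound optimised over `s` gives `P(|∑ᵢ W π i| ≥ nΔ/3) ≤ 2 exp(-nI)`. Off the union of these `K!`
events every empirical log-likelihood is within `Δ/3` of its mean, and the gap `Δ` makes the
identity the strict maximiser. Finally `K! ≤ K^K`, so the union has probability at most
`2 K^K exp(-nI) ≤ δ`.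
-/

open MeasureTheory ProbabilityTheory

lemma le_exp_neg_mul_iSup {ι : Type*} [Nonempty ι] {p c : ℝ} {g : ι → ℝ} (hc : 0 ≤ c)
    (h : ∀ i, p ≤ Real.exp (-(c * g i))) : p ≤ Real.exp (-(c * ⨆ i, g i)) := by
  rcases hc.eq_or_lt with rfl | hc
  · simpa using h (Classical.arbitrary ι)
  rcases le_or_gt p 0 with hp | hp
  · exact hp.trans (Real.exp_pos _).le
  have hg : ∀ i, g i ≤ -Real.log p / c := fun i => by
    rw [le_div_iff₀ hc]
    have := Real.log_le_log hp (h i)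
    rw [Real.log_exp] at this
    linarith
  have hsup : c * ⨆ i, g i ≤ -Real.log p := by
    rw [← le_div_iff₀' hc]
    exact ciSup_le hg
  calc p = Real.exp (Real.log p) := (Real.exp_log hp).symm
    _ ≤ _ := Real.exp_le_exp.2 (by linarith)

lemma cgf_nonneg_of_integral_eq_zero {Ω : Type*} [MeasurableSpace Ω] {μ : Measure Ω}
    [IsProbabilityMeasure μ] {X : Ω → ℝ} (hX : Integrable X μ) (h0 : μ[X] = 0) (t : ℝ) :
    0 ≤ cgf X μ t := by
  by_cases hexp : Integrable (fun ω => Real.exp (t * X ω)) μ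
  · refine Real.log_nonneg ?_
    have hjensen := ConvexOn.map_integral_le (g := Real.exp) convexOn_exp
      Real.continuous_exp.continuousOn isClosed_univ (by simp) (hX.const_mul t) hexp
    rwa [integral_const_mul, h0, mul_zero, Real.exp_zero] at hjensen
  · rw [cgf_undef hexp]

section Chernoff

variable {Ω ι : Type*} [MeasurableSpace Ω] {μ : Measure Ω} [IsProbabilityMeasure μ] [Fintype ι]
  {Z : ι → Ω → ℝ} {j : ι}

lemma measureReal_card_mul_le_sum_le (hindep : iIndepFun Z μ) (hmeas : ∀ i, Measurable (Z i))
    (hident : ∀ i, IdentDistrib (Z i) (Z j) μ μ) (hint : Integrable (Z j) μ) (hmean : μ[Z j] = 0)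
    (hexp : ∀ s, Integrable (fun ω => Real.exp (s * Z j ω)) μ) {t : ℝ} (ht : 0 ≤ t) :
    μ.real {ω | Fintype.card ι * t ≤ ∑ i, Z i ω}
      ≤ Real.exp (-(Fintype.card ι * ⨆ s, (s * t - cgf (Z j) μ s))) := by
  have hexp_all : ∀ s i, Integrable (fun ω => Real.exp (s * Z i ω)) μ := fun s i =>
    ((hident i).comp (measurable_const_mul s).exp).integrable_iff.2 (hexp s)
  have hcgf : ∀ i, cgf (Z i) μ = cgf (Z j) μ := fun i => by
    unfold cgf
    rw [mgf_congr_identDistrib (hident i)]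
  refine le_exp_neg_mul_iSup (by positivity) fun s => ?_
  rcases le_or_gt 0 s with hs | hs
  · have hchernoff := measure_ge_le_exp_cgf (X := ∑ i, Z i) (μ := μ) (Fintype.card ι * t) hs
      (hindep.integrable_exp_mul_sum hmeas fun i _ => hexp_all s i)
    rw [hindep.cgf_sum hmeas fun i _ => hexp_all s i] at hchernoff
    simp only [Finset.sum_apply, hcgf, Finset.sum_const, Finset.card_univ, nsmul_eq_mul]
      at hchernoff
    exact hchernoff.trans_eq (by ring_nf)
  -- for `s < 0` the bound is trivial: a centred variable has nonnegative cgf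
  · have hrate : s * t - cgf (Z j) μ s ≤ 0 := by
      nlinarith [cgf_nonneg_of_integral_eq_zero hint hmean s]
    refine measureReal_le_one.trans (Real.one_le_exp ?_)
    nlinarith

lemma measureReal_sum_le_neg_card_mul_le (hindep : iIndepFun Z μ)
    (hmeas : ∀ i, Measurable (Z i)) (hident : ∀ i, IdentDistrib (Z i) (Z j) μ μ)
    (hint : Integrable (Z j) μ) (hmean : μ[Z j] = 0)
    (hexp : ∀ s, Integrable (fun ω => Real.exp (s * Z j ω)) μ) {t : ℝ} (ht : 0 ≤ t) :
    μ.real {ω | ∑ i, Z i ω ≤ -(Fintype.card ι * t)}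
      ≤ Real.exp (-(Fintype.card ι * ⨆ s, (s * -t - cgf (Z j) μ s))) := by
  have hneg := measureReal_card_mul_le_sum_le (Z := fun i => -Z i)
    (hindep.comp (fun _ => Neg.neg) fun _ => measurable_neg) (fun i => (hmeas i).neg)
    (fun i => (hident i).comp measurable_neg) hint.neg (by rw [integral_neg', hmean, neg_zero])
    (fun s => by simpa [mul_neg, neg_mul] using hexp (-s)) ht
  have hset : {ω | ∑ i, Z i ω ≤ -(Fintype.card ι * t)}
      = {ω | Fintype.card ι * t ≤ ∑ i, (-Z i) ω} := by
    ext ω; simp [Finset.sum_neg_distrib, le_neg]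
  have hsup : ⨆ s, (s * -t - cgf (Z j) μ s) = ⨆ s, (s * t - cgf (-Z j) μ s) :=
    ((Equiv.neg ℝ).iSup_comp (g := fun s => s * -t - cgf (Z j) μ s)).symm.trans
      (by simp [cgf_neg])
  rw [hset, hsup]
  exact hneg

lemma measureReal_iUnion_card_mul_le_abs_sum_le {Θ : Type*} [Fintype Θ] {Z : Θ → ι → Ω → ℝ}
    (hindep : ∀ θ, iIndepFun (Z θ) μ) (hmeas : ∀ θ i, Measurable (Z θ i))
    (hident : ∀ θ i, IdentDistrib (Z θ i) (Z θ j) μ μ) (hint : ∀ θ, Integrable (Z θ j) μ)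
    (hmean : ∀ θ, μ[Z θ j] = 0)
    (hexp : ∀ θ s, Integrable (fun ω => Real.exp (s * Z θ j ω)) μ) {t r : ℝ} (ht : 0 ≤ t)
    (hr : ∀ θ, r ≤ min (⨆ s, (s * t - cgf (Z θ j) μ s)) (⨆ s, (s * -t - cgf (Z θ j) μ s))) :
    μ.real (⋃ θ, {ω | Fintype.card ι * t ≤ |∑ i, Z θ i ω|})
      ≤ Fintype.card Θ * (2 * Real.exp (-(Fintype.card ι * r))) := by
  have hexp_mono : ∀ a, r ≤ a →
      Real.exp (-(Fintype.card ι * a)) ≤ Real.exp (-(Fintype.card ι * r)) := fun a ha =>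
    Real.exp_le_exp.2 (by nlinarith [(Nat.cast_nonneg (Fintype.card ι) : (0 : ℝ) ≤ _)])
  have htail : ∀ θ, μ.real {ω | Fintype.card ι * t ≤ |∑ i, Z θ i ω|}
      ≤ 2 * Real.exp (-(Fintype.card ι * r)) := fun θ => by
    have hsplit : {ω | Fintype.card ι * t ≤ |∑ i, Z θ i ω|}
        ⊆ {ω | Fintype.card ι * t ≤ ∑ i, Z θ i ω} ∪ {ω | ∑ i, Z θ i ω ≤ -(Fintype.card ι * t)} :=
      fun _ hω => (le_abs'.1 (Set.mem_ofPred.1 hω)).symm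
    refine (measureReal_mono hsplit).trans ((measureReal_union_le _ _).trans ?_)
    rw [two_mul]
    gcongr
    · exact (measureReal_card_mul_le_sum_le (hindep θ) (hmeas θ) (hident θ) (hint θ) (hmean θ)
        (hexp θ) ht).trans (hexp_mono _ (le_min_iff.1 (hr θ)).1)
    · exact (measureReal_sum_le_neg_card_mul_le (hindep θ) (hmeas θ) (hident θ) (hint θ)
        (hmean θ) (hexp θ) ht).trans (hexp_mono _ (le_min_iff.1 (hr θ)).2)
  calc μ.real (⋃ θ, {ω | Fintype.card ι * t ≤ |∑ i, Z θ i ω|})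
      ≤ ∑ θ, μ.real {ω | Fintype.card ι * t ≤ |∑ i, Z θ i ω|} := measureReal_iUnion_fintype_le _
    _ ≤ ∑ _θ : Θ, 2 * Real.exp (-(Fintype.card ι * r)) := Finset.sum_le_sum fun θ _ => htail θ
    _ = Fintype.card Θ * (2 * Real.exp (-(Fintype.card ι * r))) := by simp

end Chernoff

section LabeledPairs

variable {Ω Ω' α β : Type*} [MeasurableSpace Ω] [MeasurableSpace Ω'] [MeasurableSpace α]
  [MeasurableSpace β] [Countable β] [MeasurableSingletonClass β]

lemma map_prodMk_apply_eq_tsum_cond {μ : Measure Ω} [IsFiniteMeasure μ] {X : Ω → α} {Y : Ω → β}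
    (hX : Measurable X) (hY : Measurable Y) {S : Set (α × β)} (hS : MeasurableSet S) :
    μ.map (fun ω => (X ω, Y ω)) S
      = ∑' k, (μ[|{ω | Y ω = k}]).map X ((fun x => (x, k)) ⁻¹' S) * μ {ω | Y ω = k} := by
  have hfiber : ∀ k, MeasurableSet ((fun x : α => (x, k)) ⁻¹' S) := fun k =>
    measurable_prodMk_right hS
  have hlevel : ∀ k, MeasurableSet {ω | Y ω = k} := fun k => hY (measurableSet_singleton k)
  have hpre : (fun ω => (X ω, Y ω)) ⁻¹' S
      = ⋃ k, {ω | Y ω = k} ∩ X ⁻¹' ((fun x => (x, k)) ⁻¹' S) := by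
    ext ω; simp
  have hdisj : Pairwise (Function.onFun Disjoint
      fun k => {ω | Y ω = k} ∩ X ⁻¹' ((fun x => (x, k)) ⁻¹' S)) :=
    fun k k' hne => Set.disjoint_left.2 fun _ h h' => hne (h.1.symm.trans h'.1)
  rw [Measure.map_apply (hX.prodMk hY) hS, hpre,
    measure_iUnion hdisj fun k => (hlevel k).inter (hX (hfiber k))]
  refine tsum_congr fun k => ?_
  rw [Measure.map_apply hX (hfiber k), cond_mul_eq_inter (hlevel k)]

lemma identDistrib_prodMk_of_cond {μ : Measure Ω} {μ' : Measure Ω'} [IsFiniteMeasure μ]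
    [IsFiniteMeasure μ'] {X : Ω → α} {Y : Ω → β} {X' : Ω' → α} {Y' : Ω' → β}
    (hX : Measurable X) (hY : Measurable Y) (hX' : Measurable X') (hY' : Measurable Y')
    (hlabel : ∀ k, μ {ω | Y ω = k} = μ' {ω | Y' ω = k})
    (hcond : ∀ k, (μ[|{ω | Y ω = k}]).map X = (μ'[|{ω | Y' ω = k}]).map X') :
    IdentDistrib (fun ω => (X ω, Y ω)) (fun ω => (X' ω, Y' ω)) μ μ' where
  aemeasurable_fst := (hX.prodMk hY).aemeasurable
  aemeasurable_snd := (hX'.prodMk hY').aemeasurable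
  map_eq := by
    ext S hS
    simp only [map_prodMk_apply_eq_tsum_cond hX hY hS, map_prodMk_apply_eq_tsum_cond hX' hY' hS,
      hlabel, hcond]

end LabeledPairs

lemma one_sub_measureReal_le_of_compl_subset {Ω : Type*} [MeasurableSpace Ω] {μ : Measure Ω}
    [IsProbabilityMeasure μ] {s t : Set Ω} (h : sᶜ ⊆ t) : 1 - μ.real t ≤ μ.real s := by
  have := (measureReal_union_le (μ := μ) s sᶜ).trans (add_le_add_right (measureReal_mono h) _)
  rw [Set.union_compl_self, probReal_univ] at this
  linarith

lemma add_le_of_eq_sub_iSup_ne {Θ : Type*} [Finite Θ] {L : Θ → ℝ} {θ₀ θ : Θ} {Δ : ℝ}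
    (hΔ : Δ = L θ₀ - ⨆ θ : {θ // θ ≠ θ₀}, L θ.1) (hθ : θ ≠ θ₀) : L θ + Δ ≤ L θ₀ := by
  have := le_ciSup (f := fun θ : {θ // θ ≠ θ₀} => L θ.1) (Set.finite_range _).bddAbove ⟨θ, hθ⟩
  linarith

lemma sum_lt_sum_of_abs_sum_sub_lt {Θ ι : Type*} [Fintype ι] {g : Θ → ι → ℝ} {m : Θ → ℝ}
    {θ θ₀ : Θ} {c : ℝ} (hθ : |∑ i, (g θ i - m θ)| < Fintype.card ι * c)
    (hθ₀ : |∑ i, (g θ₀ i - m θ₀)| < Fintype.card ι * c) (hgap : m θ + 2 * c ≤ m θ₀) :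
    ∑ i, g θ i < ∑ i, g θ₀ i := by
  rw [abs_lt] at hθ hθ₀
  simp only [Finset.sum_sub_distrib, Finset.sum_const, Finset.card_univ, nsmul_eq_mul] at hθ hθ₀
  have hcard : (0 : ℝ) ≤ Fintype.card ι := Nat.cast_nonneg _
  nlinarith

lemma factorial_le_exp_mul_log (K : ℕ) : (K.factorial : ℝ) ≤ Real.exp (K * Real.log K) := by
  rcases K.eq_zero_or_pos with rfl | hK
  · simp
  rw [Real.exp_nat_mul, Real.exp_log (by exact_mod_cast hK)]
  exact_mod_cast K.factorial_le_pow

lemma factorial_mul_two_mul_exp_neg_le {K : ℕ} {n I δ : ℝ} (hI : 0 < I) (hδ : 0 < δ)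
    (hn : (K * Real.log K + Real.log (2 / δ)) / I ≤ n) :
    K.factorial * (2 * Real.exp (-(n * I))) ≤ δ := by
  rw [div_le_iff₀ hI] at hn
  calc (K.factorial : ℝ) * (2 * Real.exp (-(n * I)))
      ≤ Real.exp (K * Real.log K) * (2 * Real.exp (-(n * I))) := by
        gcongr; exact factorial_le_exp_mul_log K
    _ = δ * Real.exp (K * Real.log K + Real.log (2 / δ) - n * I) := by
        rw [sub_eq_add_neg, Real.exp_add, Real.exp_add, Real.exp_log (by positivity)]
        field_simp
    _ ≤ δ * 1 := by gcongr; rw [Real.exp_le_one_iff]; linarith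
    _ = δ := mul_one δ

theorem mle_sample_complexity_general
    {Ω : Type*} [MeasurableSpace Ω] (P : Measure Ω) [IsProbabilityMeasure P]
    (d K n : ℕ) (hn : 0 < n)
    -- true weights and class-conditional densities
    (lamstar : Fin K → ℝ) (fstar : Fin K → (Fin d → ℝ) → ℝ)
    -- i.i.d. labeled pairs from the true model
    (X : Fin n → Ω → (Fin d → ℝ)) (Y : Fin n → Ω → Fin K)
    (hX_meas : ∀ i, Measurable (X i)) (hY_meas : ∀ i, Measurable (Y i))
    (hindep : iIndepFun (fun i ω => (X i ω, Y i ω)) P)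
    (hY_law : ∀ i k, P {ω | Y i ω = k} = ENNReal.ofReal (lamstar k))
    (hcond_law : ∀ i k, Measure.map (X i) (P[|{ω | Y i ω = k}])
      = volume.withDensity (fun x => ENNReal.ofReal (fstar k x)))
    -- the mixing measure Λ with everywhere-positive component likelihoods
    (lam : Fin K → ℝ) (f : Fin K → (Fin d → ℝ) → ℝ)
    (hf_meas : ∀ b, Measurable (f b))
    -- expected log-likelihoods L(π), assumed finite
    (L : Equiv.Perm (Fin K) → ℝ)
    (hL_int : ∀ π : Equiv.Perm (Fin K), Integrable
      (fun ω => Real.log (lam (π (Y ⟨0, hn⟩ ω)) * f (π (Y ⟨0, hn⟩ ω)) (X ⟨0, hn⟩ ω))) P)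
    (hL : ∀ π : Equiv.Perm (Fin K),
      L π = ∫ ω, Real.log (lam (π (Y ⟨0, hn⟩ ω)) * f (π (Y ⟨0, hn⟩ ω)) (X ⟨0, hn⟩ ω)) ∂P)
    -- the gap Δ
    (Δ : ℝ) (hΔ : Δ = L 1 - ⨆ π : {π : Equiv.Perm (Fin K) // π ≠ 1}, L π.1)
    (hΔpos : 0 < Δ)
    -- centered log moment generating functions, assumed finite for all s
    (ψ : Equiv.Perm (Fin K) → ℝ → ℝ)
    (hψ_fin : ∀ (π : Equiv.Perm (Fin K)) (s : ℝ), Integrable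
      (fun ω => Real.exp (s * (Real.log (lam (π (Y ⟨0, hn⟩ ω)) * f (π (Y ⟨0, hn⟩ ω)) (X ⟨0, hn⟩ ω)) - L π))) P)
    (hψ : ∀ (π : Equiv.Perm (Fin K)) (s : ℝ), ψ π s
      = Real.log (∫ ω, Real.exp
          (s * (Real.log (lam (π (Y ⟨0, hn⟩ ω)) * f (π (Y ⟨0, hn⟩ ω)) (X ⟨0, hn⟩ ω)) - L π)) ∂P))
    -- Fenchel–Legendre duals and the rate I
    (ψstar : Equiv.Perm (Fin K) → ℝ → ℝ)
    (hψstar : ∀ π t, ψstar π t = ⨆ s : ℝ, (s * t - ψ π s))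
    (I : ℝ)
    (hI : I = ⨅ π : Equiv.Perm (Fin K), min (ψstar π (Δ / 3)) (ψstar π (-(Δ / 3))))
    (hIpos : 0 < I)
    -- sample size requirement
    (δ : ℝ) (hδ : δ ∈ Set.Ioo (0 : ℝ) 1)
    (hsize : ((K : ℝ) * Real.log K + Real.log (2 / δ)) / I ≤ (n : ℝ)) :
    1 - δ ≤ (P {ω | ∀ π : Equiv.Perm (Fin K), π ≠ 1 →
        (1 / (n : ℝ)) * ∑ i, Real.log (lam (π (Y i ω)) * f (π (Y i ω)) (X i ω))
          < (1 / (n : ℝ)) * ∑ i, Real.log (lam (Y i ω) * f (Y i ω) (X i ω))}).toReal := by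
  set i₀ : Fin n := ⟨0, hn⟩
  set ℓ : Equiv.Perm (Fin K) → (Fin d → ℝ) × Fin K → ℝ :=
    fun π p => Real.log (lam (π p.2) * f (π p.2) p.1)
  have hℓ : ∀ π, Measurable (ℓ π) := fun π =>
    measurable_from_prod_countable_left fun k => ((hf_meas (π k)).const_mul (lam (π k))).log
  set W : Equiv.Perm (Fin K) → Fin n → Ω → ℝ := fun π i ω => ℓ π (X i ω, Y i ω) - L π
  have hpair : ∀ i, IdentDistrib (fun ω => (X i ω, Y i ω)) (fun ω => (X i₀ ω, Y i₀ ω)) P P :=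
    fun i => identDistrib_prodMk_of_cond (hX_meas i) (hY_meas i) (hX_meas i₀) (hY_meas i₀)
      (fun k => (hY_law i k).trans (hY_law i₀ k).symm)
      (fun k => (hcond_law i k).trans (hcond_law i₀ k).symm)
  have hmean : ∀ π, P[W π i₀] = 0 := fun π => by
    show ∫ ω, (_ - L π) ∂P = 0
    rw [integral_sub (hL_int π) (integrable_const _), integral_const, hL π]
    simp
  have hψ_cgf : ∀ π s, ψ π s = cgf (W π i₀) P s := hψ
  have hrate : ∀ π, I ≤ min (⨆ s, (s * (Δ / 3) - cgf (W π i₀) P s))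
      (⨆ s, (s * -(Δ / 3) - cgf (W π i₀) P s)) := fun π => by
    have := ciInf_le (f := fun π => min (ψstar π (Δ / 3)) (ψstar π (-(Δ / 3))))
      (Set.finite_range _).bddBelow π
    rw [hI]
    simpa only [hψstar, hψ_cgf] using this
  have hdeviation := measureReal_iUnion_card_mul_le_abs_sum_le (μ := P) (Z := W) (j := i₀)
    (fun π => hindep.comp _ fun _ => (hℓ π).sub_const _)
    (fun π i => ((hℓ π).comp ((hX_meas i).prodMk (hY_meas i))).sub_const _)
    (fun π i => (hpair i).comp ((hℓ π).sub_const _)) (fun π => (hL_int π).sub (integrable_const _))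
    hmean hψ_fin (by positivity) hrate
  simp only [Fintype.card_fin, Fintype.card_perm] at hdeviation
  rw [← measureReal_def]
  refine le_trans ?_ (one_sub_measureReal_le_of_compl_subset
    (t := ⋃ π, {ω | n * (Δ / 3) ≤ |∑ i, W π i ω|}) ?_)
  · linarith [factorial_mul_two_mul_exp_neg_le hIpos hδ.1 hsize]
  rw [Set.compl_subset_comm]
  intro ω hω π hπ
  simp only [Set.mem_compl_iff, Set.mem_iUnion, Set.mem_ofPred_eq, not_exists, not_le] at hω
  refine mul_lt_mul_of_pos_left ?_ (by positivity)
  have := sum_lt_sum_of_abs_sum_sub_lt (g := fun π i => ℓ π (X i ω, Y i ω)) (c := Δ / 3)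
    (by simpa only [Fintype.card_fin] using hω π) (by simpa only [Fintype.card_fin] using hω 1)
    (by linarith [add_le_of_eq_sub_iSup_ne hΔ hπ])
  simpa [ℓ] using this

/-- **Corollary 1 (labeled sample complexity of the MLE).**
I.i.d. labeled pairs `(X i, Y i)` from the true model; a mixing measure `(lam, f)` with
`lam b * f b x > 0` everywhere; `L π = E[log(lam_{π(Y)} f_{π(Y)}(X))]` (assumed integrable);
gap `Δ = L(id) - max_{π ≠ id} L(π) > 0`; centered log-mgfs `ψ π` (assumed finite for all `s`)
with Fenchel–Legendre duals `ψstar π`, and `I = inf_π min(ψ*_π(Δ/3), ψ*_π(-Δ/3)) > 0`.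
If `δ ∈ (0,1)` and `n ≥ (K log K + log(2/δ)) / I`, then with probability at least `1 - δ`
the identity is the unique maximizer of the empirical log-likelihood over permutations. -/
theorem mle_sample_complexity
    {Ω : Type*} [MeasurableSpace Ω] (P : Measure Ω) [IsProbabilityMeasure P]
    (d K n : ℕ) (hK : 2 ≤ K) (hn : 0 < n)
    -- true weights and class-conditional densities
    (lamstar : Fin K → ℝ) (fstar : Fin K → (Fin d → ℝ) → ℝ)
    (hlamstar_pos : ∀ k, 0 < lamstar k) (hlamstar_sum : ∑ k, lamstar k = 1)
    (hfstar_meas : ∀ k, Measurable (fstar k))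
    (hfstar_nonneg : ∀ k x, 0 ≤ fstar k x)
    (hfstar_int : ∀ k, ∫ x, fstar k x = 1)
    -- i.i.d. labeled pairs from the true model
    (X : Fin n → Ω → (Fin d → ℝ)) (Y : Fin n → Ω → Fin K)
    (hX_meas : ∀ i, Measurable (X i)) (hY_meas : ∀ i, Measurable (Y i))
    (hindep : iIndepFun (fun i ω => (X i ω, Y i ω)) P)
    (hY_law : ∀ i k, P {ω | Y i ω = k} = ENNReal.ofReal (lamstar k))
    (hcond_law : ∀ i k, Measure.map (X i) (P[|{ω | Y i ω = k}])
      = volume.withDensity (fun x => ENNReal.ofReal (fstar k x)))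
    -- the mixing measure Λ with everywhere-positive component likelihoods
    (lam : Fin K → ℝ) (f : Fin K → (Fin d → ℝ) → ℝ)
    (hlam_pos : ∀ b, 0 < lam b) (hlam_sum : ∑ b, lam b = 1)
    (hf_meas : ∀ b, Measurable (f b))
    (hf_nonneg : ∀ b x, 0 ≤ f b x) (hf_int : ∀ b, ∫ x, f b x = 1)
    (hpos : ∀ b x, 0 < lam b * f b x)
    -- expected log-likelihoods L(π), assumed finite
    (L : Equiv.Perm (Fin K) → ℝ)
    (hL_int : ∀ π : Equiv.Perm (Fin K), Integrable
      (fun ω => Real.log (lam (π (Y ⟨0, hn⟩ ω)) * f (π (Y ⟨0, hn⟩ ω)) (X ⟨0, hn⟩ ω))) P)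
    (hL : ∀ π : Equiv.Perm (Fin K),
      L π = ∫ ω, Real.log (lam (π (Y ⟨0, hn⟩ ω)) * f (π (Y ⟨0, hn⟩ ω)) (X ⟨0, hn⟩ ω)) ∂P)
    -- the gap Δ
    (Δ : ℝ) (hΔ : Δ = L 1 - ⨆ π : {π : Equiv.Perm (Fin K) // π ≠ 1}, L π.1)
    (hΔpos : 0 < Δ)
    -- centered log moment generating functions, assumed finite for all s
    (ψ : Equiv.Perm (Fin K) → ℝ → ℝ)
    (hψ_fin : ∀ (π : Equiv.Perm (Fin K)) (s : ℝ), Integrable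
      (fun ω => Real.exp (s * (Real.log (lam (π (Y ⟨0, hn⟩ ω)) * f (π (Y ⟨0, hn⟩ ω)) (X ⟨0, hn⟩ ω)) - L π))) P)
    (hψ : ∀ (π : Equiv.Perm (Fin K)) (s : ℝ), ψ π s
      = Real.log (∫ ω, Real.exp
          (s * (Real.log (lam (π (Y ⟨0, hn⟩ ω)) * f (π (Y ⟨0, hn⟩ ω)) (X ⟨0, hn⟩ ω)) - L π)) ∂P))
    -- Fenchel–Legendre duals and the rate I
    (ψstar : Equiv.Perm (Fin K) → ℝ → ℝ)
    (hψstar : ∀ π t, ψstar π t = ⨆ s : ℝ, (s * t - ψ π s))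
    (I : ℝ)
    (hI : I = ⨅ π : Equiv.Perm (Fin K), min (ψstar π (Δ / 3)) (ψstar π (-(Δ / 3))))
    (hIpos : 0 < I)
    -- sample size requirement
    (δ : ℝ) (hδ : δ ∈ Set.Ioo (0 : ℝ) 1)
    (hsize : ((K : ℝ) * Real.log K + Real.log (2 / δ)) / I ≤ (n : ℝ)) :
    1 - δ ≤ (P {ω | ∀ π : Equiv.Perm (Fin K), π ≠ 1 →
        (1 / (n : ℝ)) * ∑ i, Real.log (lam (π (Y i ω)) * f (π (Y i ω)) (X i ω))
          < (1 / (n : ℝ)) * ∑ i, Real.log (lam (Y i ω) * f (Y i ω) (X i ω))}).toReal :=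
  mle_sample_complexity_general P d K n hn lamstar fstar X Y hX_meas hY_meas hindep hY_law hcond_law
    lam f hf_meas L hL_int hL Δ hΔ hΔpos ψ hψ_fin hψ ψstar hψstar I hI hIpos δ hδ hsize
end

section
/- Let (X_1,Y_1),...,(X_n,Y_n) be i.i.d. copies of (X,Y) from the true model, and let Λ = ((λ_b),(f_b)) be a mixing measure such that P(X ∈ D_b(Λ)) = 1/K for every b. Define the majority-vote gap Δ = min_b [ P(Y=b | X ∈ D_b(Λ)) − max_{j≠b} P(Y=j | X ∈ D_b(Λ)) ] and suppose Δ > 0. Let δ ∈ (0,1). If n ≥ 4K·( (9/(2Δ²))·log(4K²/δ) + log(2K/δ) ), then with probability at least 1 − δ, every decision region D_b(Λ) contains at least one sample and for every b the label b is the unique majority label among {Y_i : X_i ∈ D_b(Λ)} (that is, the majority-vote estimator π̂_MV equals the identity). In particular, Θ(K log K) labeled samples suffice to recover the true permutation with high probability. -/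
/-!
Fix a region `D b` and a wrong label `j ≠ b`. The difference between the number of samples
in `D b` labelled `j` and the number labelled `b` is a sum of `n` independent variables with
values in `{-1, 0, 1}`; by the gap assumption its mean is at most `-Δ / K`, while the variables
vanish outside `D b`, an event of probability `1 / K`. Using `exp x ≤ 1 + x + x²` in the
Chernoff bound at `t = Δ / 2`, the probability that `j` ties with or beats `b` is at most
`exp (-n Δ² / (4 K))`. Likewise `D b` receives no sample with probability at most
`exp (-n / (2 K))`. A union bound over the `K` regions and the `K²` pairs of labels then
costs at most `δ / 2 + δ / 4` for the given sample size.
-/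

open MeasureTheory ProbabilityTheory Real Finset
open scoped Classical

lemma exp_sub_one_le {x : ℝ} (hx : |x| ≤ 1) : exp x - 1 ≤ x + x ^ 2 := by
  linarith [(abs_le.1 (abs_exp_sub_one_sub_id_le hx)).2]

-- `t = Δ / 2` minimises the resulting bound `t² c - t Δ c`.
lemma chernoff_exponent_le_of_gap {p q c Δ : ℝ} (hp : 0 ≤ p) (hq : 0 ≤ q) (hΔ₀ : 0 ≤ Δ)
    (hsum : p + q ≤ c) (hgap : Δ * c ≤ q - p) :
    (exp (Δ / 2) - 1) * p + (exp (-(Δ / 2)) - 1) * q ≤ -(Δ ^ 2 * c / 4) := by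
  rcases (show 0 ≤ c by linarith).eq_or_lt with rfl | hc
  · obtain ⟨rfl, rfl⟩ : p = 0 ∧ q = 0 := ⟨by linarith, by linarith⟩
    simp
  have hΔ₂ : Δ ≤ 2 := by nlinarith
  have h₁ := exp_sub_one_le (x := Δ / 2) (by rw [abs_le]; constructor <;> linarith)
  have h₂ := exp_sub_one_le (x := -(Δ / 2)) (by rw [abs_le]; constructor <;> linarith)
  nlinarith [mul_le_mul_of_nonneg_right h₁ hp, mul_le_mul_of_nonneg_right h₂ hq]

lemma exp_neg_le_div_of_log_div_le {x m δ : ℝ} (hm : 0 < m) (hδ : 0 < δ) (h : log (m / δ) ≤ x) :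
    exp (-x) ≤ δ / m :=
  calc exp (-x) ≤ exp (-log (m / δ)) := exp_le_exp.2 (neg_le_neg h)
    _ = δ / m := by rw [exp_neg, exp_log (div_pos hm hδ), inv_div]

lemma log_le_of_sample_size {K n Δ L₁ L₂ : ℝ} (hK : 0 < K) (hΔ : 0 < Δ) (hL₁ : 0 ≤ L₁)
    (hL₂ : 0 ≤ L₂) (h : 4 * K * ((9 / (2 * Δ ^ 2)) * L₁ + L₂) ≤ n) :
    L₁ ≤ n * (Δ ^ 2 * K⁻¹ / 4) ∧ L₂ ≤ n * K⁻¹ / 2 := by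
  have h₁ : 18 * K * L₁ ≤ n * Δ ^ 2 := by
    have := mul_le_mul_of_nonneg_right h (sq_nonneg Δ)
    field_simp at this
    nlinarith [mul_nonneg hK.le hL₂, sq_nonneg Δ]
  have h₂ : 4 * K * L₂ ≤ n := by
    have : 0 ≤ 9 / (2 * Δ ^ 2) * L₁ := by positivity
    nlinarith
  constructor
  · rw [show n * (Δ ^ 2 * K⁻¹ / 4) = n * Δ ^ 2 / (4 * K) by field_simp, le_div_iff₀ (by positivity)]
    nlinarith
  · rw [show n * K⁻¹ / 2 = n / (2 * K) by field_simp, le_div_iff₀ (by positivity)]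
    nlinarith

lemma sample_size_union_bound_le {K n Δ δ : ℝ} (hK : 1 ≤ K) (hΔ : 0 < Δ) (hδ : δ ∈ Set.Ioo 0 1)
    (hn : 4 * K * ((9 / (2 * Δ ^ 2)) * log (4 * K ^ 2 / δ) + log (2 * K / δ)) ≤ n) :
    K * exp (-(n * K⁻¹ / 2)) + K ^ 2 * exp (-(n * (Δ ^ 2 * K⁻¹ / 4))) ≤ δ := by
  obtain ⟨hδ₀, hδ₁⟩ := hδ
  have hlog : ∀ m : ℝ, 1 ≤ m → 0 ≤ log (m / δ) := fun m hm =>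
    log_nonneg ((one_le_div hδ₀).2 (by linarith))
  obtain ⟨hL₁, hL₂⟩ :=
    log_le_of_sample_size (by positivity) hΔ (hlog _ (by nlinarith)) (hlog _ (by linarith)) hn
  calc K * exp (-(n * K⁻¹ / 2)) + K ^ 2 * exp (-(n * (Δ ^ 2 * K⁻¹ / 4)))
      ≤ K * (δ / (2 * K)) + K ^ 2 * (δ / (4 * K ^ 2)) := by
        gcongr
        exacts [exp_neg_le_div_of_log_div_le (by positivity) hδ₀ hL₂,
          exp_neg_le_div_of_log_div_le (by positivity) hδ₀ hL₁]
    _ = 3 / 4 * δ := by field_simp; ring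
    _ ≤ δ := by linarith

section Chernoff

variable {Ω : Type*}

lemma exp_mul_indicator_sub_indicator {A B : Set Ω} (hAB : Disjoint A B) (t : ℝ) :
    (fun ω => exp (t * (A.indicator 1 ω - B.indicator 1 ω))) = fun ω =>
      1 + (exp t - 1) * A.indicator (1 : Ω → ℝ) ω + (exp (-t) - 1) * B.indicator 1 ω := by
  ext ω
  by_cases hA : ω ∈ A
  · simp [hA, Set.disjoint_left.1 hAB hA]
  · by_cases hB : ω ∈ B <;> simp [hA, hB]

variable [MeasurableSpace Ω] {P : Measure Ω} [IsProbabilityMeasure P] {A B : Set Ω}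

lemma integrable_exp_mul_indicator_sub_indicator (hA : MeasurableSet A) (hB : MeasurableSet B)
    (hAB : Disjoint A B) (t : ℝ) :
    Integrable (fun ω => exp (t * (A.indicator 1 ω - B.indicator 1 ω))) P := by
  rw [exp_mul_indicator_sub_indicator hAB]
  exact ((integrable_const (1 : ℝ)).add (((integrable_const 1).indicator hA).const_mul _)).add
    (((integrable_const 1).indicator hB).const_mul _)

lemma mgf_indicator_sub_indicator (hA : MeasurableSet A) (hB : MeasurableSet B)
    (hAB : Disjoint A B) (t : ℝ) :
    mgf (A.indicator 1 - B.indicator 1) P t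
      = 1 + (exp t - 1) * P.real A + (exp (-t) - 1) * P.real B := by
  have hIA : Integrable (fun ω => (exp t - 1) * A.indicator (1 : Ω → ℝ) ω) P :=
    ((integrable_const 1).indicator hA).const_mul _
  have hIB : Integrable (fun ω => (exp (-t) - 1) * B.indicator (1 : Ω → ℝ) ω) P :=
    ((integrable_const 1).indicator hB).const_mul _
  have hI1A : Integrable (fun ω => 1 + (exp t - 1) * A.indicator (1 : Ω → ℝ) ω) P :=
    (integrable_const 1).add hIA
  simp only [mgf, Pi.sub_apply]
  rw [exp_mul_indicator_sub_indicator hAB, integral_add hI1A hIB,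
    integral_add (integrable_const 1) hIA, integral_const_mul, integral_const_mul,
    integral_indicator_one hA, integral_indicator_one hB]
  simp

variable {ι E : Type*} [Fintype ι] [MeasurableSpace E] {ξ : ι → Ω → E} {A B : Set E}

lemma measureReal_card_le_card_le_exp (hξ : ∀ i, Measurable (ξ i)) (hind : iIndepFun ξ P)
    (hA : MeasurableSet A) (hB : MeasurableSet B) (hAB : Disjoint A B) {t : ℝ} (ht : 0 ≤ t) :
    P.real {ω | #{i | ξ i ω ∈ B} ≤ #{i | ξ i ω ∈ A}} ≤
      exp (∑ i, ((exp t - 1) * P.real (ξ i ⁻¹' A) + (exp (-t) - 1) * P.real (ξ i ⁻¹' B))) := by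
  set Z : ι → Ω → ℝ := fun i => (A.indicator 1 - B.indicator 1) ∘ ξ i
  have hZ : ∀ i, Z i = (ξ i ⁻¹' A).indicator 1 - (ξ i ⁻¹' B).indicator 1 := fun i => by
    ext ω; simp [Z, Set.indicator_apply]
  have hAi : ∀ i, MeasurableSet (ξ i ⁻¹' A) := fun i => hξ i hA
  have hBi : ∀ i, MeasurableSet (ξ i ⁻¹' B) := fun i => hξ i hB
  have hdisj : ∀ i, Disjoint (ξ i ⁻¹' A) (ξ i ⁻¹' B) := fun i => hAB.preimage (ξ i)
  have hZm : ∀ i, Measurable (Z i) := fun i => by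
    rw [hZ]; exact (measurable_const.indicator (hAi i)).sub (measurable_const.indicator (hBi i))
  have hZind : iIndepFun Z P :=
    hind.comp _ fun _ => (measurable_const.indicator hA).sub (measurable_const.indicator hB)
  have hevent : {ω | #{i | ξ i ω ∈ B} ≤ #{i | ξ i ω ∈ A}} = {ω | 0 ≤ (∑ i, Z i) ω} := by
    ext ω
    simp [hZ, Finset.sum_apply, Set.indicator_apply, Finset.sum_boole]
  calc P.real {ω | #{i | ξ i ω ∈ B} ≤ #{i | ξ i ω ∈ A}}
      ≤ mgf (∑ i, Z i) P t := by
        rw [hevent]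
        simpa using measure_ge_le_exp_mul_mgf 0 ht (hZind.integrable_exp_mul_sum hZm fun i _ =>
          hZ i ▸ integrable_exp_mul_indicator_sub_indicator (hAi i) (hBi i) (hdisj i) t)
    _ = ∏ i, mgf (Z i) P t := hZind.mgf_sum hZm _
    _ ≤ ∏ i, exp ((exp t - 1) * P.real (ξ i ⁻¹' A) + (exp (-t) - 1) * P.real (ξ i ⁻¹' B)) := by
        refine Finset.prod_le_prod (fun i _ => mgf_nonneg) fun i _ => ?_
        rw [hZ, mgf_indicator_sub_indicator (hAi i) (hBi i) (hdisj i)]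
        linarith [add_one_le_exp ((exp t - 1) * P.real (ξ i ⁻¹' A)
          + (exp (-t) - 1) * P.real (ξ i ⁻¹' B))]
    _ = _ := (exp_sum _ _).symm

lemma measureReal_card_eq_zero_le (hξ : ∀ i, Measurable (ξ i)) (hind : iIndepFun ξ P)
    (hB : MeasurableSet B) :
    P.real {ω | #{i | ξ i ω ∈ B} = 0} ≤ exp (-∑ i, P.real (ξ i ⁻¹' B) / 2) := by
  have h := measureReal_card_le_card_le_exp hξ hind MeasurableSet.empty hB
    (Set.empty_disjoint B) zero_le_one
  simp only [Set.mem_empty_iff_false, Finset.filter_false, Finset.card_empty,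
    nonpos_iff_eq_zero, Set.preimage_empty, measureReal_empty, mul_zero, zero_add] at h
  refine h.trans (exp_le_exp.2 ?_)
  rw [← Finset.sum_neg_distrib]
  refine Finset.sum_le_sum fun i _ => ?_
  nlinarith [exp_neg_one_lt_half, measureReal_nonneg (μ := P) (s := ξ i ⁻¹' B)]

lemma measureReal_card_le_card_le_of_gap (hξ : ∀ i, Measurable (ξ i)) (hind : iIndepFun ξ P)
    (hA : MeasurableSet A) (hB : MeasurableSet B) (hAB : Disjoint A B) {c Δ : ℝ}
    (hΔ₀ : 0 ≤ Δ) (hsum : ∀ i, P.real (ξ i ⁻¹' A) + P.real (ξ i ⁻¹' B) ≤ c)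
    (hgap : ∀ i, Δ * c ≤ P.real (ξ i ⁻¹' B) - P.real (ξ i ⁻¹' A)) :
    P.real {ω | #{i | ξ i ω ∈ B} ≤ #{i | ξ i ω ∈ A}} ≤
      exp (-(Fintype.card ι * (Δ ^ 2 * c / 4))) := by
  refine (measureReal_card_le_card_le_exp hξ hind hA hB hAB (t := Δ / 2) (by linarith)).trans
    (exp_le_exp.2 ?_)
  calc ∑ i, ((exp (Δ / 2) - 1) * P.real (ξ i ⁻¹' A) + (exp (-(Δ / 2)) - 1) * P.real (ξ i ⁻¹' B))
      ≤ ∑ _i : ι, -(Δ ^ 2 * c / 4) := Finset.sum_le_sum fun i _ =>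
        chernoff_exponent_le_of_gap measureReal_nonneg measureReal_nonneg hΔ₀ (hsum i) (hgap i)
    _ = -(Fintype.card ι * (Δ ^ 2 * c / 4)) := by simp

end Chernoff

section UnionBound

variable {Ω κ : Type*} [MeasurableSpace Ω] {P : Measure Ω} [IsProbabilityMeasure P] [Fintype κ]

lemma one_sub_le_measureReal_of_card_bounds {N : κ → Ω → ℕ} {M : κ → κ → Ω → ℕ} {ε₁ ε₂ : ℝ}
    (hN : ∀ b, P.real {ω | N b ω = 0} ≤ ε₁)
    (hM : ∀ b j, j ≠ b → P.real {ω | M b b ω ≤ M b j ω} ≤ ε₂) (hε₂ : 0 ≤ ε₂) :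
    1 - (Fintype.card κ * ε₁ + Fintype.card κ ^ 2 * ε₂) ≤
      P.real {ω | (∀ b, 1 ≤ N b ω) ∧ ∀ b j, j ≠ b → M b j ω < M b b ω} := by
  set G := {ω | (∀ b, 1 ≤ N b ω) ∧ ∀ b j, j ≠ b → M b j ω < M b b ω}
  have hcover : Gᶜ ⊆ (⋃ b, {ω | N b ω = 0}) ∪
      ⋃ b, ⋃ j ∈ ({b}ᶜ : Finset κ), {ω | M b b ω ≤ M b j ω} := by
    intro ω hω
    simp only [G, Set.mem_compl_iff, Set.mem_ofPred_eq, not_and_or, not_forall, not_lt,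
      Nat.not_le, Nat.lt_one_iff] at hω
    rcases hω with ⟨b, hb⟩ | ⟨b, j, hj, hle⟩
    · exact Or.inl (Set.mem_iUnion.2 ⟨b, hb⟩)
    · simp only [Set.mem_union, Set.mem_iUnion]
      exact Or.inr ⟨b, j, by simpa using hj, hle⟩
  have hbad : P.real Gᶜ ≤ Fintype.card κ * ε₁ + Fintype.card κ ^ 2 * ε₂ := calc
    P.real Gᶜ ≤ ∑ b, P.real {ω | N b ω = 0}
        + ∑ b, ∑ j ∈ ({b}ᶜ : Finset κ), P.real {ω | M b b ω ≤ M b j ω} :=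
      (measureReal_mono hcover).trans <| (measureReal_union_le _ _).trans <|
        add_le_add (measureReal_iUnion_fintype_le _) <| (measureReal_iUnion_fintype_le _).trans <|
          Finset.sum_le_sum fun b _ => measureReal_biUnion_finset_le _ _
    _ ≤ ∑ _b : κ, ε₁ + ∑ _b : κ, ∑ _j : κ, ε₂ := by
      gcongr with b _
      · exact hN b
      · exact (Finset.sum_le_sum fun j hj => hM b j (by simpa using hj)).trans
          (Finset.sum_le_sum_of_subset_of_nonneg (Finset.subset_univ _) fun _ _ _ => hε₂)
    _ = Fintype.card κ * ε₁ + Fintype.card κ ^ 2 * ε₂ := by simp; ring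
  have hcompl : 1 ≤ P.real G + P.real Gᶜ := by
    simpa [Set.union_compl_self] using measureReal_union_le (μ := P) G Gᶜ
  linarith

end UnionBound

lemma iInf_sub_iSup_le {ι : Type*} [Finite ι] (g : ι → ι → ℝ) {b j : ι} (hj : j ≠ b) :
    ⨅ b, (g b b - ⨆ j : {j // j ≠ b}, g b j) ≤ g b b - g b j :=
  (ciInf_le (Set.finite_range _).bddBelow b).trans <| sub_le_sub_left
    (le_ciSup (f := fun j : {j // j ≠ b} => g b j) (Set.finite_range _).bddAbove ⟨j, hj⟩) _

lemma toReal_cond_apply {Ω : Type*} [MeasurableSpace Ω] {P : Measure Ω} {s : Set Ω}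
    (hs : MeasurableSet s) (t : Set Ω) : (P[|s] t).toReal = (P.real s)⁻¹ * P.real (s ∩ t) := by
  rw [cond_apply hs, ENNReal.toReal_mul, ENNReal.toReal_inv]
  rfl

lemma measurableSet_decisionRegion {ι E : Type*} [Countable ι] [MeasurableSpace E] {lam : ι → ℝ}
    {f : ι → E → ℝ} (hf : ∀ b, Measurable (f b)) (b : ι) :
    MeasurableSet {x | ∀ j, j ≠ b → lam j * f j x < lam b * f b x} :=
  measurableSet_setOfPred.2 <| Measurable.forall fun j => Measurable.forall fun _ =>
    measurableSet_setOfPred.1 <| measurableSet_lt ((hf j).const_mul _) ((hf b).const_mul _)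

section LabeledSample

variable {Ω E α : Type*} [MeasurableSpace Ω] [MeasurableSpace E] [MeasurableSpace α]
  [MeasurableSingletonClass α] {P : Measure Ω} [IsFiniteMeasure P]

lemma measureReal_eq_sum_and_eq [Fintype α] {Y : Ω → α} (hY : Measurable Y) (p : Ω → Prop) :
    P.real {ω | p ω} = ∑ k, P.real {ω | p ω ∧ Y ω = k} := by
  have h := sum_measure_preimage_singleton (μ := P.restrict {ω | p ω}) Finset.univ
    fun k _ => hY (measurableSet_singleton k)
  simp only [Finset.coe_univ, Set.preimage_univ, Measure.restrict_apply_univ,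
    Measure.restrict_apply (hY (measurableSet_singleton _))] at h
  rw [measureReal_def, ← h, ENNReal.toReal_sum fun k _ => measure_ne_top _ _]
  refine Finset.sum_congr rfl fun k _ => ?_
  rw [Set.inter_comm]
  rfl

lemma measure_mem_and_eq_eq_of_map_cond {ι : Type*} {X : ι → Ω → E} {Y : ι → Ω → α}
    {ν : α → Measure E} (hX : ∀ i, Measurable (X i)) (hY : ∀ i, Measurable (Y i))
    (hY_law : ∀ i i' k, P {ω | Y i ω = k} = P {ω | Y i' ω = k})
    (hcond : ∀ i k, (P[|{ω | Y i ω = k}]).map (X i) = ν k) {S : Set E} (hS : MeasurableSet S)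
    (i i' : ι) (k : α) :
    P {ω | X i ω ∈ S ∧ Y i ω = k} = P {ω | X i' ω ∈ S ∧ Y i' ω = k} := by
  have h : ∀ i, P {ω | X i ω ∈ S ∧ Y i ω = k} = ν k S * P {ω | Y i ω = k} := fun i => by
    rw [← hcond i k, Measure.map_apply (hX i) hS,
      cond_mul_eq_inter (s := {ω | Y i ω = k}) (hY i (measurableSet_singleton k)), Set.inter_comm]
    rfl
  rw [h, h, hY_law i i' k]

end LabeledSample

section MajorityVote

variable {Ω ι κ E : Type*} [MeasurableSpace Ω] {P : Measure Ω} [IsProbabilityMeasure P]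
  [Fintype ι] [Fintype κ] [DecidableEq κ] [MeasurableSpace κ] [MeasurableSingletonClass κ]
  [MeasurableSpace E] {X : ι → Ω → E} {Y : ι → Ω → κ}

lemma one_sub_le_measureReal_majority_vote (hX : ∀ i, Measurable (X i))
    (hY : ∀ i, Measurable (Y i)) (hind : iIndepFun (fun i ω => (X i ω, Y i ω)) P)
    {D : κ → Set E} (hD : ∀ b, MeasurableSet (D b)) {q : κ → κ → ℝ}
    (hq : ∀ i b j, P.real {ω | X i ω ∈ D b ∧ Y i ω = j} = q b j) {c Δ : ℝ}
    (hc : ∀ b, ∑ j, q b j = c) (hΔ₀ : 0 ≤ Δ)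
    (hgap : ∀ b j, j ≠ b → Δ * c ≤ q b b - q b j) :
    1 - (Fintype.card κ * exp (-(Fintype.card ι * c / 2))
        + Fintype.card κ ^ 2 * exp (-(Fintype.card ι * (Δ ^ 2 * c / 4)))) ≤
      P.real {ω | (∀ b, 1 ≤ #{i | X i ω ∈ D b}) ∧
        ∀ b j, j ≠ b → #{i | X i ω ∈ D b ∧ Y i ω = j} < #{i | X i ω ∈ D b ∧ Y i ω = b}} := by
  have hξ : ∀ i, Measurable fun ω => (X i ω, Y i ω) := fun i => (hX i).prodMk (hY i)
  refine one_sub_le_measureReal_of_card_bounds (fun b => ?_) (fun b j hj => ?_) (by positivity)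
  · refine (measureReal_card_eq_zero_le hξ hind (measurable_fst (hD b))).trans_eq ?_
    have hregion : ∀ i, P.real {ω | X i ω ∈ D b} = c := fun i => by
      rw [measureReal_eq_sum_and_eq (hY i), ← hc b]
      exact Finset.sum_congr rfl fun j _ => hq i b j
    change exp (-∑ i, P.real {ω | X i ω ∈ D b} / 2) = _
    simp [hregion, mul_div_assoc]
  · have hqi : ∀ i k, P.real ((fun ω => (X i ω, Y i ω)) ⁻¹' D b ×ˢ {k}) = q b k :=
      fun i => hq i b
    refine (le_of_eq ?_).trans (measureReal_card_le_card_le_of_gap hξ hind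
      ((hD b).prod (measurableSet_singleton j)) ((hD b).prod (measurableSet_singleton b))
      (Set.disjoint_prod.2 (Or.inr (Set.disjoint_singleton.2 hj))) hΔ₀
      (fun i => ?_) (fun i => ?_))
    · -- the two events differ only in their decidability instances
      congr!
    · rw [hqi, hqi, ← hc b]
      exact Finset.add_le_sum (fun k _ => hqi i k ▸ measureReal_nonneg) (mem_univ _)
        (mem_univ _) hj
    · rw [hqi, hqi]
      exact hgap b j hj

end MajorityVote

theorem majority_vote_sample_complexity_general
    {Ω : Type*} [MeasurableSpace Ω] (P : Measure Ω) [IsProbabilityMeasure P]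
    (d K n : ℕ) (hK : 2 ≤ K) (hn : 0 < n)
    -- true weights and class-conditional densities
    (lamstar : Fin K → ℝ) (fstar : Fin K → (Fin d → ℝ) → ℝ)
    -- i.i.d. labeled pairs from the true model
    (X : Fin n → Ω → (Fin d → ℝ)) (Y : Fin n → Ω → Fin K)
    (hX_meas : ∀ i, Measurable (X i)) (hY_meas : ∀ i, Measurable (Y i))
    (hindep : iIndepFun (fun i ω => (X i ω, Y i ω)) P)
    (hY_law : ∀ i k, P {ω | Y i ω = k} = ENNReal.ofReal (lamstar k))
    (hcond_law : ∀ i k, Measure.map (X i) (P[|{ω | Y i ω = k}])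
      = volume.withDensity (fun x => ENNReal.ofReal (fstar k x)))
    -- the mixing measure Λ and its decision regions, each of probability 1/K
    (lam : Fin K → ℝ) (f : Fin K → (Fin d → ℝ) → ℝ)
    (hf_meas : ∀ b, Measurable (f b))
    (D : Fin K → Set (Fin d → ℝ))
    (hD : ∀ b, D b = {x | ∀ j, j ≠ b → lam j * f j x < lam b * f b x})
    (hD_prob : ∀ b, P {ω | X ⟨0, hn⟩ ω ∈ D b} = (K : ENNReal)⁻¹)
    -- the majority-vote gap Δ > 0
    (Δ : ℝ)
    (hΔ : Δ = ⨅ b : Fin K,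
      ((P[|{ω | X ⟨0, hn⟩ ω ∈ D b}] {ω | Y ⟨0, hn⟩ ω = b}).toReal
        - ⨆ j : {j : Fin K // j ≠ b},
            (P[|{ω | X ⟨0, hn⟩ ω ∈ D b}] {ω | Y ⟨0, hn⟩ ω = j.1}).toReal))
    (hΔpos : 0 < Δ)
    -- sample size requirement
    (δ : ℝ) (hδ : δ ∈ Set.Ioo (0 : ℝ) 1)
    (hsize : 4 * (K : ℝ) * ((9 / (2 * Δ ^ 2)) * Real.log (4 * (K : ℝ) ^ 2 / δ)
        + Real.log (2 * (K : ℝ) / δ)) ≤ (n : ℝ)) :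
    1 - δ ≤ (P {ω |
        (∀ b : Fin K, 1 ≤ (Finset.univ.filter (fun i => X i ω ∈ D b)).card) ∧
        (∀ b j : Fin K, j ≠ b →
          (Finset.univ.filter (fun i => X i ω ∈ D b ∧ Y i ω = j)).card
            < (Finset.univ.filter (fun i => X i ω ∈ D b ∧ Y i ω = b)).card)}).toReal := by
  set i₀ : Fin n := ⟨0, hn⟩
  have hK₀ : (0 : ℝ) < K := Nat.cast_pos.2 (by omega)
  have hDm : ∀ b, MeasurableSet (D b) := fun b => hD b ▸ measurableSet_decisionRegion hf_meas b
  set q : Fin K → Fin K → ℝ := fun b j => P.real {ω | X i₀ ω ∈ D b ∧ Y i₀ ω = j}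
  have hlaw : ∀ i b j, P.real {ω | X i ω ∈ D b ∧ Y i ω = j} = q b j := fun i b j =>
    congrArg ENNReal.toReal <| measure_mem_and_eq_eq_of_map_cond hX_meas hY_meas
      (fun i i' k => (hY_law i k).trans (hY_law i' k).symm) hcond_law (hDm b) i i₀ j
  have hsum : ∀ b, ∑ j, q b j = (K : ℝ)⁻¹ := fun b => by
    rw [← measureReal_eq_sum_and_eq (hY_meas i₀), measureReal_def, hD_prob]
    simp
  have hgap : ∀ b j, j ≠ b → Δ * (K : ℝ)⁻¹ ≤ q b b - q b j := fun b j hj => by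
    have h := iInf_sub_iSup_le (fun b j => (P[|{ω | X i₀ ω ∈ D b}] {ω | Y i₀ ω = j}).toReal) hj
    simp only [← hΔ, toReal_cond_apply (s := {ω | X i₀ ω ∈ D b}) (hX_meas i₀ (hDm b)),
      measureReal_def, hD_prob, ENNReal.toReal_inv, ENNReal.toReal_natCast, inv_inv] at h
    change Δ ≤ K * q b b - K * q b j at h
    rw [mul_inv_le_iff₀ hK₀]
    linarith
  refine le_trans ?_ (one_sub_le_measureReal_majority_vote hX_meas hY_meas hindep hDm hlaw hsum
    hΔpos.le hgap)
  simp only [Fintype.card_fin]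
  linarith [sample_size_union_bound_le (n := n) (by exact_mod_cast (by omega : 1 ≤ K)) hΔpos hδ
    hsize]

/-- **Corollary 2 (labeled sample complexity of majority vote).**
I.i.d. labeled pairs `(X i, Y i)` from the true model; a mixing measure `(lam, f)` whose
decision regions `D b` satisfy `P(X ∈ D b) = 1/K`; majority-vote gap `Δ > 0`.  If
`δ ∈ (0,1)` and `n ≥ 4K((9/(2Δ²)) log(4K²/δ) + log(2K/δ))`, then with probability at
least `1 - δ` every decision region contains at least one sample and, for every `b`,
the label `b` is the unique majority label among the samples falling in `D b`. -/
theorem majority_vote_sample_complexity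
    {Ω : Type*} [MeasurableSpace Ω] (P : Measure Ω) [IsProbabilityMeasure P]
    (d K n : ℕ) (hK : 2 ≤ K) (hn : 0 < n)
    -- true weights and class-conditional densities
    (lamstar : Fin K → ℝ) (fstar : Fin K → (Fin d → ℝ) → ℝ)
    (hlamstar_pos : ∀ k, 0 < lamstar k) (hlamstar_sum : ∑ k, lamstar k = 1)
    (hfstar_meas : ∀ k, Measurable (fstar k))
    (hfstar_nonneg : ∀ k x, 0 ≤ fstar k x)
    (hfstar_int : ∀ k, ∫ x, fstar k x = 1)
    -- i.i.d. labeled pairs from the true model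
    (X : Fin n → Ω → (Fin d → ℝ)) (Y : Fin n → Ω → Fin K)
    (hX_meas : ∀ i, Measurable (X i)) (hY_meas : ∀ i, Measurable (Y i))
    (hindep : iIndepFun (fun i ω => (X i ω, Y i ω)) P)
    (hY_law : ∀ i k, P {ω | Y i ω = k} = ENNReal.ofReal (lamstar k))
    (hcond_law : ∀ i k, Measure.map (X i) (P[|{ω | Y i ω = k}])
      = volume.withDensity (fun x => ENNReal.ofReal (fstar k x)))
    -- the mixing measure Λ and its decision regions, each of probability 1/K
    (lam : Fin K → ℝ) (f : Fin K → (Fin d → ℝ) → ℝ)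
    (hlam_pos : ∀ b, 0 < lam b) (hlam_sum : ∑ b, lam b = 1)
    (hf_meas : ∀ b, Measurable (f b))
    (hf_nonneg : ∀ b x, 0 ≤ f b x) (hf_int : ∀ b, ∫ x, f b x = 1)
    (D : Fin K → Set (Fin d → ℝ))
    (hD : ∀ b, D b = {x | ∀ j, j ≠ b → lam j * f j x < lam b * f b x})
    (hD_prob : ∀ b, P {ω | X ⟨0, hn⟩ ω ∈ D b} = (K : ENNReal)⁻¹)
    -- the majority-vote gap Δ > 0
    (Δ : ℝ)
    (hΔ : Δ = ⨅ b : Fin K,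
      ((P[|{ω | X ⟨0, hn⟩ ω ∈ D b}] {ω | Y ⟨0, hn⟩ ω = b}).toReal
        - ⨆ j : {j : Fin K // j ≠ b},
            (P[|{ω | X ⟨0, hn⟩ ω ∈ D b}] {ω | Y ⟨0, hn⟩ ω = j.1}).toReal))
    (hΔpos : 0 < Δ)
    -- sample size requirement
    (δ : ℝ) (hδ : δ ∈ Set.Ioo (0 : ℝ) 1)
    (hsize : 4 * (K : ℝ) * ((9 / (2 * Δ ^ 2)) * Real.log (4 * (K : ℝ) ^ 2 / δ)
        + Real.log (2 * (K : ℝ) / δ)) ≤ (n : ℝ)) :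
    1 - δ ≤ (P {ω |
        (∀ b : Fin K, 1 ≤ (Finset.univ.filter (fun i => X i ω ∈ D b)).card) ∧
        (∀ b j : Fin K, j ≠ b →
          (Finset.univ.filter (fun i => X i ω ∈ D b ∧ Y i ω = j)).card
            < (Finset.univ.filter (fun i => X i ω ∈ D b ∧ Y i ω = b)).card)}).toReal :=
  majority_vote_sample_complexity_general P d K n hK hn lamstar fstar X Y hX_meas hY_meas hindep
    hY_law hcond_law lam f hf_meas D hD hD_prob Δ hΔ hΔpos δ hδ hsize
end

section
/- Let (X,Y) be from the true model with true mixing measure Λ* = ((λ*_b),(f*_b)). Let Λ = ((λ_b),(f_b)) and Λ̂ = ((λ̂_b),(f̂_b)) be mixing measures, and suppose that for every b: |λ̂_b − λ_b| ≤ ε and d_TV(f̂_b, f_b) ≤ ε, where d_TV(f,g) = (1/2)∫|f−g| dx. Let ĝ be any measurable classifier with ĝ(x) ∈ argmax_b λ̂_b f̂_b(x) for almost every x, and g* any measurable classifier with g*(x) ∈ argmax_b λ*_b f*_b(x) for almost every x. Then P(ĝ(X) ≠ Y) ≤ P(g*(X) ≠ Y) + (K+2)·ε + Σ_{b=1}^K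 ( |λ_b − λ*_b| + 2 λ*_b · d_TV(f_b, f*_b) ). -/
open MeasureTheory ProbabilityTheory

/-!
Under the mixture model, `P(g(X) = Y) = ∫ λ*_{g(x)} f*_{g(x)}(x) dx` for every measurable
classifier `g`. Since `ĝ(x)` maximises `λ̂_b f̂_b(x)`, the integrand for `g*` exceeds the one
for `ĝ` by at most `∑_b |λ*_b f*_b(x) - λ̂_b f̂_b(x)|`. Each of these terms is split through
`λ_b f_b` by the triangle inequality in `L¹`, and
`∫ |λ_b f_b - λ̂_b f̂_b| ≤ |λ_b - λ̂_b| + λ̂_b ∫ |f_b - f̂_b| ≤ ε + 2 λ̂_b ε`,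
which sums to `(K + 2) ε` because `∑_b λ̂_b = 1`.
-/

lemma apply_comp_eq_sum_indicator {E ι : Type*} [Fintype ι] (a : ι → E → ℝ) (g : E → ι)
    (x : E) : a (g x) x = ∑ i, (g ⁻¹' {i}).indicator (a i) x := by
  classical
  simp [Set.indicator_apply, eq_comm]

lemma sub_le_sum_abs_sub {ι : Type*} [Fintype ι] {a b : ι → ℝ} {i j : ι} (hij : b i ≤ b j) :
    a i - a j ≤ ∑ k, |a k - b k| := by
  classical
  rcases eq_or_ne i j with rfl | hne
  · simpa using Finset.sum_nonneg fun k _ => abs_nonneg (a k - b k)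
  · have hpair : |a i - b i| + |a j - b j| ≤ ∑ k, |a k - b k| := by
      rw [← Finset.sum_pair (f := fun k => |a k - b k|) hne]
      exact Finset.sum_le_sum_of_subset_of_nonneg (Finset.subset_univ _)
        fun k _ _ => abs_nonneg _
    linarith [le_abs_self (a i - b i), neg_abs_le (a j - b j)]

section Integrals

variable {E : Type*} [MeasurableSpace E] {μ : Measure E}

lemma integral_abs_sub_le_add {u v w : E → ℝ} (hu : Integrable u μ) (hv : Integrable v μ)
    (hw : Integrable w μ) :
    ∫ x, |u x - w x| ∂μ ≤ ∫ x, |u x - v x| ∂μ + ∫ x, |v x - w x| ∂μ := by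
  have huv : Integrable (fun x => |u x - v x|) μ := (hu.sub hv).abs
  have hvw : Integrable (fun x => |v x - w x|) μ := (hv.sub hw).abs
  rw [← integral_add huv hvw]
  exact integral_mono (hu.sub hw).abs (huv.add hvw) fun x => abs_sub_le (u x) (v x) (w x)

lemma integral_abs_mul_sub_mul_le {u v : E → ℝ} (hu : 0 ≤ u) (hu_int : ∫ x, u x ∂μ = 1)
    (hv : Integrable v μ) (c : ℝ) {c' : ℝ} (hc' : 0 ≤ c') :
    ∫ x, |c * u x - c' * v x| ∂μ ≤ |c - c'| + c' * ∫ x, |u x - v x| ∂μ := by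
  have hui := integrable_of_integral_eq_one hu_int
  have hdiff : Integrable (fun x => |u x - v x|) μ := (hui.sub hv).abs
  have hpt : ∀ x, |c * u x - c' * v x| ≤ |c - c'| * u x + c' * |u x - v x| := fun x => by
    calc |c * u x - c' * v x| = |(c - c') * u x + c' * (u x - v x)| := by ring_nf
      _ ≤ |(c - c') * u x| + |c' * (u x - v x)| := abs_add_le _ _
      _ = |c - c'| * u x + c' * |u x - v x| := by
        rw [abs_mul, abs_mul, abs_of_nonneg (hu x), abs_of_nonneg hc']
  calc ∫ x, |c * u x - c' * v x| ∂μ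
      ≤ ∫ x, (|c - c'| * u x + c' * |u x - v x|) ∂μ :=
        integral_mono ((hui.const_mul c).sub (hv.const_mul c')).abs
          ((hui.const_mul _).add (hdiff.const_mul _)) hpt
    _ = |c - c'| + c' * ∫ x, |u x - v x| ∂μ := by
        rw [integral_add (hui.const_mul _) (hdiff.const_mul _), integral_const_mul,
          integral_const_mul, hu_int, mul_one]

lemma integral_abs_mul_sub_mul_le_of_density {f fstar fhat : E → ℝ} (hf : 0 ≤ f)
    (hf_int : ∫ x, f x ∂μ = 1) (hfstar : Integrable fstar μ) (hfhat : Integrable fhat μ)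
    (lam : ℝ) {lamstar lamhat : ℝ} (hlamstar : 0 ≤ lamstar) (hlamhat : 0 ≤ lamhat) :
    ∫ x, |lamstar * fstar x - lamhat * fhat x| ∂μ
      ≤ (|lam - lamstar| + lamstar * ∫ x, |f x - fstar x| ∂μ)
        + (|lam - lamhat| + lamhat * ∫ x, |f x - fhat x| ∂μ) := by
  have hfi := integrable_of_integral_eq_one hf_int
  calc ∫ x, |lamstar * fstar x - lamhat * fhat x| ∂μ
      ≤ ∫ x, |lam * f x - lamstar * fstar x| ∂μ + ∫ x, |lam * f x - lamhat * fhat x| ∂μ := by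
        simpa only [abs_sub_comm (lamstar * fstar _)] using
          integral_abs_sub_le_add (hfstar.const_mul lamstar) (hfi.const_mul lam)
            (hfhat.const_mul lamhat)
    _ ≤ _ := add_le_add (integral_abs_mul_sub_mul_le hf hf_int hfstar lam hlamstar)
        (integral_abs_mul_sub_mul_le hf hf_int hfhat lam hlamhat)

variable {ι : Type*} [Fintype ι] [MeasurableSpace ι] [MeasurableSingletonClass ι]

lemma integrable_apply_comp {a : ι → E → ℝ} (ha : ∀ i, Integrable (a i) μ) {g : E → ι}
    (hg : Measurable g) : Integrable (fun x => a (g x) x) μ := by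
  simp_rw [apply_comp_eq_sum_indicator a g]
  exact integrable_finsetSum _ fun i _ => (ha i).indicator (hg (measurableSet_singleton i))

lemma integral_apply_comp {a : ι → E → ℝ} (ha : ∀ i, Integrable (a i) μ) {g : E → ι}
    (hg : Measurable g) : ∫ x, a (g x) x ∂μ = ∑ i, ∫ x in g ⁻¹' {i}, a i x ∂μ := by
  simp_rw [apply_comp_eq_sum_indicator a g]
  rw [integral_finsetSum _ fun i _ => (ha i).indicator (hg (measurableSet_singleton i))]
  exact Finset.sum_congr rfl fun i _ => integral_indicator (hg (measurableSet_singleton i))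

lemma integral_apply_comp_sub_le {a b : ι → E → ℝ} (ha : ∀ i, Integrable (a i) μ)
    (hb : ∀ i, Integrable (b i) μ) {g h : E → ι} (hg : Measurable g) (hh : Measurable h)
    (hmax : ∀ᵐ x ∂μ, ∀ i, b i x ≤ b (h x) x) :
    ∫ x, a (g x) x ∂μ - ∫ x, a (h x) x ∂μ ≤ ∑ i, ∫ x, |a i x - b i x| ∂μ := by
  have hdiff : ∀ i, Integrable (fun x => |a i x - b i x|) μ := fun i => ((ha i).sub (hb i)).abs
  rw [← integral_sub (integrable_apply_comp ha hg) (integrable_apply_comp ha hh),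
    ← integral_finsetSum _ fun i _ => hdiff i]
  refine integral_mono_ae ((integrable_apply_comp ha hg).sub (integrable_apply_comp ha hh))
    (integrable_finsetSum _ fun i _ => hdiff i) ?_
  filter_upwards [hmax] with x hx
  simpa using sub_le_sum_abs_sub (a := fun i => a i x) (hx (g x))

end Integrals

section Classifier

variable {Ω E ι : Type*} [MeasurableSpace Ω] [MeasurableSpace E] [Fintype ι] [MeasurableSpace ι]
  [MeasurableSingletonClass ι] {P : Measure Ω} {X : Ω → E} {Y : Ω → ι} {g : E → ι}

lemma measure_comp_eq_eq_sum_cond [IsFiniteMeasure P] (hX : Measurable X) (hY : Measurable Y)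
    (hg : Measurable g) :
    P {ω | g (X ω) = Y ω} = ∑ k, P {ω | Y ω = k} * P[|{ω | Y ω = k}].map X (g ⁻¹' {k}) := by
  have hYk : ∀ k, MeasurableSet {ω | Y ω = k} := fun k => hY (measurableSet_singleton k)
  have hpart : {ω | g (X ω) = Y ω} = ⋃ k, {ω | Y ω = k} ∩ X ⁻¹' (g ⁻¹' {k}) := by
    ext ω
    simp [eq_comm]
  rw [hpart, measure_iUnion _ fun k => (hYk k).inter (hX (hg (measurableSet_singleton k))),
    tsum_fintype]
  · refine Finset.sum_congr rfl fun k _ => ?_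
    rw [Measure.map_apply hX (hg (measurableSet_singleton k)), mul_comm,
      cond_mul_eq_inter (hYk k)]
  · exact fun i j hij => Set.disjoint_left.2 fun ω hi hj => hij (hi.1.symm.trans hj.1)

lemma measureReal_comp_ne_eq_one_sub_integral [IsProbabilityMeasure P] {μ : Measure E}
    {w : ι → ℝ} {F : ι → E → ℝ} (hw : ∀ k, 0 ≤ w k) (hF : ∀ k x, 0 ≤ F k x)
    (hF_int : ∀ k, Integrable (F k) μ) (hX : Measurable X) (hY : Measurable Y)
    (hg : Measurable g) (hY_law : ∀ k, P {ω | Y ω = k} = ENNReal.ofReal (w k))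
    (hcond_law : ∀ k, P[|{ω | Y ω = k}].map X
      = μ.withDensity (fun x => ENNReal.ofReal (F k x))) :
    P.real {ω | g (X ω) ≠ Y ω} = 1 - ∫ x, w (g x) * F (g x) x ∂μ := by
  have hcell : ∀ k, P {ω | Y ω = k} * P[|{ω | Y ω = k}].map X (g ⁻¹' {k})
      = ENNReal.ofReal (∫ x in g ⁻¹' {k}, w k * F k x ∂μ) := fun k => by
    rw [hY_law, hcond_law, withDensity_apply _ (hg (measurableSet_singleton k)),
      ← ofReal_integral_eq_lintegral_ofReal (hF_int k).restrict
        (Filter.Eventually.of_forall (hF k)),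
      ← ENNReal.ofReal_mul (hw k), integral_const_mul]
  have hcell_nonneg : ∀ k, 0 ≤ ∫ x in g ⁻¹' {k}, w k * F k x ∂μ :=
    fun k => integral_nonneg fun x => mul_nonneg (hw k) (hF k x)
  have hcorrect : MeasurableSet {ω | g (X ω) = Y ω} := measurableSet_eq_fun (hg.comp hX) hY
  rw [← Set.compl_ofPred, probReal_compl_eq_one_sub hcorrect,
    integral_apply_comp (fun k => (hF_int k).const_mul (w k)) hg, measureReal_def,
    measure_comp_eq_eq_sum_cond hX hY hg, Finset.sum_congr rfl fun k _ => hcell k,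
    ← ENNReal.ofReal_sum_of_nonneg fun k _ => hcell_nonneg k,
    ENNReal.toReal_ofReal (Finset.sum_nonneg fun k _ => hcell_nonneg k)]

end Classifier

theorem ssl_classification_error_general
    {Ω : Type*} [MeasurableSpace Ω] (P : Measure Ω) [IsProbabilityMeasure P]
    (d K : ℕ)
    -- true weights and class-conditional densities
    (lamstar : Fin K → ℝ) (fstar : Fin K → (Fin d → ℝ) → ℝ)
    (hlamstar_pos : ∀ k, 0 < lamstar k)
    (hfstar_nonneg : ∀ k x, 0 ≤ fstar k x)
    (hfstar_int : ∀ k, ∫ x, fstar k x = 1)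
    -- the random pair (X, Y) from the true model
    (X : Ω → (Fin d → ℝ)) (Y : Ω → Fin K)
    (hX_meas : Measurable X) (hY_meas : Measurable Y)
    (hY_law : ∀ k, P {ω | Y ω = k} = ENNReal.ofReal (lamstar k))
    (hcond_law : ∀ k, Measure.map X (P[|{ω | Y ω = k}])
      = volume.withDensity (fun x => ENNReal.ofReal (fstar k x)))
    -- the population mixing measure Λ
    (lam : Fin K → ℝ) (f : Fin K → (Fin d → ℝ) → ℝ)
    (hf_nonneg : ∀ b x, 0 ≤ f b x) (hf_int : ∀ b, ∫ x, f b x = 1)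
    -- the estimated mixing measure Λ̂
    (lamhat : Fin K → ℝ) (fhat : Fin K → (Fin d → ℝ) → ℝ)
    (hlamhat_pos : ∀ b, 0 < lamhat b) (hlamhat_sum : ∑ b, lamhat b = 1)
    (hfhat_int : ∀ b, ∫ x, fhat b x = 1)
    -- Λ̂ is ε-close to Λ componentwise
    (ε : ℝ)
    (hlam_close : ∀ b, |lamhat b - lam b| ≤ ε)
    (hf_close : ∀ b, (1 / 2) * ∫ x, |fhat b x - f b x| ≤ ε)
    -- measurable a.e.-argmax classifiers for Λ̂ and Λ* respectively
    (gstar ghat : (Fin d → ℝ) → Fin K)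
    (hgstar_meas : Measurable gstar) (hghat_meas : Measurable ghat)
    (hghat : ∀ᵐ x ∂(volume : Measure (Fin d → ℝ)),
      ∀ b, lamhat b * fhat b x ≤ lamhat (ghat x) * fhat (ghat x) x) :
    (P {ω | ghat (X ω) ≠ Y ω}).toReal
      ≤ (P {ω | gstar (X ω) ≠ Y ω}).toReal + ((K : ℝ) + 2) * ε
        + ∑ b : Fin K, (|lam b - lamstar b|
            + 2 * lamstar b * ((1 / 2) * ∫ x, |f b x - fstar b x|)) := by
  have hint : ∀ {h : (Fin d → ℝ) → ℝ}, ∫ x, h x = 1 → Integrable h :=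
    integrable_of_integral_eq_one
  have herr : ∀ g : (Fin d → ℝ) → Fin K, Measurable g →
      (P {ω | g (X ω) ≠ Y ω}).toReal = 1 - ∫ x, lamstar (g x) * fstar (g x) x := fun g hg =>
    measureReal_comp_ne_eq_one_sub_integral (fun k => (hlamstar_pos k).le) hfstar_nonneg
      (fun k => hint (hfstar_int k)) hX_meas hY_meas hg hY_law hcond_law
  have hcmp := integral_apply_comp_sub_le (fun k => (hint (hfstar_int k)).const_mul (lamstar k))
    (fun k => (hint (hfhat_int k)).const_mul (lamhat k)) hgstar_meas hghat_meas hghat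
  have hclass : ∀ b, ∫ x, |lamstar b * fstar b x - lamhat b * fhat b x|
      ≤ (|lam b - lamstar b| + 2 * lamstar b * ((1 / 2) * ∫ x, |f b x - fstar b x|))
        + (ε + 2 * lamhat b * ε) := fun b => by
    have hb := integral_abs_mul_sub_mul_le_of_density (hf_nonneg b) (hf_int b)
      (hint (hfstar_int b)) (hint (hfhat_int b)) (lam b) (hlamstar_pos b).le (hlamhat_pos b).le
    have hdens : ∫ x, |f b x - fhat b x| ≤ 2 * ε := by
      simp_rw [abs_sub_comm (f b _)]
      linarith [hf_close b]
    rw [abs_sub_comm (lam b) (lamhat b)] at hb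
    linarith [hlam_close b, mul_le_mul_of_nonneg_left hdens (hlamhat_pos b).le]
  have htotal : ∑ b, ∫ x, |lamstar b * fstar b x - lamhat b * fhat b x|
      ≤ ((K : ℝ) + 2) * ε + ∑ b, (|lam b - lamstar b|
        + 2 * lamstar b * ((1 / 2) * ∫ x, |f b x - fstar b x|)) := by
    refine (Finset.sum_le_sum fun b _ => hclass b).trans_eq ?_
    rw [Finset.sum_add_distrib, Finset.sum_add_distrib (f := fun _ => ε), ← Finset.sum_mul,
      ← Finset.mul_sum, hlamhat_sum, Finset.sum_const, Finset.card_univ, Fintype.card_fin,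
      nsmul_eq_mul]
    ring
  rw [herr ghat hghat_meas, herr gstar hgstar_meas]
  linarith

/-- **Theorem 3 (classification error of the SSL classifier).**
For the true model with true mixing measure `Λ* = ((lamstar b), (fstar b))`, a population
mixing measure `Λ = ((lam b), (f b))` and an estimated mixing measure
`Λ̂ = ((lamhat b), (fhat b))` with `|lamhat b - lam b| ≤ ε` and `d_TV(fhat b, f b) ≤ ε`
for every `b`, any a.e.-argmax classifier `ghat` for `Λ̂` and Bayes classifier `gstar`
for `Λ*` satisfy
`P(ghat(X) ≠ Y) ≤ P(gstar(X) ≠ Y) + (K+2)ε + Σ_b (|lam b - lamstar b| + 2 lamstar b d_TV(f b, fstar b))`. -/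
theorem ssl_classification_error
    {Ω : Type*} [MeasurableSpace Ω] (P : Measure Ω) [IsProbabilityMeasure P]
    (d K : ℕ) (hK : 2 ≤ K)
    -- true weights and class-conditional densities
    (lamstar : Fin K → ℝ) (fstar : Fin K → (Fin d → ℝ) → ℝ)
    (hlamstar_pos : ∀ k, 0 < lamstar k) (hlamstar_sum : ∑ k, lamstar k = 1)
    (hfstar_meas : ∀ k, Measurable (fstar k))
    (hfstar_nonneg : ∀ k x, 0 ≤ fstar k x)
    (hfstar_int : ∀ k, ∫ x, fstar k x = 1)
    -- the random pair (X, Y) from the true model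
    (X : Ω → (Fin d → ℝ)) (Y : Ω → Fin K)
    (hX_meas : Measurable X) (hY_meas : Measurable Y)
    (hY_law : ∀ k, P {ω | Y ω = k} = ENNReal.ofReal (lamstar k))
    (hcond_law : ∀ k, Measure.map X (P[|{ω | Y ω = k}])
      = volume.withDensity (fun x => ENNReal.ofReal (fstar k x)))
    -- the population mixing measure Λ
    (lam : Fin K → ℝ) (f : Fin K → (Fin d → ℝ) → ℝ)
    (hlam_pos : ∀ b, 0 < lam b) (hlam_sum : ∑ b, lam b = 1)
    (hf_meas : ∀ b, Measurable (f b))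
    (hf_nonneg : ∀ b x, 0 ≤ f b x) (hf_int : ∀ b, ∫ x, f b x = 1)
    -- the estimated mixing measure Λ̂
    (lamhat : Fin K → ℝ) (fhat : Fin K → (Fin d → ℝ) → ℝ)
    (hlamhat_pos : ∀ b, 0 < lamhat b) (hlamhat_sum : ∑ b, lamhat b = 1)
    (hfhat_meas : ∀ b, Measurable (fhat b))
    (hfhat_nonneg : ∀ b x, 0 ≤ fhat b x) (hfhat_int : ∀ b, ∫ x, fhat b x = 1)
    -- Λ̂ is ε-close to Λ componentwise
    (ε : ℝ)
    (hlam_close : ∀ b, |lamhat b - lam b| ≤ ε)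
    (hf_close : ∀ b, (1 / 2) * ∫ x, |fhat b x - f b x| ≤ ε)
    -- measurable a.e.-argmax classifiers for Λ̂ and Λ* respectively
    (gstar ghat : (Fin d → ℝ) → Fin K)
    (hgstar_meas : Measurable gstar) (hghat_meas : Measurable ghat)
    (hgstar : ∀ᵐ x ∂(volume : Measure (Fin d → ℝ)),
      ∀ b, lamstar b * fstar b x ≤ lamstar (gstar x) * fstar (gstar x) x)
    (hghat : ∀ᵐ x ∂(volume : Measure (Fin d → ℝ)),
      ∀ b, lamhat b * fhat b x ≤ lamhat (ghat x) * fhat (ghat x) x) :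
    (P {ω | ghat (X ω) ≠ Y ω}).toReal
      ≤ (P {ω | gstar (X ω) ≠ Y ω}).toReal + ((K : ℝ) + 2) * ε
        + ∑ b : Fin K, (|lam b - lamstar b|
            + 2 * lamstar b * ((1 / 2) * ∫ x, |f b x - fstar b x|)) :=
  ssl_classification_error_general P d K lamstar fstar hlamstar_pos hfstar_nonneg hfstar_int X Y
    hX_meas hY_meas hY_law hcond_law lam f hf_nonneg hf_int lamhat fhat hlamhat_pos hlamhat_sum
    hfhat_int ε hlam_close hf_close gstar ghat hgstar_meas hghat_meas hghat
end

section
/- Let (X,Y) be from the true model with true mixing measure Λ* = ((λ*_b),(f*_b)). Let Λ̂ = ((λ̂_b),(f̂_b)) be a mixing measure, and suppose that for every b: |λ̂_b − λ*_b| ≤ ε and d_TV(f̂_b, f*_b) ≤ ε, where d_TV(f,g) = (1/2)∫|f−g| dx. Let ĝ be any measurable classifier with ĝ(x) ∈ argmax_b λ̂_b f̂_b(x) for almost every x, and g* any measurable classifier with g*(x) ∈ argmax_b λ*_b f*_b(x) for almost every x. Then the excess risk satisfies P(ĝ(X) ≠ Y) − P(g*(X) ≠ Y) ≤ (K+2)·ε.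 In particular, if the estimated mixing measure converges to the true mixing measure componentwise at rate r_m, the excess risk converges to zero at rate O(r_m). -/
open MeasureTheory ProbabilityTheory

lemma risk_formula
    {Ω : Type*} [MeasurableSpace Ω] (P : Measure Ω) [IsProbabilityMeasure P]
    {d K : ℕ}
    (lam : Fin K → ℝ) (f : Fin K → (Fin d → ℝ) → ℝ)
    (hlam_pos : ∀ k, 0 < lam k)
    (hf_nonneg : ∀ k x, 0 ≤ f k x)
    (hf_int : ∀ k, Integrable (f k))
    (X : Ω → (Fin d → ℝ)) (Y : Ω → Fin K)
    (hX_meas : Measurable X) (hY_meas : Measurable Y)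
    (hY_law : ∀ k, P {ω | Y ω = k} = ENNReal.ofReal (lam k))
    (hcond_law : ∀ k, Measure.map X (P[|{ω | Y ω = k}])
      = volume.withDensity (fun x => ENNReal.ofReal (f k x)))
    (g : (Fin d → ℝ) → Fin K) (hg : Measurable g) :
    (P {ω | g (X ω) ≠ Y ω}).toReal
      = 1 - ∑ k, ∫ x in {x | g x = k}, lam k * f k x := by
  have hsetY : ∀ k : Fin K, MeasurableSet {ω | Y ω = k} :=
    fun k => hY_meas (measurableSet_singleton k)
  have hA : ∀ k : Fin K, MeasurableSet {x | g x = k} :=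
    fun k => hg (measurableSet_singleton k)
  have key : ∀ k : Fin K, P ({ω | Y ω = k} ∩ X ⁻¹' {x | g x = k})
      = ENNReal.ofReal (∫ x in {x | g x = k}, lam k * f k x) := by
    intro k
    have hPs : P {ω | Y ω = k} = ENNReal.ofReal (lam k) := hY_law k
    have hne0 : P {ω | Y ω = k} ≠ 0 := by
      rw [hPs]; simpa [ENNReal.ofReal_eq_zero, not_le] using hlam_pos k
    have hnetop : P {ω | Y ω = k} ≠ ⊤ := measure_ne_top _ _
    have hcond : (P[|{ω | Y ω = k}]) (X ⁻¹' {x | g x = k})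
        = ∫⁻ x in {x | g x = k}, ENNReal.ofReal (f k x) := by
      rw [← Measure.map_apply hX_meas (hA k), hcond_law k, withDensity_apply _ (hA k)]
    have hst : P ({ω | Y ω = k} ∩ X ⁻¹' {x | g x = k})
        = P {ω | Y ω = k} * (P[|{ω | Y ω = k}]) (X ⁻¹' {x | g x = k}) := by
      rw [cond_apply (hsetY k) P, ← mul_assoc, ENNReal.mul_inv_cancel hne0 hnetop, one_mul]
    have hint : Integrable (fun x => f k x) (volume.restrict {x | g x = k}) :=
      (hf_int k).restrict
    rw [hst, hcond, hPs,
      ← ofReal_integral_eq_lintegral_ofReal hint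
        (Filter.Eventually.of_forall fun x => hf_nonneg k x),
      ← ENNReal.ofReal_mul (le_of_lt (hlam_pos k)), ← integral_const_mul]
  have hU : {ω | g (X ω) = Y ω} = ⋃ k, ({ω | Y ω = k} ∩ X ⁻¹' {x | g x = k}) := by
    ext ω
    simp only [Set.mem_setOf_eq, Set.mem_iUnion, Set.mem_inter_iff, Set.mem_preimage]
    constructor
    · intro h; exact ⟨Y ω, rfl, h⟩
    · rintro ⟨k, hk, hgk⟩; rw [hgk, hk]
  have hmeasU : ∀ k : Fin K, MeasurableSet ({ω | Y ω = k} ∩ X ⁻¹' {x | g x = k}) :=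
    fun k => (hsetY k).inter (hX_meas (hA k))
  have hdisj : Pairwise (Function.onFun Disjoint
      (fun k : Fin K => {ω | Y ω = k} ∩ X ⁻¹' {x | g x = k})) := by
    intro i j hij
    refine Set.disjoint_left.mpr ?_
    rintro ω ⟨hi, _⟩ ⟨hj, _⟩
    exact hij (hi.symm.trans hj)
  have hPeq : P {ω | g (X ω) = Y ω}
      = ENNReal.ofReal (∑ k, ∫ x in {x | g x = k}, lam k * f k x) := by
    rw [hU, measure_iUnion hdisj hmeasU, tsum_fintype,
      ENNReal.ofReal_sum_of_nonneg fun k _ =>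
        integral_nonneg fun x => mul_nonneg (hlam_pos k).le (hf_nonneg k x)]
    exact Finset.sum_congr rfl fun k _ => key k
  have hmeq : MeasurableSet {ω | g (X ω) = Y ω} := by
    rw [hU]; exact MeasurableSet.iUnion hmeasU
  have hSnn : 0 ≤ ∑ k, ∫ x in {x | g x = k}, lam k * f k x :=
    Finset.sum_nonneg fun k _ =>
      integral_nonneg fun x => mul_nonneg (hlam_pos k).le (hf_nonneg k x)
  have hle1 : ENNReal.ofReal (∑ k, ∫ x in {x | g x = k}, lam k * f k x) ≤ 1 := by
    rw [← hPeq]; exact prob_le_one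
  have hne : {ω | g (X ω) ≠ Y ω} = {ω | g (X ω) = Y ω}ᶜ := rfl
  rw [hne, prob_compl_eq_one_sub hmeq, hPeq,
    ENNReal.toReal_sub_of_le hle1 ENNReal.one_ne_top, ENNReal.toReal_one,
    ENNReal.toReal_ofReal hSnn]

/-- **Corollary 3 (convergence to the Bayes risk).**
For the true model with true mixing measure `Λ* = ((lamstar b), (fstar b))` and an
estimated mixing measure `Λ̂ = ((lamhat b), (fhat b))` with `|lamhat b - lamstar b| ≤ ε`
and `d_TV(fhat b, fstar b) ≤ ε` for every `b`, any a.e.-argmax classifier `ghat` for `Λ̂`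
and Bayes classifier `gstar` for `Λ*` satisfy the excess-risk bound
`P(ghat(X) ≠ Y) - P(gstar(X) ≠ Y) ≤ (K+2)ε`. -/
theorem excess_risk_rate
    {Ω : Type*} [MeasurableSpace Ω] (P : Measure Ω) [IsProbabilityMeasure P]
    (d K : ℕ) (hK : 2 ≤ K)
    -- true weights and class-conditional densities
    (lamstar : Fin K → ℝ) (fstar : Fin K → (Fin d → ℝ) → ℝ)
    (hlamstar_pos : ∀ k, 0 < lamstar k) (hlamstar_sum : ∑ k, lamstar k = 1)
    (hfstar_meas : ∀ k, Measurable (fstar k))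
    (hfstar_nonneg : ∀ k x, 0 ≤ fstar k x)
    (hfstar_int : ∀ k, ∫ x, fstar k x = 1)
    -- the random pair (X, Y) from the true model
    (X : Ω → (Fin d → ℝ)) (Y : Ω → Fin K)
    (hX_meas : Measurable X) (hY_meas : Measurable Y)
    (hY_law : ∀ k, P {ω | Y ω = k} = ENNReal.ofReal (lamstar k))
    (hcond_law : ∀ k, Measure.map X (P[|{ω | Y ω = k}])
      = volume.withDensity (fun x => ENNReal.ofReal (fstar k x)))
    -- the estimated mixing measure Λ̂, ε-close to Λ* componentwise
    (lamhat : Fin K → ℝ) (fhat : Fin K → (Fin d → ℝ) → ℝ)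
    (hlamhat_pos : ∀ b, 0 < lamhat b) (hlamhat_sum : ∑ b, lamhat b = 1)
    (hfhat_meas : ∀ b, Measurable (fhat b))
    (hfhat_nonneg : ∀ b x, 0 ≤ fhat b x) (hfhat_int : ∀ b, ∫ x, fhat b x = 1)
    (ε : ℝ)
    (hlam_close : ∀ b, |lamhat b - lamstar b| ≤ ε)
    (hf_close : ∀ b, (1 / 2) * ∫ x, |fhat b x - fstar b x| ≤ ε)
    -- measurable a.e.-argmax classifiers for Λ̂ and Λ* respectively
    (gstar ghat : (Fin d → ℝ) → Fin K)
    (hgstar_meas : Measurable gstar) (hghat_meas : Measurable ghat)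
    (hgstar : ∀ᵐ x ∂(volume : Measure (Fin d → ℝ)),
      ∀ b, lamstar b * fstar b x ≤ lamstar (gstar x) * fstar (gstar x) x)
    (hghat : ∀ᵐ x ∂(volume : Measure (Fin d → ℝ)),
      ∀ b, lamhat b * fhat b x ≤ lamhat (ghat x) * fhat (ghat x) x) :
    (P {ω | ghat (X ω) ≠ Y ω}).toReal - (P {ω | gstar (X ω) ≠ Y ω}).toReal
      ≤ ((K : ℝ) + 2) * ε := by
  have hfs_int : ∀ k, Integrable (fstar k) :=
    fun k => integrable_of_integral_eq_one (hfstar_int k)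
  have hfh_int : ∀ k, Integrable (fhat k) :=
    fun k => integrable_of_integral_eq_one (hfhat_int k)
  -- a pointwise representation of the "risk integrand" as a finite sum of indicators
  have hrepr : ∀ g : (Fin d → ℝ) → Fin K,
      (fun x => lamstar (g x) * fstar (g x) x)
        = (fun x => ∑ k, Set.indicator {x | g x = k}
            (fun x => lamstar k * fstar k x) x) := by
    intro g; ext x; symm
    rw [Finset.sum_eq_single (g x)]
    · simp
    · intro k _ hk
      exact Set.indicator_of_notMem (by simpa using hk.symm) _
    · simp
  have hIg : ∀ g : (Fin d → ℝ) → Fin K, Measurable g →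
      Integrable (fun x => lamstar (g x) * fstar (g x) x) := by
    intro g hg
    rw [hrepr g]
    exact integrable_finset_sum _ fun k _ =>
      ((hfs_int k).const_mul _).indicator (hg (measurableSet_singleton k))
  have hS : ∀ g : (Fin d → ℝ) → Fin K, Measurable g →
      (∑ k, ∫ x in {x | g x = k}, lamstar k * fstar k x)
        = ∫ x, lamstar (g x) * fstar (g x) x := by
    intro g hg
    have hA : ∀ k : Fin K, MeasurableSet {x | g x = k} :=
      fun k => hg (measurableSet_singleton k)
    have h1 : ∀ k : Fin K, (∫ x in {x | g x = k}, lamstar k * fstar k x)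
        = ∫ x, Set.indicator {x | g x = k} (fun x => lamstar k * fstar k x) x :=
      fun k => (integral_indicator (hA k)).symm
    simp_rw [h1]
    rw [← integral_finset_sum _ fun k _ =>
      ((hfs_int k).const_mul _).indicator (hA k)]
    exact (congrArg (MeasureTheory.integral volume) (hrepr g)).symm
  -- rewrite both risks
  rw [risk_formula P lamstar fstar hlamstar_pos hfstar_nonneg hfs_int X Y hX_meas
      hY_meas hY_law hcond_law ghat hghat_meas,
    risk_formula P lamstar fstar hlamstar_pos hfstar_nonneg hfs_int X Y hX_meas
      hY_meas hY_law hcond_law gstar hgstar_meas,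
    hS ghat hghat_meas, hS gstar hgstar_meas]
  -- it suffices to bound the difference of the two integrals
  have habs_int : ∀ b : Fin K,
      Integrable (fun x => |lamhat b * fhat b x - lamstar b * fstar b x|) :=
    fun b => (((hfh_int b).const_mul _).sub ((hfs_int b).const_mul _)).abs
  have hD_int : Integrable
      (fun x => ∑ b, |lamhat b * fhat b x - lamstar b * fstar b x|) :=
    integrable_finset_sum _ fun b _ => habs_int b
  -- pointwise a.e. bound
  have hpt : (fun x => lamstar (gstar x) * fstar (gstar x) x
        - lamstar (ghat x) * fstar (ghat x) x)
      ≤ᵐ[(volume : Measure (Fin d → ℝ))]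
      fun x => ∑ b, |lamhat b * fhat b x - lamstar b * fstar b x| := by
    filter_upwards [hghat] with x hx
    by_cases hgg : gstar x = ghat x
    · rw [hgg, sub_self]
      exact Finset.sum_nonneg fun b _ => abs_nonneg _
    · have h2 : lamhat (gstar x) * fhat (gstar x) x
          ≤ lamhat (ghat x) * fhat (ghat x) x := hx _
      have h3 := neg_le_abs (lamhat (gstar x) * fhat (gstar x) x
        - lamstar (gstar x) * fstar (gstar x) x)
      have h4 := le_abs_self (lamhat (ghat x) * fhat (ghat x) x
        - lamstar (ghat x) * fstar (ghat x) x)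
      calc lamstar (gstar x) * fstar (gstar x) x
            - lamstar (ghat x) * fstar (ghat x) x
          ≤ |lamhat (gstar x) * fhat (gstar x) x
              - lamstar (gstar x) * fstar (gstar x) x|
            + |lamhat (ghat x) * fhat (ghat x) x
              - lamstar (ghat x) * fstar (ghat x) x| := by linarith
        _ = ∑ b ∈ ({gstar x, ghat x} : Finset (Fin K)),
              |lamhat b * fhat b x - lamstar b * fstar b x| := by
            rw [Finset.sum_pair hgg]
        _ ≤ ∑ b, |lamhat b * fhat b x - lamstar b * fstar b x| :=
            Finset.sum_le_sum_of_subset_of_nonneg (Finset.subset_univ _)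
              fun b _ _ => abs_nonneg _
  have hmain : (∫ x, lamstar (gstar x) * fstar (gstar x) x)
      - (∫ x, lamstar (ghat x) * fstar (ghat x) x)
      ≤ ∫ x, ∑ b, |lamhat b * fhat b x - lamstar b * fstar b x| := by
    rw [← integral_sub (hIg gstar hgstar_meas) (hIg ghat hghat_meas)]
    exact integral_mono_ae ((hIg gstar hgstar_meas).sub (hIg ghat hghat_meas))
      hD_int hpt
  -- bound each term of the sum
  have hterm : ∀ b : Fin K,
      (∫ x, |lamhat b * fhat b x - lamstar b * fstar b x|)
        ≤ ε + lamstar b * (2 * ε) := by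
    intro b
    have habs : ∀ x, |lamhat b * fhat b x - lamstar b * fstar b x|
        ≤ |lamhat b - lamstar b| * fhat b x
          + lamstar b * |fhat b x - fstar b x| := by
      intro x
      have hrw : lamhat b * fhat b x - lamstar b * fstar b x
          = (lamhat b - lamstar b) * fhat b x
            + lamstar b * (fhat b x - fstar b x) := by ring
      rw [hrw]
      calc |(lamhat b - lamstar b) * fhat b x
            + lamstar b * (fhat b x - fstar b x)|
          ≤ |(lamhat b - lamstar b) * fhat b x|
            + |lamstar b * (fhat b x - fstar b x)| := abs_add_le _ _
        _ = |lamhat b - lamstar b| * fhat b x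
            + lamstar b * |fhat b x - fstar b x| := by
            rw [abs_mul, abs_mul, abs_of_nonneg (hfhat_nonneg b x),
              abs_of_nonneg (hlamstar_pos b).le]
    have hint1 : Integrable (fun x => |lamhat b - lamstar b| * fhat b x) :=
      (hfh_int b).const_mul _
    have hint2 : Integrable (fun x => lamstar b * |fhat b x - fstar b x|) :=
      (((hfh_int b).sub (hfs_int b)).abs).const_mul _
    calc (∫ x, |lamhat b * fhat b x - lamstar b * fstar b x|)
        ≤ ∫ x, (|lamhat b - lamstar b| * fhat b x
            + lamstar b * |fhat b x - fstar b x|) :=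
          integral_mono (habs_int b) (hint1.add hint2) habs
      _ = |lamhat b - lamstar b| * (∫ x, fhat b x)
          + lamstar b * ∫ x, |fhat b x - fstar b x| := by
          rw [integral_add hint1 hint2, integral_const_mul, integral_const_mul]
      _ ≤ ε + lamstar b * (2 * ε) := by
          rw [hfhat_int b, mul_one]
          have h2 : (∫ x, |fhat b x - fstar b x|) ≤ 2 * ε := by
            have := hf_close b; linarith
          have h1 := hlam_close b
          have := mul_le_mul_of_nonneg_left h2 (hlamstar_pos b).le
          linarith
  -- sum the bounds
  have hsum : (∫ x, ∑ b, |lamhat b * fhat b x - lamstar b * fstar b x|)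
      ≤ ((K : ℝ) + 2) * ε := by
    rw [integral_finset_sum _ fun b _ => habs_int b]
    calc (∑ b, ∫ x, |lamhat b * fhat b x - lamstar b * fstar b x|)
        ≤ ∑ b : Fin K, (ε + lamstar b * (2 * ε)) :=
          Finset.sum_le_sum fun b _ => hterm b
      _ = (K : ℝ) * ε + (∑ b, lamstar b) * (2 * ε) := by
          rw [Finset.sum_add_distrib, Finset.sum_const, Finset.card_univ,
            Fintype.card_fin, nsmul_eq_mul, ← Finset.sum_mul]
      _ = ((K : ℝ) + 2) * ε := by rw [hlamstar_sum]; ring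
  linarith
end

section
/- Fix labels y_1,...,y_n ∈ {1,...,K} with class counts n_k = #{i : y_i = k} ≥ 1 for every k, and let X_1,...,X_n be independent random vectors in ℝ^d where X_i has density f*_{y_i}. Let g_1,...,g_K : ℝ^d → ℝ be measurable functions. For b,k ∈ {1,...,K} let ν_{b,k} = E[g_b(X)] for X with density f*_k, assume the centered log-moment-generating function ψ_{b,k}(s) = log E[exp(s(g_b(X) − ν_{b,k}))] (X having density f*_k) is finite for all s ∈ ℝ, and set ψ*_{b,k}(t) = sup_{s∈ℝ}(st − ψ_{b,k}(s)). Then for every t > 0, the probability that simultaneously for every permutation π of {1,...,K} one has (1/n) Σ_{i=1}^n ( g_{π(y_i)}(X_i) − ν_{π(y_i), y_i} ) < t is at least 1 − K² exp( −(min_k n_k) · inf_{b,k} ψ*_{b,k}(t) ). -/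
/-!
For a fixed score `g_b` and class `k`, the centred scores `g_b(X_i) - ν_{b,k}` of the `n_k`
samples of class `k` are independent with common log-mgf `ψ_{b,k}`, so the Chernoff bound,
optimised over the exponent, gives
`P(∑_{y_i = k} (g_b(X_i) - ν_{b,k}) ≥ n_k t) ≤ exp(-n_k ψ*_{b,k}(t))`.
If the average of `g_{π(y_i)}(X_i) - ν_{π(y_i), y_i}` is at least `t` for some permutation `π`,
then splitting the sum by classes shows that one of these `K²` events occurs, with `b = π k`;
a union bound over the pairs `(b, k)` concludes.
-/

open MeasureTheory ProbabilityTheory Finset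

section

open Real

lemma le_exp_neg_mul_iSup_s9 {ι : Sort*} {q m : ℝ} {a : ι → ℝ} (hq0 : 0 ≤ q) (hq1 : q ≤ 1)
    (hm : 0 ≤ m) (h : ∀ u, a u ≤ 0 ∨ q ≤ exp (-(m * a u))) :
    q ≤ exp (-(m * ⨆ u, a u)) := by
  rcases hm.eq_or_lt with rfl | hm
  · simpa using hq1
  rcases hq0.eq_or_lt with rfl | hq
  · positivity
  have hlog : log q ≤ 0 := log_nonpos hq0 hq1
  suffices ⨆ u, a u ≤ -log q / m by
    rw [le_div_iff₀ hm] at this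
    calc q = exp (log q) := (exp_log hq).symm
      _ ≤ _ := exp_le_exp.2 (by linarith)
  refine Real.iSup_le (fun u => ?_) (div_nonneg (neg_nonneg.2 hlog) hm.le)
  rw [le_div_iff₀ hm]
  rcases h u with hu | hu
  · nlinarith
  · have := log_le_log hq hu
    rw [log_exp] at this
    linarith

lemma iSup_mul_sub_nonneg {ψ : ℝ → ℝ} (hψ : ψ 0 = 0) (t : ℝ) : 0 ≤ ⨆ u, (u * t - ψ u) := by
  by_cases hb : BddAbove (Set.range fun u => u * t - ψ u)
  · exact le_ciSup_of_le hb 0 (by simp [hψ])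
  · rw [Real.iSup_of_not_bddAbove hb]

section Chernoff

variable {Ω : Type*} [MeasurableSpace Ω] {P : Measure Ω}

lemma cgf_nonneg_of_integral_eq_zero_s9 [IsProbabilityMeasure P] {Y : Ω → ℝ} (hY : Integrable Y P)
    (hY0 : P[Y] = 0) (u : ℝ) : 0 ≤ cgf Y P u := by
  by_cases hexp : Integrable (fun ω => exp (u * Y ω)) P
  swap
  · rw [cgf_undef hexp]
  have hlin : Integrable (fun ω => 1 + u * Y ω) P := (integrable_const 1).add (hY.const_mul u)
  refine log_nonneg ?_
  calc (1 : ℝ) = ∫ ω, (1 + u * Y ω) ∂P := by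
        rw [integral_add (integrable_const 1) (hY.const_mul u), integral_const_mul, hY0]
        simp
    _ ≤ mgf Y P u := integral_mono hlin hexp fun ω => by linarith [add_one_le_exp (u * Y ω)]

theorem measureReal_card_mul_le_sum_le_s9 {ι : Type*} {Y : ι → Ω → ℝ} {s : Finset ι} {ψ : ℝ → ℝ}
    {t : ℝ} (hindep : iIndepFun Y P) (hmeas : ∀ i, Measurable (Y i)) (ht : 0 ≤ t)
    (hψ : ∀ u, 0 ≤ ψ u) (hint : ∀ i ∈ s, ∀ u, Integrable (fun ω => exp (u * Y i ω)) P)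
    (hcgf : ∀ i ∈ s, ∀ u, cgf (Y i) P u = ψ u) :
    P.real {ω | #s * t ≤ ∑ i ∈ s, Y i ω} ≤ exp (-(#s * ⨆ u, (u * t - ψ u))) := by
  have := hindep.isProbabilityMeasure
  refine le_exp_neg_mul_iSup_s9 measureReal_nonneg measureReal_le_one (Nat.cast_nonneg _) fun u => ?_
  rcases lt_or_ge u 0 with hu | hu
  · left
    nlinarith [hψ u]
  right
  calc P.real {ω | #s * t ≤ ∑ i ∈ s, Y i ω}
      ≤ exp (-u * (#s * t) + cgf (∑ i ∈ s, Y i) P u) := by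
        simpa only [Finset.sum_apply] using measure_ge_le_exp_cgf (#s * t) hu
          (hindep.integrable_exp_mul_sum hmeas fun i hi => hint i hi u)
    _ = exp (-(#s * (u * t - ψ u))) := by
        rw [hindep.cgf_sum hmeas fun i hi => hint i hi u, sum_congr rfl fun i hi => hcgf i hi u,
          sum_const, nsmul_eq_mul]
        ring_nf

end Chernoff

section Density

variable {Ω α : Type*} [MeasurableSpace Ω] [MeasurableSpace α] {P : Measure Ω} {μ : Measure α}
  {X : Ω → α} {f : α → ℝ}

lemma integral_comp_eq_integral_mul_density (hX : AEMeasurable X P) (hf : Measurable f)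
    (hf0 : ∀ x, 0 ≤ f x) (hlaw : P.map X = μ.withDensity fun x => ENNReal.ofReal (f x))
    {h : α → ℝ} (hh : Measurable h) : ∫ ω, h (X ω) ∂P = ∫ x, h x * f x ∂μ := by
  rw [← integral_map hX hh.aestronglyMeasurable, hlaw,
    integral_withDensity_eq_integral_toReal_smul hf.ennreal_ofReal
      (ae_of_all _ fun _ => ENNReal.ofReal_lt_top)]
  congr with x
  rw [ENNReal.toReal_ofReal (hf0 x), smul_eq_mul, mul_comm]

lemma integrable_comp_of_integrable_mul_density (hX : AEMeasurable X P) (hf : Measurable f)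
    (hf0 : ∀ x, 0 ≤ f x) (hlaw : P.map X = μ.withDensity fun x => ENNReal.ofReal (f x))
    {h : α → ℝ} (hint : Integrable (fun x => h x * f x) μ) : Integrable (fun ω => h (X ω)) P := by
  have hmap : Integrable h (P.map X) := by
    rw [hlaw, integrable_withDensity_iff_integrable_smul' hf.ennreal_ofReal
      (ae_of_all _ fun _ => ENNReal.ofReal_lt_top)]
    refine hint.congr (ae_of_all _ fun x => ?_)
    simp only [ENNReal.toReal_ofReal (hf0 x), smul_eq_mul, mul_comm]
  exact hmap.comp_aemeasurable hX

theorem measureReal_card_mul_le_sum_comp_sub_le {ι : Type*} {X : ι → Ω → α}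
    (hX : ∀ i, Measurable (X i)) (hindep : iIndepFun X P) {s : Finset ι} (hs : s.Nonempty)
    (hf : Measurable f) (hf0 : ∀ x, 0 ≤ f x)
    (hlaw : ∀ i ∈ s, P.map (X i) = μ.withDensity fun x => ENNReal.ofReal (f x))
    {g : α → ℝ} (hg : Measurable g) (hgf : Integrable (fun x => g x * f x) μ) {c : ℝ}
    (hc : ∫ x, g x * f x ∂μ = c)
    (hexp : ∀ u, Integrable (fun x => exp (u * (g x - c)) * f x) μ) {ψ : ℝ → ℝ}
    (hψ : ∀ u, ψ u = log (∫ x, exp (u * (g x - c)) * f x ∂μ)) {t : ℝ} (ht : 0 ≤ t) :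
    P.real {ω | #s * t ≤ ∑ i ∈ s, (g (X i ω) - c)} ≤ exp (-(#s * ⨆ u, (u * t - ψ u))) := by
  have hint : ∀ i ∈ s, ∀ u, Integrable (fun ω => exp (u * (g (X i ω) - c))) P := fun i hi u =>
    integrable_comp_of_integrable_mul_density (hX i).aemeasurable hf hf0 (hlaw i hi) (hexp u)
  have hcgf : ∀ i ∈ s, ∀ u, cgf (fun ω => g (X i ω) - c) P u = ψ u := fun i hi u => by
    simp only [hψ, cgf, mgf]
    rw [integral_comp_eq_integral_mul_density (h := fun x => exp (u * (g x - c)))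
      (hX i).aemeasurable hf hf0 (hlaw i hi) (by fun_prop)]
  have := hindep.isProbabilityMeasure
  obtain ⟨i₀, hi₀⟩ := hs
  have hψ_nonneg : ∀ u, 0 ≤ ψ u := fun u => by
    have hgX := integrable_comp_of_integrable_mul_density (hX i₀).aemeasurable hf hf0
      (hlaw i₀ hi₀) hgf
    rw [← hcgf i₀ hi₀ u]
    refine cgf_nonneg_of_integral_eq_zero_s9 (hgX.sub (integrable_const c)) ?_ u
    change ∫ ω, (g (X i₀ ω) - c) ∂P = 0
    rw [integral_sub hgX (integrable_const c),
      integral_comp_eq_integral_mul_density (hX i₀).aemeasurable hf hf0 (hlaw i₀ hi₀) hg, hc]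
    simp
  exact measureReal_card_mul_le_sum_le_s9 (hindep.comp _ fun _ => hg.sub measurable_const)
    (fun i => (hg.comp (hX i)).sub measurable_const) ht hψ_nonneg hint hcgf

end Density

lemma exists_card_fiber_mul_le_sum_fiber {ι κ : Type*} [Fintype ι] [Fintype κ] [DecidableEq κ]
    (y : ι → κ) (F : κ → ι → ℝ) {t : ℝ} (ht : 0 < t)
    (h : t ≤ 1 / (Fintype.card ι : ℝ) * ∑ i, F (y i) i) :
    ∃ k, (#{i | y i = k} : ℝ) * t ≤ ∑ i with y i = k, F k i := by
  rcases (Nat.cast_nonneg (α := ℝ) (Fintype.card ι)).eq_or_lt with hn | hn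
  · rw [← hn] at h
    simp at h
    linarith
  obtain ⟨i₀⟩ : Nonempty ι := Fintype.card_pos_iff.1 (by exact_mod_cast hn)
  have : Nonempty κ := ⟨y i₀⟩
  have hsum : ∑ k, (#{i | y i = k} : ℝ) * t ≤ ∑ k, ∑ i with y i = k, F k i := by
    rw [← sum_mul, ← Nat.cast_sum, ← card_eq_sum_card_fiberwise fun _ _ => mem_univ _, card_univ]
    calc (Fintype.card ι : ℝ) * t ≤ ∑ i, F (y i) i := by
          rw [one_div_mul_eq_div, le_div_iff₀ hn] at h
          linarith
      _ = ∑ k, ∑ i with y i = k, F k i := by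
          rw [← sum_fiberwise univ y fun i => F (y i) i]
          exact sum_congr rfl fun k _ => sum_congr rfl fun i hi => by rw [(mem_filter.1 hi).2]
  obtain ⟨k, -, hk⟩ := exists_le_of_sum_le univ_nonempty hsum
  exact ⟨k, hk⟩

lemma probReal_le_add_probReal_compl {Ω : Type*} [MeasurableSpace Ω] (P : Measure Ω)
    [IsProbabilityMeasure P] (E : Set Ω) : 1 ≤ P.real E + P.real Eᶜ := by
  simpa [Set.union_compl_self] using measureReal_union_le (μ := P) E Eᶜ

end

theorem uniform_chernoff_over_permutations_general
    {Ω : Type*} [MeasurableSpace Ω] (P : Measure Ω) [IsProbabilityMeasure P]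
    (d K n : ℕ)
    -- fixed labels with all class counts at least one
    (y : Fin n → Fin K)
    (hcount : ∀ k : Fin K, 1 ≤ (Finset.univ.filter (fun i => y i = k)).card)
    -- class-conditional densities on ℝ^d
    (fstar : Fin K → (Fin d → ℝ) → ℝ)
    (hfstar_meas : ∀ k, Measurable (fstar k))
    (hfstar_nonneg : ∀ k x, 0 ≤ fstar k x)
    (hfstar_int : ∀ k, ∫ x, fstar k x = 1)
    -- independent samples, X i has density fstar (y i)
    (X : Fin n → Ω → (Fin d → ℝ))
    (hX_meas : ∀ i, Measurable (X i))
    (hX_indep : iIndepFun X P)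
    (hX_law : ∀ i, Measure.map (X i) P
      = volume.withDensity (fun x => ENNReal.ofReal (fstar (y i) x)))
    -- measurable functions g b with per-class means ν b k
    (g : Fin K → (Fin d → ℝ) → ℝ)
    (hg_meas : ∀ b, Measurable (g b))
    (ν : Fin K → Fin K → ℝ)
    (hν_int : ∀ b k, Integrable (fun x => g b x * fstar k x))
    (hν : ∀ b k, ν b k = ∫ x, g b x * fstar k x)
    -- centered log moment generating functions, assumed finite for all s
    (ψ : Fin K → Fin K → ℝ → ℝ)
    (hψ_fin : ∀ b k s, Integrable (fun x => Real.exp (s * (g b x - ν b k)) * fstar k x))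
    (hψ : ∀ b k s, ψ b k s = Real.log (∫ x, Real.exp (s * (g b x - ν b k)) * fstar k x))
    -- Fenchel–Legendre duals
    (ψstar : Fin K → Fin K → ℝ → ℝ)
    (hψstar : ∀ b k t, ψstar b k t = ⨆ s : ℝ, (s * t - ψ b k s))
    (t : ℝ) (ht : 0 < t) :
    1 - (K : ℝ) ^ 2 *
        Real.exp (-((⨅ k : Fin K, ((Finset.univ.filter (fun i => y i = k)).card : ℝ)) *
          ⨅ bk : Fin K × Fin K, ψstar bk.1 bk.2 t))
      ≤ (P {ω | ∀ π : Equiv.Perm (Fin K),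
          (1 / (n : ℝ)) * ∑ i, (g (π (y i)) (X i ω) - ν (π (y i)) (y i)) < t}).toReal := by
  set bound := Real.exp (-((⨅ k : Fin K, (#{i | y i = k} : ℝ)) *
    ⨅ bk : Fin K × Fin K, ψstar bk.1 bk.2 t))
  set A : Fin K × Fin K → Set Ω := fun bk =>
    {ω | #{i | y i = bk.2} * t ≤ ∑ i with y i = bk.2, (g bk.1 (X i ω) - ν bk.1 bk.2)}
  have hψstar_inf_nonneg : 0 ≤ ⨅ bk : Fin K × Fin K, ψstar bk.1 bk.2 t :=
    Real.iInf_nonneg fun bk => by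
      rw [hψstar]
      exact iSup_mul_sub_nonneg (by simp [hψ, hfstar_int]) t
  have hA : ∀ bk, P.real (A bk) ≤ bound := by
    rintro ⟨b, k⟩
    refine (measureReal_card_mul_le_sum_comp_sub_le hX_meas hX_indep (card_pos.1 (hcount k))
      (hfstar_meas k) (hfstar_nonneg k) (fun i hi => (mem_filter.1 hi).2 ▸ hX_law i) (hg_meas b)
      (hν_int b k) (hν b k).symm (hψ_fin b k) (hψ b k) ht.le).trans ?_
    rw [← hψstar]
    refine Real.exp_le_exp.2 (neg_le_neg (mul_le_mul (ciInf_le (Finite.bddBelow_range _) k)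
      (ciInf_le (Finite.bddBelow_range _) (b, k)) hψstar_inf_nonneg (Nat.cast_nonneg _)))
  set E := {ω | ∀ π : Equiv.Perm (Fin K),
      (1 / (n : ℝ)) * ∑ i, (g (π (y i)) (X i ω) - ν (π (y i)) (y i)) < t}
  have hcover : Eᶜ ⊆ ⋃ bk, A bk := by
    intro ω hω
    simp only [E, Set.mem_compl_iff, Set.mem_ofPred_eq, not_forall, not_lt] at hω
    obtain ⟨π, hπ⟩ := hω
    obtain ⟨k, hk⟩ := exists_card_fiber_mul_le_sum_fiber y
      (fun k i => g (π k) (X i ω) - ν (π k) k) ht (by simpa using hπ)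
    exact Set.mem_iUnion.2 ⟨(π k, k), hk⟩
  calc 1 - (K : ℝ) ^ 2 * bound ≤ 1 - ∑ bk, P.real (A bk) := by
        gcongr
        simpa [sq] using sum_le_card_nsmul univ (fun bk => P.real (A bk)) bound fun bk _ => hA bk
    _ ≤ 1 - P.real (⋃ bk, A bk) := sub_le_sub_left (measureReal_iUnion_fintype_le _) 1
    _ ≤ 1 - P.real Eᶜ := sub_le_sub_left (measureReal_mono hcover (measure_ne_top P _)) 1
    _ ≤ P.real E := by linarith [probReal_le_add_probReal_compl P E]

/-- **Lemma 1 (uniform Chernoff bound over permutations), conditional on labels.**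
Fixed labels `y i ∈ Fin K` with every class count `n_k ≥ 1`, independent samples `X i`
where `X i` has density `fstar (y i)` on `ℝ^d`, and measurable functions `g b` with
per-class means `ν b k`, finite centered log-mgfs `ψ b k` and duals `ψstar b k`.
For every `t > 0`, with probability at least
`1 - K² exp(-(min_k n_k) · inf_{b,k} ψ*_{b,k}(t))`, simultaneously for every
permutation `π`, `(1/n) Σ_i (g_{π(y_i)}(X_i) - ν_{π(y_i), y_i}) < t`. -/
theorem uniform_chernoff_over_permutations
    {Ω : Type*} [MeasurableSpace Ω] (P : Measure Ω) [IsProbabilityMeasure P]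
    (d K n : ℕ) (hK : 2 ≤ K)
    -- fixed labels with all class counts at least one
    (y : Fin n → Fin K)
    (hcount : ∀ k : Fin K, 1 ≤ (Finset.univ.filter (fun i => y i = k)).card)
    -- class-conditional densities on ℝ^d
    (fstar : Fin K → (Fin d → ℝ) → ℝ)
    (hfstar_meas : ∀ k, Measurable (fstar k))
    (hfstar_nonneg : ∀ k x, 0 ≤ fstar k x)
    (hfstar_int : ∀ k, ∫ x, fstar k x = 1)
    -- independent samples, X i has density fstar (y i)
    (X : Fin n → Ω → (Fin d → ℝ))
    (hX_meas : ∀ i, Measurable (X i))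
    (hX_indep : iIndepFun X P)
    (hX_law : ∀ i, Measure.map (X i) P
      = volume.withDensity (fun x => ENNReal.ofReal (fstar (y i) x)))
    -- measurable functions g b with per-class means ν b k
    (g : Fin K → (Fin d → ℝ) → ℝ)
    (hg_meas : ∀ b, Measurable (g b))
    (ν : Fin K → Fin K → ℝ)
    (hν_int : ∀ b k, Integrable (fun x => g b x * fstar k x))
    (hν : ∀ b k, ν b k = ∫ x, g b x * fstar k x)
    -- centered log moment generating functions, assumed finite for all s
    (ψ : Fin K → Fin K → ℝ → ℝ)
    (hψ_fin : ∀ b k s, Integrable (fun x => Real.exp (s * (g b x - ν b k)) * fstar k x))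
    (hψ : ∀ b k s, ψ b k s = Real.log (∫ x, Real.exp (s * (g b x - ν b k)) * fstar k x))
    -- Fenchel–Legendre duals
    (ψstar : Fin K → Fin K → ℝ → ℝ)
    (hψstar : ∀ b k t, ψstar b k t = ⨆ s : ℝ, (s * t - ψ b k s))
    (t : ℝ) (ht : 0 < t) :
    1 - (K : ℝ) ^ 2 *
        Real.exp (-((⨅ k : Fin K, ((Finset.univ.filter (fun i => y i = k)).card : ℝ)) *
          ⨅ bk : Fin K × Fin K, ψstar bk.1 bk.2 t))
      ≤ (P {ω | ∀ π : Equiv.Perm (Fin K),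
          (1 / (n : ℝ)) * ∑ i, (g (π (y i)) (X i ω) - ν (π (y i)) (y i)) < t}).toReal :=
  uniform_chernoff_over_permutations_general P d K n y hcount fstar hfstar_meas hfstar_nonneg
    hfstar_int X hX_meas hX_indep hX_law g hg_meas ν hν_int hν ψ hψ_fin hψ ψstar hψstar t ht
end

section
/- Let Y_1,...,Y_n be i.i.d. random variables uniform on {1,...,K}, i.e. P(Y_i = k) = 1/K for every k, and let n_k = #{i : Y_i = k}. Then for every δ ∈ (0,1) and every real m ≥ 0: if n ≥ 4K·( m + log(K/δ) ), then P( min_k n_k ≥ m ) ≥ 1 − δ. -/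
/-! Each count `n_k` is a sum of `n` independent indicators of probability `1/K`. The Chernoff
bound at `t = -1`, with `1 + (e⁻¹ - 1) p ≤ exp (-p/2)`, gives `P(n_k ≤ m) ≤ exp (m - n/(2K))`,
which the sample size makes at most `δ/K`; a union bound over the `K` cells finishes. -/

open MeasureTheory ProbabilityTheory Real Finset

namespace ProbabilityTheory

variable {Ω ι : Type*} [MeasurableSpace Ω] {P : Measure Ω}

lemma iIndepFun.iIndepSet_preimage {β : Type*} [MeasurableSpace β] {Y : ι → Ω → β}
    (hY : iIndepFun Y P) (hY_meas : ∀ i, Measurable (Y i)) {B : ι → Set β}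
    (hB : ∀ i, MeasurableSet (B i)) : iIndepSet (fun i => Y i ⁻¹' B i) P := by
  have := hY.isProbabilityMeasure
  refine (iIndepSet_iff_meas_biInter fun i => hY_meas i (hB i)).2 fun s => ?_
  exact (iIndepFun_iff_measure_inter_preimage_eq_mul.1 hY) s (fun i _ => hB i)

variable [IsProbabilityMeasure P]

lemma mgf_indicator_one {E : Set Ω} (hE : MeasurableSet E) (t : ℝ) :
    mgf (E.indicator 1) P t = 1 + (exp t - 1) * P.real E := by
  have h : (fun ω => exp (t * E.indicator 1 ω)) =
      fun ω => E.indicator (fun _ => exp t - 1) ω + 1 := by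
    ext ω
    by_cases hω : ω ∈ E <;> simp [hω]
  rw [mgf, h, integral_add ((integrable_const _).indicator hE) (integrable_const 1),
    integral_indicator_const _ hE]
  simp only [integral_const, probReal_univ, smul_eq_mul]
  ring

lemma mgf_neg_one_indicator_one_le {E : Set Ω} (hE : MeasurableSet E) :
    mgf (E.indicator 1) P (-1) ≤ exp (-(P.real E / 2)) := by
  rw [mgf_indicator_one hE]
  have hPE : 0 ≤ P.real E := measureReal_nonneg
  calc 1 + (exp (-1) - 1) * P.real E ≤ -(P.real E / 2) + 1 := by
        nlinarith [exp_neg_one_lt_half]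
    _ ≤ exp (-(P.real E / 2)) := add_one_le_exp _

lemma measureReal_card_le_le_exp [Fintype ι] {E : ι → Set Ω} [∀ ω, DecidablePred (ω ∈ E ·)]
    (hE : ∀ i, MeasurableSet (E i)) (h_indep : iIndepSet E P) (m : ℝ) :
    P.real {ω | ((univ.filter fun i => ω ∈ E i).card : ℝ) ≤ m} ≤
      exp (m - (∑ i, P.real (E i)) / 2) := by
  set N : Ω → ℝ := ∑ i, (E i).indicator 1
  have hN : ∀ ω, N ω = (univ.filter fun i => ω ∈ E i).card := by
    intro ω
    simp only [N, Finset.sum_apply, Set.indicator_apply, Pi.one_apply, Finset.sum_boole]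
  have hX_meas : ∀ i, Measurable ((E i).indicator (1 : Ω → ℝ)) :=
    fun i => measurable_const.indicator (hE i)
  have hX_indep : iIndepFun (fun i => (E i).indicator (1 : Ω → ℝ)) P :=
    h_indep.iIndepFun_indicator
  have h_int : Integrable (fun ω => exp (-1 * N ω)) P := by
    refine .of_bound (by fun_prop) 1 (ae_of_all _ fun ω => ?_)
    rw [norm_of_nonneg (exp_pos _).le, exp_le_one_iff, hN]
    linarith [(univ.filter fun i => ω ∈ E i).card.cast_nonneg (α := ℝ)]
  calc P.real {ω | ((univ.filter fun i => ω ∈ E i).card : ℝ) ≤ m}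
      = P.real {ω | N ω ≤ m} := by simp only [hN]
    _ ≤ exp (-(-1) * m) * mgf N P (-1) := measure_le_le_exp_mul_mgf m (by norm_num) h_int
    _ = exp m * ∏ i, mgf ((E i).indicator 1) P (-1) := by
        rw [hX_indep.mgf_sum hX_meas, neg_neg, one_mul]
    _ ≤ exp m * ∏ i, exp (-(P.real (E i) / 2)) := by
        gcongr with i
        · exact fun _ _ => mgf_nonneg
        · exact mgf_neg_one_indicator_one_le (hE i)
    _ = exp (m - (∑ i, P.real (E i)) / 2) := by
        rw [← exp_sum, ← exp_add, sum_neg_distrib, ← sum_div]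
        ring_nf

lemma one_sub_sum_measureReal_le_measureReal_iInter_compl [Fintype ι] (B : ι → Set Ω) :
    1 - ∑ i, P.real (B i) ≤ P.real (⋂ i, (B i)ᶜ) := by
  have h := measureReal_union_le (μ := P) (⋂ i, (B i)ᶜ) (⋂ i, (B i)ᶜ)ᶜ
  rw [Set.union_compl_self, probReal_univ, Set.compl_iInter] at h
  simp only [compl_compl] at h
  linarith [measureReal_iUnion_fintype_le (μ := P) B]

end ProbabilityTheory

lemma Real.exp_sub_div_two_le_div {K δ m n : ℝ} (hK : 0 < K) (hδ : 0 < δ)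
    (hmL : 0 ≤ m + log (K / δ)) (hn : 4 * K * (m + log (K / δ)) ≤ n) :
    exp (m - n / K / 2) ≤ δ / K := by
  have hnK : 4 * (m + log (K / δ)) ≤ n / K := by
    rw [le_div_iff₀ hK]
    linarith
  calc exp (m - n / K / 2) ≤ exp (-log (K / δ)) := exp_le_exp.2 (by linarith)
    _ = δ / K := by rw [exp_neg, exp_log (by positivity), inv_div]

/-- **Minimum cell count for equal probabilities.**
For i.i.d. `Y i` uniform on `{1,...,K}` with counts `n_k = #{i : Y i = k}`: for every
`δ ∈ (0,1)` and every real `m ≥ 0`, if `n ≥ 4K(m + log(K/δ))` then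
`P(min_k n_k ≥ m) ≥ 1 - δ`. -/
theorem multinomial_min_count_uniform
    {Ω : Type*} [MeasurableSpace Ω] (P : Measure Ω) [IsProbabilityMeasure P]
    (K n : ℕ) (hK : 0 < K)
    (Y : Fin n → Ω → Fin K)
    (hY_meas : ∀ i, Measurable (Y i))
    (hY_indep : iIndepFun Y P)
    (hY_law : ∀ i k, P {ω | Y i ω = k} = (K : ENNReal)⁻¹)
    (δ : ℝ) (hδ : δ ∈ Set.Ioo (0 : ℝ) 1)
    (m : ℝ) (hm0 : 0 ≤ m)
    (hsize : 4 * (K : ℝ) * (m + Real.log ((K : ℝ) / δ)) ≤ (n : ℝ)) :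
    1 - δ ≤ (P {ω | ∀ k : Fin K,
        m ≤ ((Finset.univ.filter (fun i => Y i ω = k)).card : ℝ)}).toReal := by
  obtain ⟨hδ0, hδ1⟩ := hδ
  have hKR : (0 : ℝ) < K := by exact_mod_cast hK
  have hcell : ∀ k, P.real {ω | ((univ.filter fun i => Y i ω = k).card : ℝ) ≤ m} ≤ δ / K := by
    intro k
    have hlaw : ∀ i, P.real {ω | Y i ω = k} = (K : ℝ)⁻¹ := by
      simp [measureReal_def, hY_law]
    calc _ ≤ exp (m - (∑ i, P.real {ω | Y i ω = k}) / 2) :=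
          measureReal_card_le_le_exp (E := fun i => {ω | Y i ω = k})
            (fun i => hY_meas i (measurableSet_singleton k))
            (hY_indep.iIndepSet_preimage hY_meas fun _ => measurableSet_singleton k) m
      _ = exp (m - n / K / 2) := by simp [hlaw, div_eq_mul_inv]
      _ ≤ δ / K := Real.exp_sub_div_two_le_div hKR hδ0 (add_nonneg hm0 (log_nonneg
          ((one_le_div hδ0).2 (hδ1.le.trans (by exact_mod_cast hK))))) hsize
  calc 1 - δ = 1 - ∑ _k : Fin K, δ / K := by
        rw [sum_const, card_univ, Fintype.card_fin, nsmul_eq_mul, mul_div_cancel₀ _ hKR.ne']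
    _ ≤ 1 - ∑ k, P.real {ω | ((univ.filter fun i => Y i ω = k).card : ℝ) ≤ m} := by
        gcongr with k; exact hcell k
    _ ≤ P.real (⋂ k, {ω | ((univ.filter fun i => Y i ω = k).card : ℝ) ≤ m}ᶜ) :=
        one_sub_sum_measureReal_le_measureReal_iInter_compl _
    _ ≤ P.real {ω | ∀ k, m ≤ ((univ.filter fun i => Y i ω = k).card : ℝ)} :=
        measureReal_mono fun ω hω k => le_of_lt (not_le.1 (Set.mem_iInter.1 hω k))
end

section
/- Let Λ = ((λ_i),(f_i)) and Λ' = ((λ'_j),(f'_j)) be mixing measures with K components each, where all weights are positive and sum to one. Define W₁(Λ,Λ') = inf { Σ_{i,j} σ_{ij} · d_TV(f_i, f'_j) : σ_{ij} ≥ 0, Σ_j σ_{ij} = λ_i for each i, Σ_i σ_{ij} = λ'_j for each j }, where d_TV(f,g) = (1/2)∫|f−g| dx. Then max_{j} min_{i} d_TV(f_i, f'_j) ≤ W₁(Λ,Λ') / min_j λ'_j. -/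
open MeasureTheory

/-- **Lemma 3, density part.**
For mixing measures `Λ = ((lam i), (f i))` and `Λ' = ((lam' j), (f' j))` with `K`
components and `W₁(Λ, Λ')` the Wasserstein distance with ground cost
`d_TV(f, g) = (1/2)∫|f - g|` over couplings of the weight vectors,
`max_j min_i d_TV(f i, f' j) ≤ W₁(Λ, Λ') / min_j lam' j`. -/
theorem wasserstein_density_bound
    (d K : ℕ) (hK : 0 < K)
    -- the mixing measure Λ
    (lam : Fin K → ℝ) (f : Fin K → (Fin d → ℝ) → ℝ)
    (hlam_pos : ∀ i, 0 < lam i) (hlam_sum : ∑ i, lam i = 1)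
    (hf_meas : ∀ i, Measurable (f i))
    (hf_nonneg : ∀ i x, 0 ≤ f i x) (hf_int : ∀ i, ∫ x, f i x = 1)
    -- the mixing measure Λ'
    (lam' : Fin K → ℝ) (f' : Fin K → (Fin d → ℝ) → ℝ)
    (hlam'_pos : ∀ j, 0 < lam' j) (hlam'_sum : ∑ j, lam' j = 1)
    (hf'_meas : ∀ j, Measurable (f' j))
    (hf'_nonneg : ∀ j x, 0 ≤ f' j x) (hf'_int : ∀ j, ∫ x, f' j x = 1)
    -- the Wasserstein distance between Λ and Λ'
    (W : ℝ)
    (hW : W = sInf {w : ℝ | ∃ σ : Fin K → Fin K → ℝ,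
      (∀ i j, 0 ≤ σ i j) ∧ (∀ i, ∑ j, σ i j = lam i) ∧ (∀ j, ∑ i, σ i j = lam' j) ∧
      w = ∑ i : Fin K, ∑ j : Fin K, σ i j * ((1 / 2) * ∫ x, |f i x - f' j x|)}) :
    (⨆ j : Fin K, ⨅ i : Fin K, (1 / 2) * ∫ x, |f i x - f' j x|)
      ≤ W / (⨅ j : Fin K, lam' j) := by
  haveI : Nonempty (Fin K) := Fin.pos_iff_nonempty.mp hK
  set D : Fin K → Fin K → ℝ := fun i j => (1 / 2) * ∫ x, |f i x - f' j x| with hD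
  have hDnonneg : ∀ i j, 0 ≤ D i j := fun i j =>
    mul_nonneg (by norm_num) (integral_nonneg fun x => abs_nonneg _)
  set m := ⨅ j, lam' j with hm
  have hm_le : ∀ j, m ≤ lam' j := fun j => ciInf_le (Finite.bddBelow_range _) j
  have hm_pos : 0 < m := by
    obtain ⟨j0, hj0⟩ := Finite.exists_min lam'
    have : lam' j0 ≤ m := le_ciInf hj0
    exact lt_of_lt_of_le (hlam'_pos j0) this
  apply ciSup_le
  intro j
  rw [le_div_iff₀ hm_pos]
  have hinf_nonneg : 0 ≤ ⨅ i, D i j := le_ciInf fun i => hDnonneg i j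
  rw [hW]
  apply le_csInf
  · refine ⟨_, fun i j' => lam i * lam' j', fun i j' =>
      le_of_lt (mul_pos (hlam_pos i) (hlam'_pos j')), fun i => ?_, fun j' => ?_, rfl⟩
    · rw [← Finset.mul_sum, hlam'_sum, mul_one]
    · rw [← Finset.sum_mul, hlam_sum, one_mul]
  · rintro w ⟨σ, hσ_nonneg, hσ_row, hσ_col, rfl⟩
    calc (⨅ i, D i j) * m ≤ (⨅ i, D i j) * lam' j :=
          mul_le_mul_of_nonneg_left (hm_le j) hinf_nonneg
      _ = ∑ i, σ i j * (⨅ i', D i' j) := by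
          rw [← hσ_col j, Finset.mul_sum]
          exact Finset.sum_congr rfl fun i _ => mul_comm _ _
      _ ≤ ∑ i, σ i j * D i j :=
          Finset.sum_le_sum fun i _ => mul_le_mul_of_nonneg_left
            (ciInf_le (Finite.bddBelow_range _) i) (hσ_nonneg i j)
      _ ≤ ∑ i : Fin K, ∑ j' : Fin K, σ i j' * D i j' :=
          Finset.sum_le_sum fun i _ => Finset.single_le_sum
            (fun j' _ => mul_nonneg (hσ_nonneg i j') (hDnonneg i j')) (Finset.mem_univ j)
end

section
/- Let Λ' = ((λ'_j),(f'_j)) be a mixing measure with K components, with λ'_j > 0 for all j and d_TV(f'_i, f'_j) > 0 for all i ≠ j. Then there exists a constant C > 0, depending only on Λ' and K, such that for every mixing measure Λ = ((λ_i),(f_i)) with K components: max_{j} min_{i} |λ_i − λ'_j| ≤ C · W₁(Λ,Λ'), where W₁(Λ,Λ') = inf { Σ_{i,j} σ_{ij} · d_TV(f_i, f'_j) : σ_{ij} ≥ 0, Σ_j σ_{ij} = λ_i for each i, Σ_i σ_{ij} = λ'_j for each j }. -/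
open MeasureTheory

/-- **Lemma 3, weight part.**
Fix a mixing measure `Λ' = ((lam' j), (f' j))` with `K` components, positive weights,
and pairwise distinct components (`d_TV(f' i, f' j) > 0` for `i ≠ j`).  Then there is a
constant `C > 0`, depending only on `Λ'` and `K`, such that every mixing measure
`Λ = ((lam i), (f i))` with `K` components satisfies
`max_j min_i |lam i - lam' j| ≤ C · W₁(Λ, Λ')`, where `W₁` is the Wasserstein distance
with ground cost `d_TV(f, g) = (1/2)∫|f - g|` over couplings of the weight vectors. -/
theorem wasserstein_weight_bound
    (d K : ℕ) (hK : 0 < K)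
    -- the fixed mixing measure Λ' with pairwise distinct components
    (lam' : Fin K → ℝ) (f' : Fin K → (Fin d → ℝ) → ℝ)
    (hlam'_pos : ∀ j, 0 < lam' j) (hlam'_sum : ∑ j, lam' j = 1)
    (hf'_meas : ∀ j, Measurable (f' j))
    (hf'_nonneg : ∀ j x, 0 ≤ f' j x) (hf'_int : ∀ j, ∫ x, f' j x = 1)
    (hsep : ∀ i j : Fin K, i ≠ j → 0 < (1 / 2) * ∫ x, |f' i x - f' j x|) :
    ∃ C : ℝ, 0 < C ∧
      ∀ (lam : Fin K → ℝ) (f : Fin K → (Fin d → ℝ) → ℝ),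
        (∀ i, 0 < lam i) → (∑ i, lam i = 1) →
        (∀ i, Measurable (f i)) → (∀ i x, 0 ≤ f i x) → (∀ i, ∫ x, f i x = 1) →
        (⨆ j : Fin K, ⨅ i : Fin K, |lam i - lam' j|)
          ≤ C * sInf {w : ℝ | ∃ σ : Fin K → Fin K → ℝ,
              (∀ i j, 0 ≤ σ i j) ∧ (∀ i, ∑ j, σ i j = lam i) ∧
              (∀ j, ∑ i, σ i j = lam' j) ∧
              w = ∑ i : Fin K, ∑ j : Fin K, σ i j * ((1 / 2) * ∫ x, |f i x - f' j x|)} := by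
  haveI : Nonempty (Fin K) := ⟨⟨0, hK⟩⟩
  have hint' : ∀ j, Integrable (f' j) := by
    intro j
    by_contra h
    have h1 := hf'_int j
    rw [integral_undef h] at h1
    norm_num at h1
  set tvc : Fin K → Fin K → ℝ := fun j j' => (1/2) * ∫ x, |f' j x - f' j' x| with htvc
  have huniv : (Finset.univ : Finset (Fin K × Fin K)).Nonempty := Finset.univ_nonempty
  set ε : ℝ := Finset.univ.inf' huniv
      (fun p : Fin K × Fin K => if p.1 = p.2 then 1 else tvc p.1 p.2) with hε
  have hε_pos : 0 < ε := by
    rw [hε, Finset.lt_inf'_iff]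
    intro p _
    by_cases hp : p.1 = p.2
    · simp [hp]
    · simpa [hp, htvc] using hsep p.1 p.2 hp
  have hε_le : ∀ j j' : Fin K, j ≠ j' → ε ≤ tvc j j' := by
    intro j j' hjj
    have h := Finset.inf'_le
      (f := fun p : Fin K × Fin K => if p.1 = p.2 then 1 else tvc p.1 p.2)
      (Finset.mem_univ (j, j'))
    rw [if_neg hjj] at h
    exact h
  have hlam'_le_one : ∀ j, lam' j ≤ 1 := by
    intro j
    rw [← hlam'_sum]
    exact Finset.single_le_sum (fun i _ => (hlam'_pos i).le) (Finset.mem_univ j)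
  set lmin : ℝ := Finset.univ.inf' Finset.univ_nonempty lam' with hlm
  have hlmin_pos : 0 < lmin := by
    rw [hlm, Finset.lt_inf'_iff]
    intro j _
    exact hlam'_pos j
  have hlmin_le : ∀ j, lmin ≤ lam' j := fun j => Finset.inf'_le _ (Finset.mem_univ j)
  have hlmin_le_one : lmin ≤ 1 := (hlmin_le ⟨0, hK⟩).trans (hlam'_le_one _)
  refine ⟨2 / (ε * lmin), by positivity, ?_⟩
  intro lam f hlam_pos hlam_sum hf_meas hf_nonneg hf_int
  set C : ℝ := 2 / (ε * lmin) with hC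
  have hCpos : 0 < C := by positivity
  set c : Fin K → Fin K → ℝ := fun i j => (1/2) * ∫ x, |f i x - f' j x| with hc
  have hint : ∀ i, Integrable (f i) := by
    intro i
    by_contra h
    have h1 := hf_int i
    rw [integral_undef h] at h1
    norm_num at h1
  have hc_nonneg : ∀ i j, 0 ≤ c i j :=
    fun i j => mul_nonneg (by norm_num) (integral_nonneg fun x => abs_nonneg _)
  have htri : ∀ i j j', tvc j j' ≤ c i j + c i j' := by
    intro i j j'
    have hI1 : Integrable (fun x => |f i x - f' j x|) := ((hint i).sub (hint' j)).abs
    have hI2 : Integrable (fun x => |f i x - f' j' x|) := ((hint i).sub (hint' j')).abs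
    have h1 : ∫ x, |f' j x - f' j' x| ≤ ∫ x, (|f i x - f' j x| + |f i x - f' j' x|) := by
      apply integral_mono ((hint' j).sub (hint' j')).abs (hI1.add hI2)
      intro x
      calc |f' j x - f' j' x| ≤ |f' j x - f i x| + |f i x - f' j' x| := abs_sub_le _ _ _
        _ = |f i x - f' j x| + |f i x - f' j' x| := by rw [abs_sub_comm]
    rw [integral_add hI1 hI2] at h1
    simp only [htvc, hc]
    linarith
  have key : ∀ (σ : Fin K → Fin K → ℝ), (∀ i j, 0 ≤ σ i j) → (∀ i, ∑ j, σ i j = lam i) →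
      (∀ j, ∑ i, σ i j = lam' j) →
      ∀ j, ∃ i, |lam i - lam' j| ≤ C * (∑ i, ∑ j, σ i j * c i j) := by
    intro σ hσ hrow hcol j
    set w : ℝ := ∑ i, ∑ j, σ i j * c i j with hw
    have hterm : ∀ i j, 0 ≤ σ i j * c i j := fun i j => mul_nonneg (hσ i j) (hc_nonneg i j)
    have hw_nonneg : 0 ≤ w :=
      Finset.sum_nonneg fun i _ => Finset.sum_nonneg fun j _ => hterm i j
    have hcol_le : ∀ j, ∑ i, σ i j * c i j ≤ w := by
      intro j0
      rw [hw, Finset.sum_comm]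
      exact Finset.single_le_sum (f := fun j => ∑ i, σ i j * c i j)
        (fun j1 _ => Finset.sum_nonneg fun i _ => hterm i j1) (Finset.mem_univ j0)
    have hrow_le : ∀ i, ∑ j, σ i j * c i j ≤ w := by
      intro i0
      exact Finset.single_le_sum (f := fun i => ∑ j, σ i j * c i j)
        (fun i1 _ => Finset.sum_nonneg fun j1 _ => hterm i1 j1) (Finset.mem_univ i0)
    by_cases hcase : ε * lmin / 2 ≤ w
    · refine ⟨j, ?_⟩
      have hl1 : lam j ≤ 1 := by
        rw [← hlam_sum]
        exact Finset.single_le_sum (fun i _ => (hlam_pos i).le) (Finset.mem_univ j)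
      have h1 : |lam j - lam' j| ≤ 1 := by
        rw [abs_le]
        constructor
        · linarith [(hlam_pos j).le, hlam'_le_one j]
        · linarith [(hlam'_pos j).le]
      have h2 : 1 ≤ C * w := by
        rw [hC, div_mul_eq_mul_div, le_div_iff₀ (by positivity)]
        nlinarith
      linarith
    · push_neg at hcase
      set A : Fin K → Finset (Fin K) := fun j => Finset.univ.filter (fun i => c i j < ε/2) with hA
      have hout : ∀ (j0 : Fin K) (i : Fin K), ¬ (c i j0 < ε/2) → σ i j0 ≤ 2/ε * (σ i j0 * c i j0) := by
        intro j0 i hi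
        push_neg at hi
        rw [div_mul_eq_mul_div, le_div_iff₀ hε_pos]
        nlinarith [hσ i j0]
      have hAne : ∀ j0, (A j0).Nonempty := by
        intro j0
        by_contra hne
        rw [Finset.not_nonempty_iff_eq_empty] at hne
        have hmem : ∀ i : Fin K, ¬ (c i j0 < ε/2) := by
          intro i hi
          have : i ∈ A j0 := by simp [hA, hi]
          simp [hne] at this
        have h1 : lam' j0 ≤ 2/ε * w := by
          rw [← hcol j0]
          calc ∑ i, σ i j0 ≤ ∑ i, 2/ε * (σ i j0 * c i j0) :=
                Finset.sum_le_sum (fun i _ => hout j0 i (hmem i))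
            _ = 2/ε * ∑ i, σ i j0 * c i j0 := by rw [Finset.mul_sum]
            _ ≤ 2/ε * w := mul_le_mul_of_nonneg_left (hcol_le j0) (by positivity)
        have h2 : 2/ε * w < lmin := by
          rw [div_mul_eq_mul_div, div_lt_iff₀ hε_pos]
          nlinarith
        linarith [hlmin_le j0]
      have hdisj : ∀ j1 ∈ (Finset.univ : Finset (Fin K)), ∀ j2 ∈ (Finset.univ : Finset (Fin K)),
          j1 ≠ j2 → Disjoint (A j1) (A j2) := by
        intro j1 _ j2 _ hne
        rw [Finset.disjoint_left]
        intro i hi1 hi2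
        simp only [hA, Finset.mem_filter, Finset.mem_univ, true_and] at hi1 hi2
        have h1 := hε_le j1 j2 hne
        have h2 := htri i j1 j2
        linarith
      have hsum_card : ∑ j' : Fin K, (A j').card ≤ K := by
        rw [← Finset.card_biUnion hdisj]
        calc (Finset.univ.biUnion A).card ≤ (Finset.univ : Finset (Fin K)).card :=
              Finset.card_le_univ _
          _ = K := by simp
      have hcard1 : (A j).card = 1 := by
        by_contra hne1
        have h2 : 2 ≤ (A j).card := by
          have := Finset.card_pos.2 (hAne j)
          omega
        have h3 : K < ∑ j' : Fin K, (A j').card := by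
          calc K = ∑ _j' : Fin K, 1 := by simp
            _ < ∑ j' : Fin K, (A j').card :=
              Finset.sum_lt_sum (fun j' _ => Finset.card_pos.2 (hAne j'))
                ⟨j, Finset.mem_univ j, by omega⟩
        omega
      obtain ⟨i, hAi⟩ := Finset.card_eq_one.1 hcard1
      have hi_mem : c i j < ε/2 := by
        have h1 : i ∈ A j := hAi ▸ Finset.mem_singleton_self i
        simpa [hA] using h1
      refine ⟨i, ?_⟩
      have hσ_le_lam : σ i j ≤ lam i := by
        rw [← hrow i]
        exact Finset.single_le_sum (fun j' _ => hσ i j') (Finset.mem_univ j)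
      have hσ_le_lam' : σ i j ≤ lam' j := by
        rw [← hcol j]
        exact Finset.single_le_sum (fun i' _ => hσ i' j) (Finset.mem_univ i)
      have hbound1 : lam i - σ i j ≤ 2/ε * w := by
        have hsplit : σ i j + ∑ j' ∈ Finset.univ.erase j, σ i j' = lam i := by
          rw [← hrow i]
          exact Finset.add_sum_erase _ _ (Finset.mem_univ j)
        have hfar : ∀ j' ∈ Finset.univ.erase j, σ i j' ≤ 2/ε * (σ i j' * c i j') := by
          intro j' hj'
          have hne := (Finset.mem_erase.1 hj').1
          apply hout j' i
          push_neg
          have h1 := hε_le j j' (Ne.symm hne)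
          have h2 := htri i j j'
          linarith
        calc lam i - σ i j = ∑ j' ∈ Finset.univ.erase j, σ i j' := by rw [← hsplit]; ring
          _ ≤ ∑ j' ∈ Finset.univ.erase j, 2/ε * (σ i j' * c i j') := Finset.sum_le_sum hfar
          _ = 2/ε * ∑ j' ∈ Finset.univ.erase j, σ i j' * c i j' := by rw [Finset.mul_sum]
          _ ≤ 2/ε * ∑ j', σ i j' * c i j' := by
              apply mul_le_mul_of_nonneg_left _ (by positivity)
              exact Finset.sum_le_sum_of_subset_of_nonneg (Finset.erase_subset _ _)
                (fun j' _ _ => hterm i j')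
          _ ≤ 2/ε * w := mul_le_mul_of_nonneg_left (hrow_le i) (by positivity)
      have hbound2 : lam' j - σ i j ≤ 2/ε * w := by
        have hsplit : σ i j + ∑ i' ∈ Finset.univ.erase i, σ i' j = lam' j := by
          rw [← hcol j]
          exact Finset.add_sum_erase _ (fun i' => σ i' j) (Finset.mem_univ i)
        have hfar : ∀ i' ∈ Finset.univ.erase i, σ i' j ≤ 2/ε * (σ i' j * c i' j) := by
          intro i' hi'
          have hne := (Finset.mem_erase.1 hi').1
          apply hout j i'
          intro hlt
          have : i' ∈ A j := by simp [hA, hlt]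
          rw [hAi, Finset.mem_singleton] at this
          exact hne this
        calc lam' j - σ i j = ∑ i' ∈ Finset.univ.erase i, σ i' j := by rw [← hsplit]; ring
          _ ≤ ∑ i' ∈ Finset.univ.erase i, 2/ε * (σ i' j * c i' j) := Finset.sum_le_sum hfar
          _ = 2/ε * ∑ i' ∈ Finset.univ.erase i, σ i' j * c i' j := by rw [Finset.mul_sum]
          _ ≤ 2/ε * ∑ i', σ i' j * c i' j := by
              apply mul_le_mul_of_nonneg_left _ (by positivity)
              exact Finset.sum_le_sum_of_subset_of_nonneg (Finset.erase_subset _ _)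
                (fun i' _ _ => hterm i' j)
          _ ≤ 2/ε * w := mul_le_mul_of_nonneg_left (hcol_le j) (by positivity)
      have habs : |lam i - lam' j| ≤ 2/ε * w := by
        rw [abs_le]
        constructor <;> linarith
      have hfin : 2/ε * w ≤ C * w := by
        apply mul_le_mul_of_nonneg_right _ hw_nonneg
        rw [hC, div_le_div_iff₀ hε_pos (by positivity)]
        nlinarith
      linarith
  set S : Set ℝ := {w : ℝ | ∃ σ : Fin K → Fin K → ℝ,
      (∀ i j, 0 ≤ σ i j) ∧ (∀ i, ∑ j, σ i j = lam i) ∧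
      (∀ j, ∑ i, σ i j = lam' j) ∧
      w = ∑ i : Fin K, ∑ j : Fin K, σ i j * ((1 / 2) * ∫ x, |f i x - f' j x|)} with hS
  have hSne : S.Nonempty := by
    refine ⟨∑ i : Fin K, ∑ j : Fin K, (lam i * lam' j) * ((1 / 2) * ∫ x, |f i x - f' j x|),
      fun i j => lam i * lam' j, fun i j => mul_nonneg (hlam_pos i).le (hlam'_pos j).le, ?_, ?_, rfl⟩
    · intro i
      rw [← Finset.mul_sum, hlam'_sum, mul_one]
    · intro j
      rw [← Finset.sum_mul, hlam_sum, one_mul]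
  have hstep : ∀ w ∈ S, (⨆ j : Fin K, ⨅ i : Fin K, |lam i - lam' j|) ≤ C * w := by
    rintro w ⟨σ, hσnn, hrow, hcol, rfl⟩
    apply ciSup_le
    intro j
    obtain ⟨i, hi⟩ := key σ hσnn hrow hcol j
    exact ciInf_le_of_le (Set.Finite.bddBelow (Set.finite_range _)) i hi
  have hlow : (⨆ j : Fin K, ⨅ i : Fin K, |lam i - lam' j|) / C ≤ sInf S := by
    apply le_csInf hSne
    intro w hw
    rw [div_le_iff₀ hCpos, mul_comm]
    exact hstep w hw
  calc (⨆ j : Fin K, ⨅ i : Fin K, |lam i - lam' j|)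
      = C * ((⨆ j : Fin K, ⨅ i : Fin K, |lam i - lam' j|) / C) := by
        rw [mul_comm, div_mul_cancel₀ _ hCpos.ne']
    _ ≤ C * sInf S := mul_le_mul_of_nonneg_left hlow hCpos.le
end
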